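/- arXiv:2509.09452 — 7 statements merged into one kernel-verified Lean document; each statement's English description precedes it below -/
import Mathlib

section
/- Let N ≥ 1, let A ∈ ℝ^{N×N} be a Z-matrix and let p < 1. Then the equation A x = x^p has a solution x ∈ ℝ^N with x_i > 0 for all i if and only if A is a non-singular M-matrix. -/
/-- The spectral radius of a real square matrix, computed via its complex spectrum. -/
noncomputable def specRad {N : ℕ} (B : Matrix (Fin N) (Fin N) ℝ) : ENNReal :=
  spectralRadius ℂ (B.map Complex.ofReal)

/-- A real square matrix is a Z-matrix if all its off-diagonal entries are nonpositive. -/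
def IsZMatrix {N : ℕ} (A : Matrix (Fin N) (Fin N) ℝ) : Prop :=
  ∀ i j, i ≠ j → A i j ≤ 0

/-- A real square matrix is a non-singular M-matrix if it is a Z-matrix and can be written
as `s • 1 - B` with `B` entrywise nonnegative and `s` strictly greater than the spectral
radius of `B`. -/
def IsNonsingMMatrix {N : ℕ} (A : Matrix (Fin N) (Fin N) ℝ) : Prop :=
  IsZMatrix A ∧
    ∃ (s : ℝ) (B : Matrix (Fin N) (Fin N) ℝ),
      (∀ i j, 0 ≤ B i j) ∧ A = s • (1 : Matrix (Fin N) (Fin N) ℝ) - B ∧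
      specRad B < ENNReal.ofReal s

open Filter Topology
open scoped ENNReal NNReal

namespace Statement1Aux

attribute [local instance] Matrix.linftyOpNormedRing Matrix.linftyOpNormedAlgebra
  Matrix.linftyOpNormedSpace

variable {N : ℕ}

lemma nnnorm_map_ofReal (M : Matrix (Fin N) (Fin N) ℝ) :
    ‖M.map Complex.ofReal‖₊ = ‖M‖₊ := by
  rw [Matrix.linfty_opNNNorm_def, Matrix.linfty_opNNNorm_def]
  congr 1
  ext i
  simp [Matrix.map_apply]

lemma row_sum_le_norm (M : Matrix (Fin N) (Fin N) ℝ) (i : Fin N) :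
    ∑ j, |M i j| ≤ ‖M‖ := by
  have h := Finset.le_sup (f := fun i => ∑ j, ‖M i j‖₊) (Finset.mem_univ i)
  rw [Matrix.linfty_opNorm_def]
  calc ∑ j, |M i j| = ((∑ j, ‖M i j‖₊ : ℝ≥0) : ℝ) := by
        push_cast; simp [Real.norm_eq_abs]
    _ ≤ _ := by exact_mod_cast h

lemma norm_le_card_mul (M : Matrix (Fin N) (Fin N) ℝ) (c : ℝ) (hc : 0 ≤ c)
    (h : ∀ i j, |M i j| ≤ c) : ‖M‖ ≤ N * c := by
  rw [Matrix.linfty_opNorm_def]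
  have key : ∀ i, (∑ j, ‖M i j‖₊) ≤ Real.toNNReal ((N : ℝ) * c) := by
    intro i
    rw [← NNReal.coe_le_coe]
    rw [Real.coe_toNNReal _ (by positivity)]
    push_cast
    calc ∑ j, ‖M i j‖ = ∑ j, |M i j| := by simp [Real.norm_eq_abs]
      _ ≤ ∑ _j : Fin N, c := Finset.sum_le_sum fun j _ => h i j
      _ = N * c := by simp [Finset.sum_const, nsmul_eq_mul]
  have hsup : (Finset.univ.sup fun i => ∑ j, ‖M i j‖₊) ≤ Real.toNNReal ((N : ℝ) * c) :=
    Finset.sup_le fun i _ => key i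
  calc ((Finset.univ.sup fun i => ∑ j, ‖M i j‖₊ : ℝ≥0) : ℝ)
      ≤ (Real.toNNReal ((N : ℝ) * c) : ℝ) := NNReal.coe_le_coe.2 hsup
    _ = N * c := Real.coe_toNNReal _ (by positivity)

lemma pow_entry_nonneg {B : Matrix (Fin N) (Fin N) ℝ} (hB : ∀ i j, 0 ≤ B i j) :
    ∀ (k : ℕ) (i j : Fin N), 0 ≤ (B ^ k) i j := by
  intro k
  induction k with
  | zero => intro i j; by_cases h : i = j <;> simp [h, Matrix.one_apply]
  | succ n ih =>
    intro i j
    rw [pow_succ, Matrix.mul_apply]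
    exact Finset.sum_nonneg fun l _ => mul_nonneg (ih i l) (hB l j)

/-- Forward direction -/
theorem forward (hN : 1 ≤ N) (A : Matrix (Fin N) (Fin N) ℝ) (p : ℝ)
    (hZ : IsZMatrix A) (x : Fin N → ℝ) (hx : ∀ i, 0 < x i)
    (heq : A.mulVec x = fun i => x i ^ p) : IsNonsingMMatrix A := by
  have hNe : Nonempty (Fin N) := ⟨⟨0, hN⟩⟩
  have hne : (Finset.univ : Finset (Fin N)).Nonempty := Finset.univ_nonempty
  -- positivity of A x
  have hAx : ∀ i, 0 < A.mulVec x i := by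
    intro i; rw [heq]; exact Real.rpow_pos_of_pos (hx i) p
  -- diagonal entries are positive
  have hdiag : ∀ i, 0 < A i i := by
    intro i
    have hsplit : A.mulVec x i = A i i * x i + ∑ j ∈ Finset.univ.erase i, A i j * x j := by
      rw [Matrix.mulVec, dotProduct]
      exact (Finset.add_sum_erase _ _ (Finset.mem_univ i)).symm
    have hrest : ∑ j ∈ Finset.univ.erase i, A i j * x j ≤ 0 :=
      Finset.sum_nonpos fun j hj =>
        mul_nonpos_of_nonpos_of_nonneg (hZ i j (Finset.ne_of_mem_erase hj).symm) (hx j).le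
    have h1 : 0 < A i i * x i := by
      have := hAx i
      rw [hsplit] at this
      nlinarith
    rcases mul_pos_iff.1 h1 with ⟨h, _⟩ | ⟨_, h⟩
    · exact h
    · exact absurd (hx i) (not_lt.2 h.le)
  set s : ℝ := Finset.univ.sup' hne (fun i => A i i) with hs_def
  have hs_pos : 0 < s := lt_of_lt_of_le (hdiag ⟨0, hN⟩)
    (Finset.le_sup' (fun j => A j j) (Finset.mem_univ _))
  have hs_ge : ∀ i, A i i ≤ s := fun i => Finset.le_sup' (fun j => A j j) (Finset.mem_univ i)
  set B : Matrix (Fin N) (Fin N) ℝ := s • (1 : Matrix (Fin N) (Fin N) ℝ) - A with hB_def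
  have hB : ∀ i j, 0 ≤ B i j := by
    intro i j
    by_cases h : i = j
    · subst h
      simp only [hB_def, Matrix.sub_apply, Matrix.smul_apply, Matrix.one_apply_eq, smul_eq_mul,
        mul_one]
      linarith [hs_ge i]
    · simp only [hB_def, Matrix.sub_apply, Matrix.smul_apply, Matrix.one_apply_ne h, smul_eq_mul,
        mul_zero, zero_sub, neg_nonneg]
      exact hZ i j h
  have hA_eq : A = s • (1 : Matrix (Fin N) (Fin N) ℝ) - B := by
    rw [hB_def, sub_sub_cancel]
  -- B x = s x - x^p
  have hBx : ∀ i, B.mulVec x i = s * x i - x i ^ p := by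
    intro i
    have : B.mulVec x = s • x - A.mulVec x := by
      rw [hB_def, Matrix.sub_mulVec, Matrix.smul_mulVec, Matrix.one_mulVec]
    rw [this, heq]
    simp [Pi.smul_apply, smul_eq_mul]
  have hBx_nonneg : ∀ i, 0 ≤ B.mulVec x i := by
    intro i
    rw [Matrix.mulVec, dotProduct]
    exact Finset.sum_nonneg fun j _ => mul_nonneg (hB i j) (hx j).le
  -- contraction factor
  set θ : ℝ := Finset.univ.sup' hne (fun i => B.mulVec x i / (s * x i)) with hθ_def
  have hsx_pos : ∀ i, 0 < s * x i := fun i => mul_pos hs_pos (hx i)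
  have hθ_nonneg : 0 ≤ θ :=
    le_trans (div_nonneg (hBx_nonneg ⟨0, hN⟩) (hsx_pos ⟨0, hN⟩).le)
      (Finset.le_sup' (fun i => B.mulVec x i / (s * x i)) (Finset.mem_univ _))
  have hθ_lt : θ < 1 := by
    rw [hθ_def, Finset.sup'_lt_iff]
    intro i _
    rw [div_lt_one (hsx_pos i), hBx i]
    have := Real.rpow_pos_of_pos (hx i) p
    linarith
  have hθx : ∀ i, B.mulVec x i ≤ θ * (s * x i) := by
    intro i
    have h1 : B.mulVec x i / (s * x i) ≤ θ :=
      Finset.le_sup' (fun i => B.mulVec x i / (s * x i)) (Finset.mem_univ i)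
    calc B.mulVec x i = (B.mulVec x i / (s * x i)) * (s * x i) :=
          (div_mul_cancel₀ _ (hsx_pos i).ne').symm
      _ ≤ θ * (s * x i) := mul_le_mul_of_nonneg_right h1 (hsx_pos i).le
  -- iterate bound
  have hiter : ∀ (k : ℕ) (i : Fin N), (B ^ k).mulVec x i ≤ (θ * s) ^ k * x i := by
    intro k
    induction k with
    | zero => intro i; simp [Matrix.one_mulVec]
    | succ n ih =>
      intro i
      have hvec : (B ^ (n + 1)).mulVec x = B.mulVec ((B ^ n).mulVec x) := by
        rw [pow_succ', ← Matrix.mulVec_mulVec]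
      rw [hvec]
      have h1 : B.mulVec ((B ^ n).mulVec x) i = ∑ j, B i j * (B ^ n).mulVec x j := rfl
      calc B.mulVec ((B ^ n).mulVec x) i
          ≤ ∑ j, B i j * ((θ * s) ^ n * x j) := by
            rw [h1]
            exact Finset.sum_le_sum fun j _ => mul_le_mul_of_nonneg_left (ih j) (hB i j)
        _ = (θ * s) ^ n * B.mulVec x i := by
            rw [Matrix.mulVec, dotProduct, Finset.mul_sum]
            apply Finset.sum_congr rfl
            intro j _; ring
        _ ≤ (θ * s) ^ n * (θ * (s * x i)) :=
            mul_le_mul_of_nonneg_left (hθx i) (by positivity)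
        _ = (θ * s) ^ (n + 1) * x i := by ring
  -- entries of powers
  set xmin : ℝ := Finset.univ.inf' hne x with hxmin_def
  set xmax : ℝ := Finset.univ.sup' hne x with hxmax_def
  have hxmin_pos : 0 < xmin := by
    rw [hxmin_def, Finset.lt_inf'_iff]
    exact fun i _ => hx i
  have hxmin_le : ∀ i, xmin ≤ x i := fun i => Finset.inf'_le x (Finset.mem_univ i)
  have hxmax : ∀ i, x i ≤ xmax := fun i => Finset.le_sup' x (Finset.mem_univ i)
  set K : ℝ := xmax / xmin with hK_def
  have hK_nonneg : 0 ≤ K :=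
    div_nonneg (le_trans (hx ⟨0, hN⟩).le (hxmax ⟨0, hN⟩)) hxmin_pos.le
  have hentry : ∀ (k : ℕ) (i j : Fin N), (B ^ k) i j ≤ (θ * s) ^ k * K := by
    intro k i j
    have h1 : (B ^ k) i j * x j ≤ (B ^ k).mulVec x i := by
      rw [Matrix.mulVec, dotProduct]
      exact Finset.single_le_sum (f := fun l => (B ^ k) i l * x l)
        (fun l _ => mul_nonneg (pow_entry_nonneg hB k i l) (hx l).le) (Finset.mem_univ j)
    have h3 : (B ^ k) i j ≤ (θ * s) ^ k * x i / x j := by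
      rw [le_div_iff₀ (hx j)]
      exact le_trans h1 (hiter k i)
    calc (B ^ k) i j ≤ (θ * s) ^ k * x i / x j := h3
      _ = (θ * s) ^ k * (x i / x j) := by ring
      _ ≤ (θ * s) ^ k * K := by
          apply mul_le_mul_of_nonneg_left _ (by positivity)
          exact div_le_div₀ (le_trans (hx ⟨0, hN⟩).le (hxmax ⟨0, hN⟩)) (hxmax i) hxmin_pos
            (hxmin_le j)
  -- select θ'
  set θ' : ℝ := (θ + 1) / 2 with hθ'_def
  have hθ'_pos : 0 < θ' := by rw [hθ'_def]; linarith
  have hθ'_lt1 : θ' < 1 := by rw [hθ'_def]; linarith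
  have hθθ' : θ < θ' := by rw [hθ'_def]; linarith
  have hq0 : 0 ≤ θ / θ' := div_nonneg hθ_nonneg hθ'_pos.le
  have hq1 : θ / θ' < 1 := (div_lt_one hθ'_pos).2 hθθ'
  have htend : Tendsto (fun k : ℕ => ((N : ℝ) * K) * (θ / θ') ^ k) atTop (𝓝 0) := by
    simpa using (tendsto_pow_atTop_nhds_zero_of_lt_one hq0 hq1).const_mul ((N : ℝ) * K)
  have hev := htend.eventually_le_const (by norm_num : (0 : ℝ) < 1)
  rw [eventually_atTop] at hev
  obtain ⟨m, hm⟩ := hev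
  have hmm : ((N : ℝ) * K) * (θ / θ') ^ (m + 1) ≤ 1 := hm (m + 1) (Nat.le_succ m)
  -- norm bound for B ^ (m+1)
  have hθ's : 0 < θ' * s := mul_pos hθ'_pos hs_pos
  have hnormB : ‖B ^ (m + 1)‖ ≤ (θ' * s) ^ (m + 1) := by
    have h4 : ‖B ^ (m + 1)‖ ≤ (N : ℝ) * ((θ * s) ^ (m + 1) * K) := by
      apply norm_le_card_mul _ _ (by positivity)
      intro i j
      rw [abs_of_nonneg (pow_entry_nonneg hB _ i j)]
      calc (B ^ (m + 1)) i j ≤ (θ * s) ^ (m + 1) * K := hentry _ i j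
        _ = (θ * s) ^ (m + 1) * K := rfl
    have hfact : θ * s = (θ / θ') * (θ' * s) := by
      field_simp
    have h5 : (N : ℝ) * ((θ * s) ^ (m + 1) * K) =
        (((N : ℝ) * K) * (θ / θ') ^ (m + 1)) * (θ' * s) ^ (m + 1) := by
      rw [hfact, mul_pow]
      ring
    calc ‖B ^ (m + 1)‖ ≤ (N : ℝ) * ((θ * s) ^ (m + 1) * K) := h4
      _ = (((N : ℝ) * K) * (θ / θ') ^ (m + 1)) * (θ' * s) ^ (m + 1) := h5
      _ ≤ 1 * (θ' * s) ^ (m + 1) := by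
          apply mul_le_mul_of_nonneg_right hmm (by positivity)
      _ = (θ' * s) ^ (m + 1) := one_mul _
  -- transfer to the complex matrix
  set a : Matrix (Fin N) (Fin N) ℂ := B.map Complex.ofReal with ha_def
  have hapow : ∀ k : ℕ, a ^ k = (B ^ k).map Complex.ofReal := by
    intro k
    have h0 : a = Complex.ofRealHom.mapMatrix B := rfl
    rw [h0, ← map_pow, RingHom.mapMatrix_apply]
    rfl
  have hnorma : ‖a ^ (m + 1)‖ ≤ (θ' * s) ^ (m + 1) := by
    rw [hapow]
    have := congrArg NNReal.toReal (nnnorm_map_ofReal (B ^ (m + 1)))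
    calc ‖(B ^ (m + 1)).map Complex.ofReal‖ = ‖B ^ (m + 1)‖ := this
      _ ≤ (θ' * s) ^ (m + 1) := hnormB
  have h1 : (‖a ^ (m + 1)‖₊ : ℝ≥0∞) ≤ ENNReal.ofReal ((θ' * s) ^ (m + 1)) := by
    rw [← ENNReal.ofReal_coe_nnreal, coe_nnnorm]
    exact ENNReal.ofReal_le_ofReal hnorma
  have hgel := spectrum.spectralRadius_le_pow_nnnorm_pow_one_div ℂ a m
  have hone : (‖(1 : Matrix (Fin N) (Fin N) ℂ)‖₊ : ℝ≥0∞) = 1 := by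
    rw [nnnorm_one]; rfl
  have hnn : ((m : ℝ) + 1) ≠ 0 := by positivity
  have h2 : specRad B ≤ ENNReal.ofReal (θ' * s) := by
    have hexp : (((m + 1 : ℕ) : ℝ)) * (1 / ((m : ℝ) + 1)) = 1 := by
      push_cast
      field_simp
    have hstep : (ENNReal.ofReal ((θ' * s) ^ (m + 1))) ^ (1 / ((m : ℝ) + 1)) =
        ENNReal.ofReal (θ' * s) := by
      rw [ENNReal.ofReal_pow hθ's.le, ← ENNReal.rpow_natCast (ENNReal.ofReal (θ' * s)) (m + 1),
        ← ENNReal.rpow_mul, hexp, ENNReal.rpow_one]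
    calc specRad B ≤ (‖a ^ (m + 1)‖₊ : ℝ≥0∞) ^ (1 / ((m : ℝ) + 1)) *
          (‖(1 : Matrix (Fin N) (Fin N) ℂ)‖₊ : ℝ≥0∞) ^ (1 / ((m : ℝ) + 1)) := hgel
      _ = (‖a ^ (m + 1)‖₊ : ℝ≥0∞) ^ (1 / ((m : ℝ) + 1)) := by
          rw [hone, ENNReal.one_rpow, mul_one]
      _ ≤ (ENNReal.ofReal ((θ' * s) ^ (m + 1))) ^ (1 / ((m : ℝ) + 1)) :=
          ENNReal.rpow_le_rpow h1 (by positivity)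
      _ = ENNReal.ofReal (θ' * s) := hstep
  refine ⟨hZ, s, B, hB, hA_eq, lt_of_le_of_lt h2 ?_⟩
  rw [ENNReal.ofReal_lt_ofReal_iff hs_pos]
  nlinarith


lemma exists_pos_vec (s : ℝ) (hs : 0 < s) (B : Matrix (Fin N) (Fin N) ℝ)
    (hB : ∀ i j, 0 ≤ B i j) (hrad : specRad B < ENNReal.ofReal s) :
    ∃ v : Fin N → ℝ, (∀ i, 1 ≤ v i) ∧ B.mulVec v = fun i => s * (v i - 1) := by
  set a : Matrix (Fin N) (Fin N) ℂ := B.map Complex.ofReal with ha_def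
  have hapow : ∀ k : ℕ, a ^ k = (B ^ k).map Complex.ofReal := by
    intro k
    have h0 : a = Complex.ofRealHom.mapMatrix B := rfl
    rw [h0, ← map_pow, RingHom.mapMatrix_apply]
    rfl
  obtain ⟨ε, hε1, hε2⟩ := exists_between hrad
  have hεtop : ε ≠ ⊤ := ne_top_of_lt hε2
  set r : ℝ := ε.toReal with hr_def
  have hr0 : 0 ≤ r := ENNReal.toReal_nonneg
  have hofr : ENNReal.ofReal r = ε := ENNReal.ofReal_toReal hεtop
  have hrs : r < s := by
    rw [← ENNReal.ofReal_lt_ofReal_iff hs, hofr]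
    exact hε2
  have hgel := spectrum.pow_nnnorm_pow_one_div_tendsto_nhds_spectralRadius a
  have hev := hgel.eventually_lt_const hε1
  rw [eventually_atTop] at hev
  obtain ⟨n₀, hn₀⟩ := hev
  have hnormB : ∀ n ≥ max n₀ 1, ‖B ^ n‖ ≤ r ^ n := by
    intro n hn
    have h1 : (‖a ^ n‖₊ : ℝ≥0∞) ^ (1 / (n : ℝ)) < ε := hn₀ n (le_trans (le_max_left _ _) hn)
    have hn1 : 1 ≤ n := le_trans (le_max_right _ _) hn
    have hnne : (n : ℝ) ≠ 0 := Nat.cast_ne_zero.2 (by omega)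
    have h2 : (‖a ^ n‖₊ : ℝ≥0∞) ≤ ε ^ n := by
      have h3 := ENNReal.rpow_le_rpow h1.le (Nat.cast_nonneg n)
      rw [← ENNReal.rpow_mul, one_div_mul_cancel hnne, ENNReal.rpow_one,
        ENNReal.rpow_natCast] at h3
      exact h3
    rw [← hofr, ← ENNReal.ofReal_pow hr0] at h2
    rw [← ENNReal.ofReal_coe_nnreal, coe_nnnorm] at h2
    have h4 : ‖a ^ n‖ ≤ r ^ n := (ENNReal.ofReal_le_ofReal_iff (by positivity)).1 h2
    have h5 : ‖B ^ n‖ = ‖a ^ n‖ := by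
      rw [hapow n]
      exact (congrArg NNReal.toReal (nnnorm_map_ofReal (B ^ n))).symm
    rw [h5]
    exact h4
  set C : Matrix (Fin N) (Fin N) ℝ := s⁻¹ • B with hC_def
  have hC_nonneg : ∀ i j, 0 ≤ C i j := by
    intro i j
    have : C i j = s⁻¹ * B i j := rfl
    rw [this]
    exact mul_nonneg (inv_nonneg.2 hs.le) (hB i j)
  have hBC : B = s • C := by rw [hC_def, smul_smul, mul_inv_cancel₀ hs.ne', one_smul]
  set w : ℕ → (Fin N) → ℝ := fun n => (C ^ n).mulVec (fun _ => 1) with hw_def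
  have hw_apply : ∀ n i, w n i = ∑ j, (C ^ n) i j := by
    intro n i
    show ∑ j, (C ^ n) i j * 1 = _
    simp
  have hw_nonneg : ∀ n i, 0 ≤ w n i := by
    intro n i
    rw [hw_apply]
    exact Finset.sum_nonneg fun j _ => pow_entry_nonneg hC_nonneg n i j
  have hw0 : ∀ i, w 0 i = 1 := by
    intro i
    rw [hw_def]
    simp [Matrix.one_mulVec]
  have hwb : ∀ n ≥ max n₀ 1, ∀ i, |w n i| ≤ (r / s) ^ n := by
    intro n hn i
    have h1 : |w n i| ≤ ∑ j, |(C ^ n) i j| := by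
      rw [hw_apply]
      exact Finset.abs_sum_le_sum_abs _ _
    have h3 : ‖C ^ n‖ = s⁻¹ ^ n * ‖B ^ n‖ := by
      rw [hC_def, smul_pow, norm_smul]
      congr 1
      rw [Real.norm_eq_abs, abs_of_nonneg (by positivity)]
    calc |w n i| ≤ ‖C ^ n‖ := le_trans h1 (row_sum_le_norm _ i)
      _ = s⁻¹ ^ n * ‖B ^ n‖ := h3
      _ ≤ s⁻¹ ^ n * r ^ n := mul_le_mul_of_nonneg_left (hnormB n hn) (by positivity)
      _ = (r / s) ^ n := by rw [div_eq_inv_mul, mul_pow]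
  have hsummable : ∀ i, Summable (fun n => w n i) := by
    intro i
    apply Summable.of_norm_bounded_eventually_nat
      (summable_geometric_of_lt_one (by positivity) ((div_lt_one hs).2 hrs))
    rw [eventually_atTop]
    exact ⟨max n₀ 1, fun n hn => by simpa [Real.norm_eq_abs] using hwb n hn i⟩
  set v : Fin N → ℝ := fun i => ∑' n, w n i with hv_def
  have hv1 : ∀ i, 1 ≤ v i := by
    intro i
    have h := Summable.le_tsum (hsummable i) 0 (fun n _ => hw_nonneg n i)
    rw [hw0 i] at h
    exact h
  have hstep : ∀ n i, (B.mulVec (w n)) i = s * w (n + 1) i := by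
    intro n i
    have h1 : B.mulVec ((C ^ n).mulVec (fun _ => 1)) = (B * C ^ n).mulVec (fun _ => 1) :=
      Matrix.mulVec_mulVec _ _ _
    have h2 : B * C ^ n = s • C ^ (n + 1) := by
      rw [hBC, Matrix.smul_mul, ← pow_succ']
    have h3 : B.mulVec (w n) = s • ((C ^ (n + 1)).mulVec (fun _ => 1)) := by
      rw [hw_def, h1, h2, Matrix.smul_mulVec]
    rw [h3]
    rfl
  have hBv : ∀ i, B.mulVec v i = s * (v i - 1) := by
    intro i
    have h1 : B.mulVec v i = ∑ j, B i j * v j := rfl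
    have h3 : B.mulVec v i = ∑' n, ∑ j, B i j * w n j := by
      rw [h1]
      rw [Finset.sum_congr rfl (fun j _ => (tsum_mul_left (a := B i j) (f := fun n => w n j)).symm)]
      exact (Summable.tsum_finsetSum (fun j _ => (hsummable j).mul_left (B i j))).symm
    have h4 : B.mulVec v i = ∑' n, s * w (n + 1) i := by
      rw [h3]
      congr 1
      funext n
      exact hstep n i
    have h6 : v i = w 0 i + ∑' n, w (n + 1) i := Summable.tsum_eq_zero_add (hsummable i)
    rw [hw0 i] at h6
    rw [h4, tsum_mul_left]
    have : ∑' n, w (n + 1) i = v i - 1 := by linarith [h6]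
    rw [this]
  exact ⟨v, hv1, funext hBv⟩


/-! ### The scalar function and its inverse -/

lemma rpow_one_div_rpow {c : ℝ} (hc : 0 < c) {q : ℝ} (hq : q ≠ 0) :
    (c ^ (1 / q)) ^ q = c := by
  rw [← Real.rpow_mul hc.le, one_div_mul_cancel hq, Real.rpow_one]

/-- `t₀ = s^{1/(p-1)}`, the value where `s t = t^p`. -/
noncomputable def tZero (s p : ℝ) : ℝ := s ^ (1 / (p - 1))

/-- The scalar function `g(t) = s t - max(t, t₀)^p`. -/
noncomputable def gfun (s p : ℝ) : ℝ → ℝ := fun t => s * t - max t (tZero s p) ^ p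

variable {s p : ℝ}

lemma tZero_pos (hs : 0 < s) : 0 < tZero s p := Real.rpow_pos_of_pos hs _

lemma tZero_rpow_sub_one (hs : 0 < s) (hp : p < 1) : tZero s p ^ (p - 1) = s :=
  rpow_one_div_rpow hs (sub_ne_zero.2 hp.ne)

lemma tZero_rpow (hs : 0 < s) (hp : p < 1) : tZero s p ^ p = s * tZero s p := by
  have h1 : tZero s p ^ p = tZero s p ^ (p - 1 + 1) := by norm_num
  rw [h1, Real.rpow_add (tZero_pos hs), tZero_rpow_sub_one hs hp, Real.rpow_one]

lemma gfun_tZero (hs : 0 < s) (hp : p < 1) : gfun s p (tZero s p) = 0 := by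
  rw [gfun, max_self, tZero_rpow hs hp]
  ring

lemma gfun_of_le {t : ℝ} (ht : tZero s p ≤ t) : gfun s p t = s * t - t ^ p := by
  rw [gfun, max_eq_left ht]

lemma rpow_sub_one_le (hs : 0 < s) (hp : p < 1) {t : ℝ} (ht : tZero s p ≤ t) :
    t ^ (p - 1) ≤ s := by
  rw [← tZero_rpow_sub_one hs hp]
  exact Real.rpow_le_rpow_of_nonpos (tZero_pos hs) ht (by linarith)

lemma gfun_strictMono (hs : 0 < s) (hp : p < 1) : StrictMono (gfun s p) := by
  intro α β hab
  set t₀ := tZero s p with ht₀def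
  have ht₀ : 0 < t₀ := tZero_pos hs
  set a' := max α t₀ with ha'
  set b' := max β t₀ with hb'
  have ha'pos : 0 < a' := lt_of_lt_of_le ht₀ (le_max_right _ _)
  have ha'b' : a' ≤ b' := max_le_max hab.le le_rfl
  have ht₀a' : t₀ ≤ a' := le_max_right _ _
  have hd : b' - a' ≤ β - α := by
    rcases le_or_gt β t₀ with h | h
    · have hb'eq : b' = t₀ := max_eq_right h
      have ha'eq : a' = t₀ := max_eq_right (le_trans hab.le h)
      rw [hb'eq, ha'eq]
      linarith
    · have hb'eq : b' = β := max_eq_left h.le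
      rcases le_or_gt α t₀ with h2 | h2
      · have ha'eq : a' = t₀ := max_eq_right h2
        rw [hb'eq, ha'eq]
        linarith
      · have ha'eq : a' = α := max_eq_left h2.le
        rw [hb'eq, ha'eq]
  set q : ℝ := max p 0 with hq
  have hq1 : q < 1 := max_lt hp one_pos
  have hq0 : 0 ≤ q := le_max_right _ _
  have key : b' ^ p - a' ^ p ≤ q * s * (b' - a') := by
    rcases le_or_gt p 0 with hp0 | hp0
    · have h1 : b' ^ p ≤ a' ^ p := Real.rpow_le_rpow_of_nonpos ha'pos ha'b' hp0
      have h2 : 0 ≤ q * s * (b' - a') := by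
        apply mul_nonneg (mul_nonneg hq0 hs.le)
        linarith
      linarith
    · have hqp : q = p := max_eq_left hp0.le
      have hmvt := norm_image_sub_le_of_norm_deriv_le_segment'
        (f := fun t : ℝ => t ^ p) (f' := fun t : ℝ => p * t ^ (p - 1))
        (a := a') (b := b') (C := p * s) ?_ ?_ b' ⟨ha'b', le_rfl⟩
      · rw [Real.norm_eq_abs] at hmvt
        have := abs_le.1 hmvt
        have h2 : p * s * (b' - a') = q * s * (b' - a') := by rw [hqp]
        linarith [this.2]
      · intro t ht
        have htpos : 0 < t := lt_of_lt_of_le ha'pos ht.1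
        exact (Real.hasDerivAt_rpow_const (Or.inl htpos.ne')).hasDerivWithinAt
      · intro t ht
        have htpos : 0 < t := lt_of_lt_of_le ha'pos ht.1
        have h3 : t ^ (p - 1) ≤ s := rpow_sub_one_le hs hp (le_trans ht₀a' ht.1)
        rw [Real.norm_eq_abs, abs_of_nonneg (by positivity)]
        exact mul_le_mul_of_nonneg_left h3 hp0.le
  have h5 : q * s * (b' - a') ≤ q * s * (β - α) :=
    mul_le_mul_of_nonneg_left hd (mul_nonneg hq0 hs.le)
  have h6 : q * (s * (β - α)) < 1 * (s * (β - α)) :=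
    mul_lt_mul_of_pos_right hq1 (mul_pos hs (sub_pos.2 hab))
  show s * α - a' ^ p < s * β - b' ^ p
  nlinarith [key, h5, h6]

lemma gfun_continuous (hs : 0 < s) : Continuous (gfun s p) := by
  apply (continuous_const.mul continuous_id).sub
  apply (continuous_id.max continuous_const).rpow_const
  intro t
  exact Or.inl (ne_of_gt (lt_of_lt_of_le (tZero_pos hs) (le_max_right _ _)))

lemma gfun_surjective (hs : 0 < s) (hp : p < 1) : Function.Surjective (gfun s p) := by
  have hbot : Tendsto (gfun s p) atBot atBot := by
    have hEq : ∀ᶠ t in atBot, s * t - tZero s p ^ p = gfun s p t := by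
      filter_upwards [eventually_le_atBot (tZero s p)] with t ht
      rw [gfun, max_eq_right ht]
    apply Tendsto.congr' hEq
    have h1 : Tendsto (fun t : ℝ => s * t) atBot atBot :=
      Filter.Tendsto.const_mul_atBot hs tendsto_id
    simpa [sub_eq_add_neg] using tendsto_atBot_add_const_right atBot (-(tZero s p ^ p)) h1
  have htop : Tendsto (gfun s p) atTop atTop := by
    set T : ℝ := max (max (tZero s p) 1) ((s / 2) ^ (1 / (p - 1))) with hT
    have hT0 : tZero s p ≤ T := le_trans (le_max_left _ 1) (le_max_left _ _)
    apply tendsto_atTop_mono' atTop (f₁ := fun t : ℝ => s / 2 * t)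
    · filter_upwards [eventually_ge_atTop T] with t ht
      have htz : tZero s p ≤ t := le_trans hT0 ht
      have htpos : 0 < t := lt_of_lt_of_le (tZero_pos hs) htz
      have h2 : t ^ (p - 1) ≤ s / 2 := by
        have hu : (s / 2) ^ (1 / (p - 1)) ≤ t := le_trans (le_max_right _ _) ht
        have := Real.rpow_le_rpow_of_nonpos
          (Real.rpow_pos_of_pos (by linarith : (0:ℝ) < s / 2) _) hu (by linarith : p - 1 ≤ 0)
        rwa [rpow_one_div_rpow (by linarith : (0:ℝ) < s / 2) (sub_ne_zero.2 hp.ne)] at this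
      have h3 : t ^ p = t ^ (p - 1) * t := by
        rw [← Real.rpow_add_one htpos.ne' (p - 1)]
        norm_num
      have h4 : t ^ p ≤ s / 2 * t := by
        rw [h3]
        exact mul_le_mul_of_nonneg_right h2 htpos.le
      rw [gfun_of_le htz]
      linarith
    · exact Tendsto.const_mul_atTop (by linarith : (0:ℝ) < s / 2) tendsto_id
  exact (gfun_continuous hs).surjective htop hbot

/-- The order isomorphism given by `g`. -/
noncomputable def gIso (s p : ℝ) (hs : 0 < s) (hp : p < 1) : ℝ ≃o ℝ :=
  StrictMono.orderIsoOfSurjective _ (gfun_strictMono hs hp) (gfun_surjective hs hp)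

lemma gIso_apply (hs : 0 < s) (hp : p < 1) (t : ℝ) : gIso s p hs hp t = gfun s p t := rfl

/-! ### A monotone fixed point principle -/

lemma fixedPoint_of_monotone (Ψ : (Fin N → ℝ) → (Fin N → ℝ)) (hcont : Continuous Ψ)
    (hmono : ∀ u w : Fin N → ℝ, u ≤ w → Ψ u ≤ Ψ w) (a b : Fin N → ℝ) (hab : a ≤ b)
    (hlow : ∀ u, a ≤ u → a ≤ Ψ u) (hb : Ψ b ≤ b) :
    ∃ x : Fin N → ℝ, a ≤ x ∧ Ψ x = x := by
  set X : ℕ → (Fin N → ℝ) := fun n => Ψ^[n] b with hX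
  have hX0 : X 0 = b := rfl
  have hXsucc : ∀ n, X (n + 1) = Ψ (X n) := fun n => Function.iterate_succ_apply' Ψ n b
  have hXlow : ∀ n, a ≤ X n := by
    intro n
    induction n with
    | zero => exact hab
    | succ k ih =>
      rw [hXsucc]
      exact hlow _ ih
  have hXanti : ∀ n, X (n + 1) ≤ X n := by
    intro n
    induction n with
    | zero => rw [hXsucc, hX0]; exact hb
    | succ k ih =>
      calc X (k + 2) = Ψ (X (k + 1)) := hXsucc _
        _ ≤ Ψ (X k) := hmono _ _ ih
        _ = X (k + 1) := (hXsucc _).symm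
  have hanti : ∀ i, Antitone fun n => X n i :=
    fun i => antitone_nat_of_succ_le fun n => hXanti n i
  set x : Fin N → ℝ := fun i => ⨅ n, X n i with hx
  have hbdd : ∀ i, BddBelow (Set.range fun n => X n i) := by
    intro i
    refine ⟨a i, ?_⟩
    rintro y ⟨n, rfl⟩
    exact hXlow n i
  have htend : ∀ i, Tendsto (fun n => X n i) atTop (𝓝 (x i)) :=
    fun i => tendsto_atTop_ciInf (hanti i) (hbdd i)
  have hax : a ≤ x := fun i => le_ciInf fun n => hXlow n i
  have hXx : Tendsto X atTop (𝓝 x) := tendsto_pi_nhds.2 htend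
  have h1 : Tendsto (fun n => X (n + 1)) atTop (𝓝 x) := hXx.comp (tendsto_add_atTop_nat 1)
  have h2 : Tendsto (fun n => Ψ (X n)) atTop (𝓝 (Ψ x)) := (hcont.tendsto x).comp hXx
  have h3 : Tendsto (fun n => X (n + 1)) atTop (𝓝 (Ψ x)) :=
    h2.congr fun n => (hXsucc n).symm
  exact ⟨x, hax, tendsto_nhds_unique h3 h1⟩


/-! ### Existence of a positive solution for a non-singular M-matrix -/

lemma exists_sol (hN : 1 ≤ N) (s : ℝ) (hs : 0 < s) (B : Matrix (Fin N) (Fin N) ℝ)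
    (hB : ∀ i j, 0 ≤ B i j) (hrad : specRad B < ENNReal.ofReal s) {p : ℝ} (hp : p < 1) :
    ∃ x : Fin N → ℝ, (∀ i, 0 < x i) ∧
      (s • (1 : Matrix (Fin N) (Fin N) ℝ) - B).mulVec x = fun i => x i ^ p := by
  have hNe : Nonempty (Fin N) := ⟨⟨0, hN⟩⟩
  have hne : (Finset.univ : Finset (Fin N)).Nonempty := Finset.univ_nonempty
  obtain ⟨v, hv1, hBv⟩ := exists_pos_vec s hs B hB hrad
  set t₀ : ℝ := tZero s p with ht₀def
  have ht₀ : 0 < t₀ := tZero_pos hs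
  set e : ℝ ≃o ℝ := gIso s p hs hp with he
  have he_app : ∀ t, e t = gfun s p t := fun t => rfl
  have hψ_t0 : ∀ y : ℝ, 0 ≤ y → t₀ ≤ e.symm y := by
    intro y hy
    have h0 : e t₀ = 0 := gfun_tZero hs hp
    have := e.symm.monotone (h0.le.trans hy)
    rwa [e.symm_apply_apply] at this
  -- extremal points
  set Vm : ℝ := Finset.univ.sup' hne v with hVm_def
  have hVm : ∀ i, v i ≤ Vm := fun i => Finset.le_sup' v (Finset.mem_univ i)
  have hVm1 : (1 : ℝ) ≤ Vm := le_trans (hv1 ⟨0, hN⟩) (hVm _)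
  set c3 : ℝ := max (Vm ^ p) 1 with hc3_def
  have hc3 : 1 ≤ c3 := le_max_right _ _
  have hvp : ∀ i, v i ^ p ≤ c3 := by
    intro i
    rcases le_or_gt p 0 with hp0 | hp0
    · exact le_trans (Real.rpow_le_one_of_one_le_of_nonpos (hv1 i) hp0) (le_max_right _ _)
    · exact le_trans (Real.rpow_le_rpow (by linarith [hv1 i]) (hVm i) hp0.le) (le_max_left _ _)
  set R : ℝ := max (max t₀ 1) ((c3 / s) ^ (1 / (1 - p))) with hR_def
  have hR1 : (1 : ℝ) ≤ R := le_trans (le_max_right t₀ 1) (le_max_left _ _)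
  have hRpos : 0 < R := lt_of_lt_of_le one_pos hR1
  have hRt₀ : t₀ ≤ R := le_trans (le_max_left t₀ 1) (le_max_left _ _)
  have hRpow : c3 ≤ R ^ (1 - p) * s := by
    have hcs : 0 < c3 / s := div_pos (by linarith) hs
    have h2 : ((c3 / s) ^ (1 / (1 - p))) ^ (1 - p) ≤ R ^ (1 - p) :=
      Real.rpow_le_rpow (Real.rpow_nonneg hcs.le _) (le_max_right _ _) (by linarith)
    rw [rpow_one_div_rpow hcs (by intro h; linarith [sub_eq_zero.1 h] : (1 : ℝ) - p ≠ 0)] at h2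
    calc c3 = (c3 / s) * s := by field_simp
      _ ≤ R ^ (1 - p) * s := mul_le_mul_of_nonneg_right h2 hs.le
  set b : Fin N → ℝ := fun i => R * v i with hb_def
  set aL : Fin N → ℝ := fun _ => t₀ with haL_def
  have hab : aL ≤ b := by
    intro i
    show t₀ ≤ R * v i
    calc t₀ ≤ R := hRt₀
      _ = R * 1 := (mul_one R).symm
      _ ≤ R * v i := mul_le_mul_of_nonneg_left (hv1 i) hRpos.le
  set Ψ : (Fin N → ℝ) → (Fin N → ℝ) := fun u i => e.symm (B.mulVec u i) with hΨ_def
  have hmulVec_apply : ∀ (u : Fin N → ℝ) i, B.mulVec u i = ∑ j, B i j * u j := fun u i => rfl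
  have hcont : Continuous Ψ := by
    apply continuous_pi
    intro i
    apply (OrderIso.continuous e.symm).comp
    have hfun : (fun u : Fin N → ℝ => B.mulVec u i) = fun u => ∑ j, B i j * u j := rfl
    rw [hfun]
    exact continuous_finset_sum _ fun j _ => continuous_const.mul (continuous_apply j)
  have hmono : ∀ u w : Fin N → ℝ, u ≤ w → Ψ u ≤ Ψ w := by
    intro u w huw i
    apply e.symm.monotone
    rw [hmulVec_apply, hmulVec_apply]
    exact Finset.sum_le_sum fun j _ => mul_le_mul_of_nonneg_left (huw j) (hB i j)
  have hlow : ∀ u, aL ≤ u → aL ≤ Ψ u := by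
    intro u hu i
    apply hψ_t0
    rw [hmulVec_apply]
    exact Finset.sum_nonneg fun j _ => mul_nonneg (hB i j) (le_trans ht₀.le (hu j))
  have hb_ineq : Ψ b ≤ b := by
    intro i
    show e.symm (B.mulVec b i) ≤ R * v i
    rw [OrderIso.symm_apply_le]
    have hbt₀ : t₀ ≤ R * v i := hab i
    rw [he_app, gfun_of_le hbt₀]
    have h1 : B.mulVec b i = R * B.mulVec v i := by
      have hbv : b = R • v := rfl
      rw [hbv, Matrix.mulVec_smul]
      rfl
    have h2 : B.mulVec v i = s * (v i - 1) := congrFun hBv i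
    have h3 : (R * v i) ^ p ≤ R * s := by
      rw [Real.mul_rpow hRpos.le (by linarith [hv1 i])]
      have hRp_pos : (0 : ℝ) ≤ R ^ p := (Real.rpow_pos_of_pos hRpos p).le
      calc R ^ p * v i ^ p ≤ R ^ p * c3 := mul_le_mul_of_nonneg_left (hvp i) hRp_pos
        _ ≤ R ^ p * (R ^ (1 - p) * s) := mul_le_mul_of_nonneg_left hRpow hRp_pos
        _ = R ^ p * R ^ (1 - p) * s := by ring
        _ = R * s := by
            rw [← Real.rpow_add hRpos]
            norm_num
    rw [h1, h2]
    nlinarith [h3]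
  obtain ⟨x, hax, hfix⟩ := fixedPoint_of_monotone Ψ hcont hmono aL b hab hlow hb_ineq
  refine ⟨x, fun i => lt_of_lt_of_le ht₀ (hax i), ?_⟩
  funext i
  have hxt₀ : t₀ ≤ x i := hax i
  have h1 : B.mulVec x i = s * x i - x i ^ p := by
    have hfi : e.symm (B.mulVec x i) = x i := congrFun hfix i
    have := congrArg e hfi
    rw [e.apply_symm_apply, he_app, gfun_of_le hxt₀] at this
    exact this
  show (s • (1 : Matrix (Fin N) (Fin N) ℝ) - B).mulVec x i = x i ^ p
  rw [Matrix.sub_mulVec, Matrix.smul_mulVec, Matrix.one_mulVec]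
  have : (s • x - B.mulVec x) i = s * x i - B.mulVec x i := rfl
  rw [this, h1]
  ring

end Statement1Aux


/-- For a Z-matrix `A` and `p < 1`, the equation `A x = x^p` has a
componentwise positive solution if and only if `A` is a non-singular M-matrix. -/
theorem statement1 {N : ℕ} (hN : 1 ≤ N) (A : Matrix (Fin N) (Fin N) ℝ) (p : ℝ)
    (hp : p < 1) (hZ : IsZMatrix A) :
    (∃ x : Fin N → ℝ, (∀ i, 0 < x i) ∧ A.mulVec x = fun i => x i ^ p) ↔
      IsNonsingMMatrix A := by
  constructor
  · rintro ⟨x, hx, heq⟩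
    exact Statement1Aux.forward hN A p hZ x hx heq
  · rintro ⟨_, s, B, hB, hA_eq, hrad⟩
    have hs : 0 < s := ENNReal.ofReal_pos.1 (lt_of_le_of_lt zero_le hrad)
    obtain ⟨x, hx, hsol⟩ := Statement1Aux.exists_sol hN s hs B hB hrad hp
    exact ⟨x, hx, by rw [hA_eq]; exact hsol⟩
end

section
/- Let N ≥ 1, let A ∈ ℝ^{N×N} be a non-singular M-matrix and let p < 1. If x ∈ ℝ^N with x > 0 componentwise satisfies A x ≤ x^p componentwise (x is a subsolution) and y ∈ ℝ^N with y > 0 componentwise satisfies A y ≥ y^p componentwise (y is a supersolution), then x ≤ y componentwise. In particular, the equation A x = x^p has at most one solution x with x > 0 componentwise. -/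
lemma le_one_of_le_rpow {t p : ℝ} (hp : p < 1) (h : t ≤ t ^ p) : t ≤ 1 := by
  by_contra! ht
  have : t ^ p < t := by
    simpa using Real.rpow_lt_rpow_of_exponent_lt ht hp
  linarith

section ZMatrix

variable {ι : Type*} [Fintype ι] {A : Matrix ι ι ℝ}

lemma mul_mulVec_le_mulVec_of_le_of_eq (hA : ∀ i j, i ≠ j → A i j ≤ 0) {x y : ι → ℝ} {t : ℝ}
    {i : ι} (hle : ∀ j, x j ≤ t * y j) (heq : x i = t * y i) :
    t * A.mulVec y i ≤ A.mulVec x i := by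
  have hgap : A.mulVec (t • y - x) i ≤ 0 := by
    refine Finset.sum_nonpos fun j _ => ?_
    by_cases hij : i = j
    · subst hij
      simp [heq]
    · exact mul_nonpos_of_nonpos_of_nonneg (hA i j hij)
        (by simpa using sub_nonneg.mpr (hle j))
  simpa [Matrix.mulVec_sub, Matrix.mulVec_smul] using hgap

theorem le_of_mulVec_le_rpow_of_rpow_le_mulVec (hA : ∀ i j, i ≠ j → A i j ≤ 0) {p : ℝ}
    (hp : p < 1) {x y : ι → ℝ} (hx : ∀ i, 0 < x i) (hy : ∀ i, 0 < y i)
    (hsub : ∀ i, A.mulVec x i ≤ x i ^ p) (hsup : ∀ i, y i ^ p ≤ A.mulVec y i) (j : ι) :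
    x j ≤ y j := by
  have : Nonempty ι := ⟨j⟩
  obtain ⟨i₀, hmax⟩ := Finite.exists_max fun i => x i / y i
  set t := x i₀ / y i₀
  have ht : 0 < t := div_pos (hx i₀) (hy i₀)
  have hle : ∀ i, x i ≤ t * y i := fun i => (div_le_iff₀ (hy i)).mp (hmax i)
  have heq : x i₀ = t * y i₀ := (div_mul_cancel₀ _ (hy i₀).ne').symm
  have hyp : 0 < y i₀ ^ p := Real.rpow_pos_of_pos (hy i₀) p
  have hchain : t * y i₀ ^ p ≤ t ^ p * y i₀ ^ p :=
    calc t * y i₀ ^ p ≤ t * A.mulVec y i₀ := mul_le_mul_of_nonneg_left (hsup i₀) ht.le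
      _ ≤ A.mulVec x i₀ := mul_mulVec_le_mulVec_of_le_of_eq hA hle heq
      _ ≤ x i₀ ^ p := hsub i₀
      _ = t ^ p * y i₀ ^ p := by rw [heq, Real.mul_rpow ht.le (hy i₀).le]
  have ht1 : t ≤ 1 := le_one_of_le_rpow hp (le_of_mul_le_mul_right hchain hyp)
  calc x j ≤ t * y j := hle j
    _ ≤ y j := mul_le_of_le_one_left (hy j).le ht1

end ZMatrix

theorem statement2_general {N : ℕ} (A : Matrix (Fin N) (Fin N) ℝ) (p : ℝ)
    (hp : p < 1) (hA : IsNonsingMMatrix A)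
    (x y : Fin N → ℝ) (hx : ∀ i, 0 < x i) (hy : ∀ i, 0 < y i)
    (hsub : ∀ i, A.mulVec x i ≤ x i ^ p) (hsup : ∀ i, y i ^ p ≤ A.mulVec y i) :
    (∀ i, x i ≤ y i) ∧
      ∀ x' y' : Fin N → ℝ, (∀ i, 0 < x' i) → (∀ i, 0 < y' i) →
        A.mulVec x' = (fun i => x' i ^ p) → A.mulVec y' = (fun i => y' i ^ p) →
        x' = y' := by
  have hZ : IsZMatrix A := hA.1
  refine ⟨le_of_mulVec_le_rpow_of_rpow_le_mulVec hZ hp hx hy hsub hsup, ?_⟩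
  intro x' y' hx' hy' hex hey
  funext i
  exact le_antisymm
    (le_of_mulVec_le_rpow_of_rpow_le_mulVec hZ hp hx' hy'
      (fun j => (congrFun hex j).le) (fun j => (congrFun hey j).ge) i)
    (le_of_mulVec_le_rpow_of_rpow_le_mulVec hZ hp hy' hx'
      (fun j => (congrFun hey j).le) (fun j => (congrFun hex j).ge) i)

/-- comparison of sub- and supersolutions of `A x = x^p` for a non-singular
M-matrix `A` and `p < 1`, and the resulting uniqueness of positive solutions. -/
theorem statement2 {N : ℕ} (hN : 1 ≤ N) (A : Matrix (Fin N) (Fin N) ℝ) (p : ℝ)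
    (hp : p < 1) (hA : IsNonsingMMatrix A)
    (x y : Fin N → ℝ) (hx : ∀ i, 0 < x i) (hy : ∀ i, 0 < y i)
    (hsub : ∀ i, A.mulVec x i ≤ x i ^ p) (hsup : ∀ i, y i ^ p ≤ A.mulVec y i) :
    (∀ i, x i ≤ y i) ∧
      ∀ x' y' : Fin N → ℝ, (∀ i, 0 < x' i) → (∀ i, 0 < y' i) →
        A.mulVec x' = (fun i => x' i ^ p) → A.mulVec y' = (fun i => y' i ^ p) →
        x' = y' :=
  statement2_general A p hp hA x y hx hy hsub hsup
end

section
/- Let N ≥ 2, q₁,…,q_N > 0, R > 0 and η ∈ ℝ^N with η_i > −q_i/R for all i. Let Q ∈ ℝ^{N×N} be the cyclic Q-matrix given by Q_{i,i} = −q_i, Q_{i,i+1} = q_i for i = 1,…,N−1, Q_{N,1} = q_N, and all other entries 0. Then A := diag(η) − (1/R)Q is a non-singular M-matrix if and only if ∏_{i=1}^N (1 + (R/q_i) η_i) > 1. -/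
/-! Auxiliary lemmas -/

open Fin.NatCast in
lemma perm_aux {m : ℕ} (σ : Equiv.Perm (Fin (m+2)))
    (h : ∀ i, σ i = i ∨ i = σ i + 1) : σ = 1 ∨ σ = (finRotate (m+2))⁻¹ := by
  have hrot : ∀ i : Fin (m+2), (finRotate (m+2))⁻¹ i = i - 1 := by
    intro i
    rw [Equiv.Perm.inv_def, Equiv.symm_apply_eq, finRotate_succ_apply, sub_add_cancel]
  by_cases hid : ∀ i, σ i = i
  · left; ext i; simp [hid i]
  · right
    push_neg at hid
    obtain ⟨i0, hi0⟩ := hid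
    have hi0' : σ i0 = i0 - 1 := by
      rcases h i0 with h' | h'
      · exact absurd h' hi0
      · exact (eq_sub_iff_add_eq.mpr h'.symm)
    have step : ∀ b : Fin (m+2), σ b = b - 1 → σ (b - 1) = b - 1 - 1 := by
      intro b hb
      rcases h (b - 1) with h' | h'
      · exfalso
        have h2 : σ (b-1) = σ b := by rw [h', hb]
        have h3 : b - 1 = b := σ.injective h2
        rw [sub_eq_self] at h3
        exact one_ne_zero h3
      · exact (eq_sub_iff_add_eq.mpr h'.symm)
    have all : ∀ k : ℕ, σ (i0 - (k : Fin (m+2))) = i0 - (k : Fin (m+2)) - 1 := by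
      intro k
      induction k with
      | zero => simpa using hi0'
      | succ n ih =>
          have e : i0 - ((n+1 : ℕ) : Fin (m+2)) = i0 - (n : Fin (m+2)) - 1 := by
            rw [Nat.cast_succ]; exact sub_add_eq_sub_sub _ _ _
          rw [e]
          exact step _ ih
    ext j
    have := all ((i0 - j : Fin (m+2)) : ℕ)
    rw [Fin.cast_val_eq_self, sub_sub_cancel] at this
    rw [this, hrot]

open Finset in
lemma det_cyclic {m : ℕ} {α : Type*} [CommRing α] (a b : Fin (m+2) → α) :
    (Matrix.of fun i j : Fin (m+2) =>
      if j = i then a i else if j = i + 1 then b i else 0).det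
      = ∏ i, a i + (-1)^(m+1) * ∏ i, b i := by
  set M := (Matrix.of fun i j : Fin (m+2) =>
      if j = i then a i else if j = i + 1 then b i else 0) with hM
  have hMij : ∀ i j : Fin (m+2), M i j = if j = i then a i else if j = i + 1 then b i else 0 :=
    fun i j => rfl
  have hc : ∀ i : Fin (m+2), (finRotate (m+2))⁻¹ i = i - 1 := by
    intro i
    rw [Equiv.Perm.inv_def, Equiv.symm_apply_eq, finRotate_succ_apply, sub_add_cancel]
  have hne : (1 : Equiv.Perm (Fin (m+2))) ≠ (finRotate (m+2))⁻¹ := by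
    intro hcontra
    have := hc 0
    rw [← hcontra] at this
    simp only [Equiv.Perm.one_apply] at this
    have : (1 : Fin (m+2)) = 0 := by rw [eq_comm, sub_eq_self] at this; exact this
    exact one_ne_zero this
  rw [Matrix.det_apply]
  rw [← Finset.sum_subset (Finset.subset_univ
    ({1, (finRotate (m+2))⁻¹} : Finset (Equiv.Perm (Fin (m+2)))))]
  · rw [Finset.sum_pair hne]
    have e1 : (Equiv.Perm.sign (1 : Equiv.Perm (Fin (m+2)))) •
        ∏ i, M ((1 : Equiv.Perm (Fin (m+2))) i) i = ∏ i, a i := by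
      simp [hMij]
    have e2 : (Equiv.Perm.sign ((finRotate (m+2))⁻¹)) •
        ∏ i, M (((finRotate (m+2))⁻¹) i) i = (-1)^(m+1) * ∏ i, b i := by
      have hsign : Equiv.Perm.sign ((finRotate (m+2))⁻¹) = (-1)^(m+1) := by
        rw [Equiv.Perm.sign_inv, sign_finRotate]
        rfl
      have hprod : ∏ i, M (((finRotate (m+2))⁻¹) i) i = ∏ i, b i := by
        have : ∀ i : Fin (m+2), M (((finRotate (m+2))⁻¹) i) i = b (i - 1) := by
          intro i
          rw [hc, hMij]
          have h1 : i ≠ i - 1 := by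
            intro hcontra
            rw [eq_comm, sub_eq_self] at hcontra
            exact one_ne_zero hcontra
          rw [if_neg h1, if_pos (sub_add_cancel i 1).symm]
        rw [Finset.prod_congr rfl (fun i _ => this i)]
        exact Fintype.prod_equiv (Equiv.subRight 1) _ _ (fun i => rfl)
      rw [hsign, hprod]
      simp [Units.smul_def]
    rw [e1, e2]
  · intro σ _ hσ
    simp only [Finset.mem_insert, Finset.mem_singleton] at hσ
    push_neg at hσ
    have : ¬ (∀ i, σ i = i ∨ i = σ i + 1) := by
      intro hall
      rcases perm_aux σ hall with h1 | h1
      · exact hσ.1 h1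
      · exact hσ.2 h1
    push_neg at this
    obtain ⟨i, hi⟩ := this
    have hz : M (σ i) i = 0 := by
      rw [hMij, if_neg (Ne.symm hi.1), if_neg hi.2]
    have hp : ∏ j : Fin (m+2), M (σ j) j = 0 := Finset.prod_eq_zero (Finset.mem_univ i) hz
    rw [hp, smul_zero]

lemma det_cyclic' {m : ℕ} {α : Type*} [CommRing α] (a b : Fin (m+2) → α) :
    (Matrix.of fun i j : Fin (m+2) =>
      if j = i then a i else if j = i + 1 then -(b i) else 0).det
      = ∏ i, a i - ∏ i, b i := by
  rw [det_cyclic]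
  have e1 : ∏ i : Fin (m+2), -(b i) = (-1)^(m+2) * ∏ i, b i := by
    have : ∀ i : Fin (m+2), -(b i) = -1 * b i := fun i => by ring
    rw [Finset.prod_congr rfl (fun i _ => this i), Finset.prod_mul_distrib,
      Finset.prod_const]
    simp
  rw [e1, ← mul_assoc, ← pow_add]
  have : (-1 : α) ^ (m + 1 + (m + 2)) = -1 := Odd.neg_one_pow ⟨m+1, by ring⟩
  rw [this]
  ring

lemma mem_spectrum_iff_det' {𝕜 : Type*} [Field 𝕜] {n : ℕ} (M : Matrix (Fin n) (Fin n) 𝕜) (t : 𝕜) :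
    t ∈ spectrum 𝕜 M ↔ (t • (1 : Matrix (Fin n) (Fin n) 𝕜) - M).det = 0 := by
  rw [spectrum.mem_iff, Algebra.algebraMap_eq_smul_one, Matrix.isUnit_iff_isUnit_det,
    isUnit_iff_ne_zero, not_ne_iff]

lemma eval_charpoly'' {𝕜 : Type*} [Field 𝕜] {n : ℕ} (M : Matrix (Fin n) (Fin n) 𝕜) (t : 𝕜) :
    (M.charpoly).eval t = (t • (1 : Matrix (Fin n) (Fin n) 𝕜) - M).det := by
  rw [Matrix.charpoly, ← Polynomial.coe_evalRingHom, RingHom.map_det]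
  congr 1
  ext i j
  by_cases h : i = j
  · subst h
    simp [Matrix.charmatrix_apply_eq, Matrix.one_apply]
  · simp [Matrix.charmatrix_apply_ne _ _ _ h, Matrix.one_apply, h]

lemma spectrum_finite' {𝕜 : Type*} [Field 𝕜] {n : ℕ} (M : Matrix (Fin n) (Fin n) 𝕜) :
    (spectrum 𝕜 M).Finite := by
  apply Set.Finite.subset (Polynomial.finite_setOf_isRoot (p := M.charpoly)
    (Matrix.charpoly_monic M).ne_zero)
  intro t ht
  rw [Set.mem_setOf_eq, Polynomial.IsRoot, eval_charpoly'']
  exact (mem_spectrum_iff_det' M t).mp ht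

lemma spectralRadius_lt_of_forall {n : ℕ} (M : Matrix (Fin n) (Fin n) ℂ) {s : ℝ} (hs : 0 < s)
    (h : ∀ z ∈ spectrum ℂ M, ‖z‖ < s) : spectralRadius ℂ M < ENNReal.ofReal s := by
  rcases Set.eq_empty_or_nonempty (spectrum ℂ M) with he | hne
  · rw [spectralRadius, he]
    simp [ENNReal.ofReal_pos.mpr hs]
  · obtain ⟨z0, hz0, hmax⟩ := Set.exists_max_image (spectrum ℂ M) (fun z => ‖z‖)
      (spectrum_finite' M) hne
    have h1 : spectralRadius ℂ M ≤ (‖z0‖₊ : ENNReal) := by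
      apply iSup₂_le
      intro k hk
      exact_mod_cast hmax k hk
    refine lt_of_le_of_lt h1 ?_
    rw [ENNReal.ofReal, ENNReal.coe_lt_coe, Real.lt_toNNReal_iff_coe_lt, coe_nnnorm]
    exact h z0 hz0

open Polynomial in
lemma det_pos_of_mmatrix {m : ℕ} (A B : Matrix (Fin (m+2)) (Fin (m+2)) ℝ) (s : ℝ)
    (hA : A = s • (1 : Matrix (Fin (m+2)) (Fin (m+2)) ℝ) - B)
    (hρ : spectralRadius ℂ (B.map Complex.ofReal) < ENNReal.ofReal s) : 0 < A.det := by
  set p := B.charpoly with hp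
  have hmono : p.Monic := Matrix.charpoly_monic B
  have hroot : ∀ t : ℝ, p.IsRoot t → t < s := by
    intro t ht
    have hdet : ((t : ℂ) • (1 : Matrix (Fin (m+2)) (Fin (m+2)) ℂ) - B.map Complex.ofReal).det = 0 := by
      have e : (t : ℂ) • (1 : Matrix (Fin (m+2)) (Fin (m+2)) ℂ) - B.map Complex.ofReal
          = Complex.ofRealHom.mapMatrix (t • (1 : Matrix (Fin (m+2)) (Fin (m+2)) ℝ) - B) := by
        ext i j
        by_cases hij : i = j <;>
          simp [Matrix.one_apply, hij, Matrix.map_apply]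
      rw [e, ← RingHom.map_det]
      have : (t • (1 : Matrix (Fin (m+2)) (Fin (m+2)) ℝ) - B).det = 0 := by
        rw [← eval_charpoly'']
        exact ht
      rw [this, map_zero]
    have hmem : (t : ℂ) ∈ spectrum ℂ (B.map Complex.ofReal) := by
      rw [mem_spectrum_iff_det']
      convert hdet using 3
    have hle : (‖(t:ℂ)‖₊ : ENNReal) ≤ spectralRadius ℂ (B.map Complex.ofReal) :=
      le_iSup₂ (f := fun k (_ : k ∈ spectrum ℂ (B.map Complex.ofReal)) => (‖k‖₊ : ENNReal)) _ hmem
    have h2 := lt_of_le_of_lt hle hρ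
    rw [ENNReal.ofReal, ENNReal.coe_lt_coe, Real.lt_toNNReal_iff_coe_lt, coe_nnnorm,
      Complex.norm_real] at h2
    calc t ≤ |t| := le_abs_self t
    _ < s := by rwa [← Real.norm_eq_abs]
  have hs : 0 < s := by
    by_contra hns
    push_neg at hns
    have : ENNReal.ofReal s = 0 := by simp [ENNReal.ofReal_eq_zero.mpr hns]
    rw [this] at hρ
    exact (not_lt_bot hρ)
  have hdeg : 0 < p.degree := by
    apply Polynomial.natDegree_pos_iff_degree_pos.mp
    rw [hp, Matrix.charpoly_natDegree_eq_dim]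
    simp
  have hsroot : ¬ p.IsRoot s := fun h => lt_irrefl s (hroot s h)
  have hpos : 0 < p.eval s := by
    by_contra hle
    push_neg at hle
    have hlt : p.eval s < 0 := lt_of_le_of_ne hle hsroot
    have htend := p.tendsto_atTop_of_leadingCoeff_nonneg hdeg (by rw [hmono.leadingCoeff]; norm_num)
    obtain ⟨T, hT⟩ := ((htend.eventually_ge_atTop 1).and (Filter.eventually_ge_atTop s)).exists
    have hsT : s ≤ T := hT.2
    have h0mem : (0:ℝ) ∈ Set.Ioo (p.eval s) (p.eval T) := ⟨hlt, lt_of_lt_of_le one_pos hT.1⟩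
    have := intermediate_value_Ioo hsT p.continuous.continuousOn h0mem
    obtain ⟨t, htIoo, htval⟩ := this
    exact absurd (hroot t htval) (not_lt.mpr htIoo.1.le)
  rw [hA, ← eval_charpoly'']
  exact hpos

/-- characterisation of well-posedness in the cyclic model.  For `N ≥ 2`
(encoded as `N + 2` states), rates `q i > 0`, risk aversion `R > 0` and frozen rates
`η i > - q i / R`, the matrix `diag(η) - (1/R) Q` built from the cyclic Q-matrix `Q`
is a non-singular M-matrix iff `∏ i (1 + (R / q i) * η i) > 1`. -/
theorem statement3 (N : ℕ) (q η : Fin (N + 2) → ℝ) (R : ℝ) (hR : 0 < R)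
    (hq : ∀ i, 0 < q i) (hη : ∀ i, -(q i) / R < η i) :
    IsNonsingMMatrix
      (Matrix.diagonal η - R⁻¹ •
        (Matrix.of fun i j : Fin (N + 2) =>
          if j = i then -(q i) else if j = i + 1 then q i else 0)) ↔
      1 < ∏ i, (1 + (R / q i) * η i) := by
  set A := (Matrix.diagonal η - R⁻¹ •
        (Matrix.of fun i j : Fin (N + 2) =>
          if j = i then -(q i) else if j = i + 1 then q i else 0)) with hAdef
  have hd : ∀ i, (0:ℝ) < η i + q i / R := by
    intro i
    have h1 := hη i
    rw [neg_div] at h1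
    linarith
  have hqR : ∀ i, (0:ℝ) < q i / R := fun i => div_pos (hq i) hR
  have hPpos : 0 < ∏ i, q i / R := Finset.prod_pos (fun i _ => hqR i)
  have hAij : ∀ i j, A i j =
      if j = i then (η i + q i / R) else if j = i + 1 then -(q i / R) else 0 := by
    intro i j
    rw [hAdef]
    by_cases h1 : j = i
    · subst h1
      simp only [Matrix.sub_apply, Matrix.smul_apply, Matrix.of_apply,
        Matrix.diagonal_apply_eq, smul_eq_mul, eq_self_iff_true, if_true]
      ring
    · have h1' : i ≠ j := fun hh => h1 hh.symm
      by_cases h2 : j = i + 1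
      · simp only [Matrix.sub_apply, Matrix.smul_apply, Matrix.of_apply,
          Matrix.diagonal_apply_ne _ h1', smul_eq_mul, if_neg h1, if_pos h2]
        ring
      · simp only [Matrix.sub_apply, Matrix.smul_apply, Matrix.of_apply,
          Matrix.diagonal_apply_ne _ h1', smul_eq_mul, if_neg h1, if_neg h2]
        ring
  have hAform : A = Matrix.of (fun i j : Fin (N+2) =>
      if j = i then (η i + q i / R) else if j = i + 1 then -(q i / R) else 0) := by
    ext i j; exact hAij i j
  have hdetA : A.det = ∏ i, (η i + q i / R) - ∏ i, (q i / R) := by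
    rw [hAform]
    exact det_cyclic' (m := N) _ _
  have hfac : ∀ i, (1 + (R / q i) * η i) * (q i / R) = η i + q i / R := by
    intro i
    have hqi : q i ≠ 0 := (hq i).ne'
    have hRi : R ≠ 0 := hR.ne'
    field_simp
    ring
  have hprodeq : (∏ i, (1 + (R / q i) * η i)) * (∏ i, q i / R) = ∏ i, (η i + q i / R) := by
    rw [← Finset.prod_mul_distrib]
    exact Finset.prod_congr rfl (fun i _ => hfac i)
  have key : (1 < ∏ i, (1 + (R / q i) * η i)) ↔ (∏ i, (q i / R)) < ∏ i, (η i + q i / R) := by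
    rw [← hprodeq]
    exact (lt_mul_iff_one_lt_left hPpos).symm
  constructor
  · rintro ⟨hZ, s, B, hBpos, hAB, hρ⟩
    have hdet : 0 < A.det := det_pos_of_mmatrix A B s hAB hρ
    rw [hdetA] at hdet
    rw [key]
    linarith
  · intro h1
    have hD := key.mp h1
    have hZ : IsZMatrix A := by
      intro i j hij
      rw [hAij i j, if_neg (fun hh : j = i => hij hh.symm)]
      by_cases h2 : j = i + 1
      · rw [if_pos h2]
        exact neg_nonpos.mpr (hqR i).le
      · rw [if_neg h2]
    set s := Finset.univ.sup' Finset.univ_nonempty (fun i => η i + q i / R) with hsdef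
    have hsge : ∀ i, η i + q i / R ≤ s := fun i => Finset.le_sup' (fun i => η i + q i / R) (Finset.mem_univ i)
    have hspos : 0 < s := lt_of_lt_of_le (hd 0) (hsge 0)
    refine ⟨hZ, s, s • 1 - A, ?_, (sub_sub_cancel _ _).symm, ?_⟩
    · intro i j
      rw [Matrix.sub_apply, Matrix.smul_apply, Matrix.one_apply]
      by_cases hij : i = j
      · rw [if_pos hij, hij, hAij j j, if_pos rfl, smul_eq_mul, mul_one]
        linarith [hsge j]
      · rw [if_neg hij, smul_zero, zero_sub]
        exact neg_nonneg.mpr (hZ i j hij)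
    · show spectralRadius ℂ (((s • 1 - A : Matrix (Fin (N+2)) (Fin (N+2)) ℝ)).map Complex.ofReal)
        < ENNReal.ofReal s
      apply spectralRadius_lt_of_forall _ hspos
      intro z hz
      rw [mem_spectrum_iff_det'] at hz
      have e : z • (1 : Matrix (Fin (N+2)) (Fin (N+2)) ℂ)
            - ((s • 1 - A : Matrix (Fin (N+2)) (Fin (N+2)) ℝ)).map Complex.ofReal
          = Matrix.of (fun i j : Fin (N+2) =>
              if j = i then (z - s + ((η i + q i / R : ℝ) : ℂ))
              else if j = i + 1 then -(((q i / R : ℝ)) : ℂ) else 0) := by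
        ext i j
        simp only [Matrix.sub_apply, Matrix.smul_apply, Matrix.map_apply, Matrix.one_apply,
          Matrix.of_apply, smul_eq_mul]
        by_cases h1 : j = i
        · rw [if_pos h1.symm, if_pos h1.symm, if_pos h1, h1, hAij i i, if_pos rfl]
          push_cast
          ring
        · rw [if_neg (fun hh : i = j => h1 hh.symm), if_neg (fun hh : i = j => h1 hh.symm),
            if_neg h1, hAij i j, if_neg h1]
          by_cases h2 : j = i + 1
          · rw [if_pos h2, if_pos h2]
            push_cast
            ring
          · rw [if_neg h2, if_neg h2]
            push_cast
            ring
      rw [e, det_cyclic' (m := N)] at hz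
      have hz' : ∏ i, (z - s + ((η i + q i / R : ℝ) : ℂ)) = ∏ i, (((q i / R : ℝ)) : ℂ) :=
        sub_eq_zero.mp hz
      by_contra hge
      push_neg at hge
      have hbound : ∀ i : Fin (N+2),
          (η i + q i / R) ≤ ‖z - s + ((η i + q i / R : ℝ) : ℂ)‖ := by
        intro i
        have e2 : z - s + ((η i + q i / R : ℝ) : ℂ)
            = z - (((s - (η i + q i / R) : ℝ)) : ℂ) := by push_cast; ring
        have h4 : ‖(((s - (η i + q i / R) : ℝ)) : ℂ)‖ = s - (η i + q i / R) := by
          rw [Complex.norm_real, Real.norm_eq_abs, abs_of_nonneg (by linarith [hsge i])]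
        calc η i + q i / R ≤ ‖z‖ - ‖(((s - (η i + q i / R) : ℝ)) : ℂ)‖ := by
              rw [h4]; linarith
          _ ≤ ‖z - (((s - (η i + q i / R) : ℝ)) : ℂ)‖ := norm_sub_norm_le _ _
          _ = ‖z - s + ((η i + q i / R : ℝ) : ℂ)‖ := by rw [← e2]
      have hle2 : ∏ i, (η i + q i / R) ≤ ∏ i, ‖z - s + ((η i + q i / R : ℝ) : ℂ)‖ :=
        Finset.prod_le_prod (fun i _ => (hd i).le) (fun i _ => hbound i)
      have heq : ∏ i, ‖z - s + ((η i + q i / R : ℝ) : ℂ)‖ = ∏ i, (q i / R) := by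
        rw [← norm_prod, hz']
        have e3 : ∏ i, (((q i / R : ℝ)) : ℂ) = (((∏ i, q i / R : ℝ)) : ℂ) := by push_cast; rfl
        rw [e3, Complex.norm_real, Real.norm_eq_abs, abs_of_pos hPpos]
      linarith
end

section
/- Fix e⁻ < e⁺ in E₁ and continuous functions α, β : [e⁻,e⁺] → Ẽ₂ with α ≤ β. Then there exists a constant R₀ > 0 (independent of C) such that for every C ∈ (0,∞], every solution u of the truncated equation u'' = f_C(y,u,u') on [e⁻,e⁺] satisfying α ≤ u ≤ β also satisfies ‖u'‖_{L^∞([e⁻,e⁺])} ≤ R₀. -/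
open Set Filter MeasureTheory

/-- The `C`-truncation `f_C(y,u,v) = f(y,u, (-C) ∨ v ∧ C)` of the right-hand side. -/
def truncFun (f : ℝ → ℝ → ℝ → ℝ) (C : ℝ) : ℝ → ℝ → ℝ → ℝ :=
  fun y u v => f y u (max (-C) (min v C))

/-- The Nagumo condition for the family `(f_C)_{C ∈ (0,∞]}` on `E₁ × Ẽ₂`:
for every compact `K ⊆ E₁ × Ẽ₂` there is `φ` with `∫_r^∞ s/φ(s) ds = ∞` for all `r > 0`
(expressed as divergence of the integral function) dominating `|f_C(y,u,·)|` for all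
`C ∈ (0,∞]` (the case `C = ∞` being `f` itself) and all `(y,u) ∈ K`. -/
def NagumoFamily (f : ℝ → ℝ → ℝ → ℝ) (E₁ E₂t : Set ℝ) : Prop :=
  ∀ K : Set (ℝ × ℝ), IsCompact K → K ⊆ E₁ ×ˢ E₂t →
    ∃ φ : ℝ → ℝ,
      (∀ r > (0 : ℝ),
        Filter.Tendsto (fun t => ∫ s in r..t, s / φ s) Filter.atTop Filter.atTop) ∧
      (∀ z ∈ K, ∀ v : ℝ, |f (Prod.fst z) (Prod.snd z) v| ≤ φ |v|) ∧
      (∀ C > (0 : ℝ), ∀ z ∈ K, ∀ v : ℝ,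
        |truncFun f C (Prod.fst z) (Prod.snd z) v| ≤ φ |v|)

/-- `u`, with derivative `u'`, solves the second-order equation `u'' = f(y, u, u')` on `S`. -/
def SolvesODEOn (f : ℝ → ℝ → ℝ → ℝ) (u u' : ℝ → ℝ) (S : Set ℝ) : Prop :=
  ∀ y ∈ S, HasDerivWithinAt u (u' y) S y ∧ HasDerivWithinAt u' (f y (u y) (u' y)) S y

lemma nagumoCore (φ : ℝ → ℝ) (r R : ℝ) (hr : 0 < r) (hrR : r < R)
    (hφ : ∀ s ∈ Icc r R, 0 ≤ φ s)
    (a b : ℝ) (hab : a ≤ b) (g g' : ℝ → ℝ) (hgc : Continuous g)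
    (hg : ∀ y ∈ Icc a b, HasDerivWithinAt g (g' y) (Icc a b) y)
    (hbound : ∀ y ∈ Icc a b, g y ∈ Icc r R → |g' y| ≤ φ (g y))
    (hga : g a ≤ r) (hgb : R ≤ g b) :
    ∃ y₁ y₂, y₁ ∈ Icc a b ∧ y₂ ∈ Icc a b ∧ y₁ ≤ y₂ ∧
      (∫ s in r..R, s / φ s) ≤ ∫ y in y₁..y₂, g y := by
  -- the first time g hits R
  set S₂ : Set ℝ := {y ∈ Icc a b | g y = R} with hS₂def
  have hS₂c : IsClosed S₂ := by
    have : S₂ = Icc a b ∩ g ⁻¹' {R} := by ext y; simp [hS₂def, and_comm]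
    rw [this]; exact isClosed_Icc.inter (isClosed_singleton.preimage hgc)
  have hS₂ne : S₂.Nonempty := by
    have : R ∈ Icc (g a) (g b) := ⟨le_trans hga hrR.le, hgb⟩
    obtain ⟨y, hy, hgy⟩ := intermediate_value_Icc hab hgc.continuousOn this
    exact ⟨y, hy, hgy⟩
  set y₂ := sInf S₂ with hy₂def
  have hy₂S : y₂ ∈ S₂ := hS₂c.csInf_mem hS₂ne ⟨a, fun y hy => hy.1.1⟩
  have hy₂ : g y₂ = R := hy₂S.2
  have hy₂ab : y₂ ∈ Icc a b := hy₂S.1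
  have hub : ∀ y ∈ Icc a y₂, g y ≤ R := by
    intro y hy
    by_contra hc
    push_neg at hc
    have hyb : y ∈ Icc a b := ⟨hy.1, hy.2.trans hy₂ab.2⟩
    have : R ∈ Icc (g a) (g y) := ⟨le_trans hga hrR.le, hc.le⟩
    obtain ⟨t, ht, hgt⟩ := intermediate_value_Icc hy.1 (hgc.continuousOn) this
    have htS : t ∈ S₂ := ⟨⟨ht.1, ht.2.trans hyb.2⟩, hgt⟩
    have : y₂ ≤ t := csInf_le ⟨a, fun z hz => hz.1.1⟩ htS
    have hyy₂ : y < y₂ := lt_of_le_of_ne hy.2 (fun h => by rw [h, hy₂] at hc; exact lt_irrefl _ hc)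
    linarith [ht.2]
  -- the last time before y₂ that g hits r
  set S₁ : Set ℝ := {y ∈ Icc a y₂ | g y = r} with hS₁def
  have hS₁c : IsClosed S₁ := by
    have : S₁ = Icc a y₂ ∩ g ⁻¹' {r} := by ext y; simp [hS₁def, and_comm]
    rw [this]; exact isClosed_Icc.inter (isClosed_singleton.preimage hgc)
  have hS₁ne : S₁.Nonempty := by
    have : r ∈ Icc (g a) (g y₂) := ⟨hga, by rw [hy₂]; exact hrR.le⟩
    obtain ⟨y, hy, hgy⟩ := intermediate_value_Icc hy₂ab.1 hgc.continuousOn this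
    exact ⟨y, hy, hgy⟩
  set y₁ := sSup S₁ with hy₁def
  have hy₁S : y₁ ∈ S₁ := hS₁c.csSup_mem hS₁ne ⟨y₂, fun y hy => hy.1.2⟩
  have hy₁ : g y₁ = r := hy₁S.2
  have hy₁₂ : y₁ ≤ y₂ := hy₁S.1.2
  have hy₁ab : y₁ ∈ Icc a b := ⟨hy₁S.1.1, hy₁₂.trans hy₂ab.2⟩
  have hIsub : Icc y₁ y₂ ⊆ Icc a b := Icc_subset_Icc hy₁ab.1 hy₂ab.2
  have hlow : ∀ y ∈ Icc y₁ y₂, r ≤ g y := by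
    intro y hy
    by_contra hc
    push_neg at hc
    have : r ∈ Icc (g y) (g y₂) := ⟨hc.le, by rw [hy₂]; exact hrR.le⟩
    obtain ⟨t, ht, hgt⟩ := intermediate_value_Icc hy.2 hgc.continuousOn this
    have htS : t ∈ S₁ := ⟨⟨(hy₁S.1.1.trans hy.1).trans ht.1, ht.2⟩, hgt⟩
    have h1 : t ≤ y₁ := le_csSup ⟨y₂, fun z hz => hz.1.2⟩ htS
    have hyy₁ : y₁ < y := lt_of_le_of_ne hy.1 (fun h => by rw [← h, hy₁] at hc; exact lt_irrefl _ hc)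
    linarith [ht.1]
  have hupp : ∀ y ∈ Icc y₁ y₂, g y ≤ R := fun y hy =>
    hub y ⟨hy₁ab.1.trans hy.1, hy.2⟩
  have hy₁lt₂ : y₁ < y₂ := by
    rcases lt_or_eq_of_le hy₁₂ with h | h
    · exact h
    · exfalso; rw [h, hy₂] at hy₁; linarith
  -- the rising sun set
  set m' : ℝ → ℝ := fun q => sInf (g '' Icc q y₂) with hm'def
  set s : Set ℝ :=
    Ico y₁ y₂ ∩ ⋂ (q : ℚ), ({y : ℝ | (q : ℝ) ≤ y} ∪ {y : ℝ | y₂ < (q : ℝ)} ∪ {y : ℝ | g y < m' q})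
    with hsdef
  have hs : MeasurableSet s := by
    apply measurableSet_Ico.inter
    apply MeasurableSet.iInter
    intro q
    apply MeasurableSet.union
    · exact (measurableSet_Ici).union (MeasurableSet.const _)
    · exact measurableSet_lt hgc.measurable measurable_const
  have hschar : ∀ y, y ∈ s ↔ y ∈ Ico y₁ y₂ ∧ ∀ t ∈ Ioc y y₂, g y < g t := by
    intro y
    constructor
    · rintro ⟨hy, hq⟩
      refine ⟨hy, fun t ht => ?_⟩
      obtain ⟨q, hq1, hq2⟩ := exists_rat_btwn ht.1
      have := mem_iInter.1 hq q
      rcases this with (h | h) | h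
      · exact absurd hq1 (not_lt.2 h)
      · exact absurd (hq2.le.trans ht.2) (not_le.2 h)
      · refine lt_of_lt_of_le h ?_
        apply csInf_le
        · exact (isCompact_Icc.image_of_continuousOn hgc.continuousOn).bddBelow
        · exact ⟨t, ⟨hq2.le, ht.2⟩, rfl⟩
    · rintro ⟨hy, hmono⟩
      refine ⟨hy, mem_iInter.2 fun q => ?_⟩
      by_cases h1 : (q : ℝ) ≤ y
      · exact Or.inl (Or.inl h1)
      by_cases h2 : y₂ < (q : ℝ)
      · exact Or.inl (Or.inr h2)
      push_neg at h1 h2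
      right
      have hne : (Icc (q : ℝ) y₂).Nonempty := ⟨q, le_refl _, h2⟩
      have hcpt := isCompact_Icc.image_of_continuousOn (hgc.continuousOn : ContinuousOn g (Icc (q:ℝ) y₂))
      have hmem : m' q ∈ g '' Icc (q : ℝ) y₂ := hcpt.sInf_mem (hne.image g)
      obtain ⟨t, ht, hgt⟩ := hmem
      have : g y < g t := hmono t ⟨lt_of_lt_of_le h1 ht.1, ht.2⟩
      rw [hgt] at this
      exact this
  refine ⟨y₁, y₂, hy₁ab, hy₂ab, hy₁₂, ?_⟩
  have hssub : s ⊆ Icc y₁ y₂ := fun y hy => Ico_subset_Icc_self hy.1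
  have hmono : StrictMonoOn g s := by
    intro x hx y hy hxy
    exact ((hschar x).1 hx).2 y ⟨hxy, (Ico_subset_Icc_self ((hschar y).1 hy).1).2⟩
  have hinj : InjOn g s := hmono.injOn
  have himsub : g '' s ⊆ Icc r R := by
    rintro - ⟨y, hy, rfl⟩
    exact ⟨hlow y (hssub hy), hupp y (hssub hy)⟩
  have himsup : Ioo r R ⊆ g '' s := by
    intro v hv
    set T : Set ℝ := {t ∈ Icc y₁ y₂ | g t = v} with hTdef
    have hTc : IsClosed T := by
      have : T = Icc y₁ y₂ ∩ g ⁻¹' {v} := by ext y; simp [hTdef, and_comm]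
      rw [this]; exact isClosed_Icc.inter (isClosed_singleton.preimage hgc)
    have hTne : T.Nonempty := by
      have : v ∈ Icc (g y₁) (g y₂) := by rw [hy₁, hy₂]; exact ⟨hv.1.le, hv.2.le⟩
      obtain ⟨t, ht, hgt⟩ := intermediate_value_Icc hy₁₂ hgc.continuousOn this
      exact ⟨t, ht, hgt⟩
    set yv := sSup T with hyvdef
    have hyvT : yv ∈ T := hTc.csSup_mem hTne ⟨y₂, fun t ht => ht.1.2⟩
    have hgyv : g yv = v := hyvT.2
    have hyvlt : yv < y₂ := lt_of_le_of_ne hyvT.1.2 (fun h => by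
      rw [h, hy₂] at hgyv; exact absurd hgyv.symm (ne_of_lt hv.2))
    refine ⟨yv, (hschar yv).2 ⟨⟨hyvT.1.1, hyvlt⟩, ?_⟩, hgyv⟩
    intro t ht
    rw [hgyv]
    rcases lt_trichotomy (g t) v with hc | hc | hc
    · exfalso
      have : v ∈ Icc (g t) (g y₂) := by rw [hy₂]; exact ⟨hc.le, hv.2.le⟩
      obtain ⟨t', ht', hgt'⟩ := intermediate_value_Icc ht.2 hgc.continuousOn this
      have ht'T : t' ∈ T := ⟨⟨hyvT.1.1.trans (ht.1.le.trans ht'.1), ht'.2⟩, hgt'⟩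
      have : t' ≤ yv := le_csSup ⟨y₂, fun z hz => hz.1.2⟩ ht'T
      linarith [ht'.1, ht.1]
    · exfalso
      have : t ≤ yv := le_csSup ⟨y₂, fun z hz => hz.1.2⟩ ⟨⟨hyvT.1.1.trans ht.1.le, ht.2⟩, hc⟩
      linarith [ht.1]
    · exact hc
  -- integral chain
  set h : ℝ → ℝ := fun v => v / φ v with hhdef
  by_cases hInt : IntervalIntegrable h volume r R
  · have hIccInt : IntegrableOn h (Icc r R) := by
      rw [integrableOn_Icc_iff_integrableOn_Ioc]
      exact hInt.1
    have hgInt : IntegrableOn g (Icc y₁ y₂) := hgc.integrableOn_Icc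
    have step0 : (∫ s in r..R, h s) = ∫ v in Ioo r R, h v := by
      rw [intervalIntegral.integral_of_le hrR.le, MeasureTheory.integral_Ioc_eq_integral_Ioo]
    have hnn : ∀ v ∈ Icc r R, 0 ≤ h v := fun v hv =>
      div_nonneg (hr.le.trans hv.1) (hφ v hv)
    have step1 : (∫ v in Ioo r R, h v) ≤ ∫ v in g '' s, h v := by
      apply setIntegral_mono_set (hIccInt.mono_set himsub)
      · exact ae_restrict_of_ae_restrict_of_subset himsub
          (ae_restrict_of_forall_mem measurableSet_Icc hnn)
      · exact HasSubset.Subset.eventuallyLE himsup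
    have hderivs : ∀ y ∈ s, HasDerivWithinAt g (g' y) s y := fun y hy =>
      (hg y (hIsub (hssub hy))).mono (hssub.trans hIsub)
    have step2 : (∫ v in g '' s, h v) = ∫ y in s, |g' y| • h (g y) :=
      MeasureTheory.integral_image_eq_integral_abs_deriv_smul hs hderivs hinj h
    have key3 : ∀ y ∈ s, |g' y| • h (g y) ≤ g y := by
      intro y hy
      have hmem : g y ∈ Icc r R := ⟨hlow y (hssub hy), hupp y (hssub hy)⟩
      have hgy0 : 0 < g y := hr.trans_le hmem.1
      by_cases hz : φ (g y) = 0
      · simp only [hhdef, hz, div_zero, smul_zero]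
        exact hgy0.le
      · have h1 : |g' y| ≤ φ (g y) := hbound y (hIsub (hssub hy)) hmem
        have h2 : 0 ≤ h (g y) := hnn _ hmem
        calc |g' y| • h (g y) = |g' y| * (g y / φ (g y)) := rfl
          _ ≤ φ (g y) * (g y / φ (g y)) := mul_le_mul_of_nonneg_right h1 h2
          _ = g y := by field_simp
    have step3 : (∫ y in s, |g' y| • h (g y)) ≤ ∫ y in s, g y := by
      apply integral_mono_of_nonneg
      · exact ae_restrict_of_forall_mem hs fun y hy =>
          smul_nonneg (abs_nonneg _) (hnn _ ⟨hlow y (hssub hy), hupp y (hssub hy)⟩)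
      · exact hgInt.mono_set hssub
      · exact ae_restrict_of_forall_mem hs key3
    have step4 : (∫ y in s, g y) ≤ ∫ y in Icc y₁ y₂, g y := by
      apply setIntegral_mono_set hgInt
      · exact ae_restrict_of_forall_mem measurableSet_Icc fun y hy =>
          le_trans hr.le (hlow y hy)
      · exact HasSubset.Subset.eventuallyLE hssub
    have step5 : (∫ y in Icc y₁ y₂, g y) = ∫ y in y₁..y₂, g y := by
      rw [intervalIntegral.integral_of_le hy₁₂, ← MeasureTheory.integral_Icc_eq_integral_Ioc]
    calc (∫ s in r..R, h s) = ∫ v in Ioo r R, h v := step0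
      _ ≤ ∫ v in g '' s, h v := step1
      _ = ∫ y in s, |g' y| • h (g y) := step2
      _ ≤ ∫ y in s, g y := step3
      _ ≤ ∫ y in Icc y₁ y₂, g y := step4
      _ = ∫ y in y₁..y₂, g y := step5
  · rw [intervalIntegral.integral_undef hInt]
    apply intervalIntegral.integral_nonneg hy₁₂
    intro y hy
    exact le_trans hr.le (hlow y hy)

lemma ftcIcc (G g : ℝ → ℝ) (a b y₁ y₂ : ℝ)
    (h1 : y₁ ∈ Icc a b) (h2 : y₂ ∈ Icc a b) (h12 : y₁ ≤ y₂)
    (hG : ∀ y ∈ Icc a b, HasDerivWithinAt G (g y) (Icc a b) y)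
    (hgc : ContinuousOn g (Icc a b)) :
    (∫ y in y₁..y₂, g y) = G y₂ - G y₁ := by
  have hsub : Icc y₁ y₂ ⊆ Icc a b := Icc_subset_Icc h1.1 h2.2
  apply intervalIntegral.integral_eq_sub_of_hasDeriv_right_of_le h12
  · exact fun y hy => ((hG y (hsub hy)).continuousWithinAt).mono hsub
  · intro y hy
    have hyab : y ∈ Icc a b := hsub (Ioo_subset_Icc_self hy)
    have : HasDerivAt G (g y) y :=
      (hG y hyab).hasDerivAt (Icc_mem_nhds (h1.1.trans_lt hy.1) (hy.2.trans_le h2.2))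
    exact this.hasDerivWithinAt
  · exact (hgc.mono (by rwa [uIcc_of_le h12])).intervalIntegrable

lemma nagumoInterval (φ : ℝ → ℝ) (r R m M : ℝ) (hr : 0 < r) (hrR : r < R)
    (hφ : ∀ s ∈ Icc r R, 0 ≤ φ s)
    (a b : ℝ) (hab : a ≤ b) (G gb gb' : ℝ → ℝ)
    (hG : ∀ y ∈ Icc a b, HasDerivWithinAt G (gb y) (Icc a b) y)
    (hg : ∀ y ∈ Icc a b, HasDerivWithinAt gb (gb' y) (Icc a b) y)
    (hbound : ∀ y ∈ Icc a b, gb y ∈ Icc r R → |gb' y| ≤ φ (gb y))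
    (hGm : ∀ y ∈ Icc a b, G y ∈ Icc m M)
    (hga : gb a ≤ r) (hgb : R ≤ gb b) :
    (∫ s in r..R, s / φ s) ≤ M - m := by
  set g : ℝ → ℝ := IccExtend hab (fun t : Icc a b => gb t) with hgdef
  have hgeq : ∀ y ∈ Icc a b, g y = gb y := fun y hy => by
    rw [hgdef, IccExtend_of_mem hab _ hy]
  have hgbc : ContinuousOn gb (Icc a b) := fun y hy =>
    (hg y hy).continuousWithinAt
  have hgc : Continuous g := hgbc.restrict.Icc_extend'
  have hgderiv : ∀ y ∈ Icc a b, HasDerivWithinAt g (gb' y) (Icc a b) y := fun y hy =>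
    (hg y hy).congr (fun t ht => hgeq t ht) (hgeq y hy)
  have hbound' : ∀ y ∈ Icc a b, g y ∈ Icc r R → |gb' y| ≤ φ (g y) := fun y hy hm => by
    rw [hgeq y hy] at hm ⊢; exact hbound y hy hm
  obtain ⟨y₁, y₂, h1, h2, h12, hineq⟩ :=
    nagumoCore φ r R hr hrR hφ a b hab g gb' hgc hgderiv hbound'
      (by rw [hgeq a ⟨le_refl a, hab⟩]; exact hga)
      (by rw [hgeq b ⟨hab, le_refl b⟩]; exact hgb)
  have hGderiv : ∀ y ∈ Icc a b, HasDerivWithinAt G (g y) (Icc a b) y := fun y hy => by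
    rw [hgeq y hy]; exact hG y hy
  have := ftcIcc G g a b y₁ y₂ h1 h2 h12 hGderiv hgc.continuousOn
  rw [this] at hineq
  have hm1 := hGm y₁ h1
  have hm2 := hGm y₂ h2
  calc (∫ s in r..R, s / φ s) ≤ G y₂ - G y₁ := hineq
    _ ≤ M - m := by linarith [hm1.1, hm1.2, hm2.1, hm2.2]

/-- a priori Nagumo bound on the derivative.  There is `R₀ > 0`, independent
of `C ∈ (0,∞]`, bounding `‖u'‖_∞` for every solution `u` of the `C`-truncated equation
on `[e⁻, e⁺]` lying between `α` and `β`. -/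
theorem statement6
    (E₁ E₂ E₂t : Set ℝ)
    (hE₁o : IsOpen E₁) (hE₁c : E₁.OrdConnected)
    (hE₂o : IsOpen E₂) (hE₂c : E₂.OrdConnected)
    (hE₂sub : E₂ ⊆ E₂t) (hE₂sub' : E₂t ⊆ closure E₂)
    (f : ℝ → ℝ → ℝ → ℝ)
    (hfc : ContinuousOn (fun z : ℝ × ℝ × ℝ => f z.1 z.2.1 z.2.2)
      (E₁ ×ˢ E₂t ×ˢ (univ : Set ℝ)))
    (hflip : LocallyLipschitzOn (E₁ ×ˢ E₂ ×ˢ (univ : Set ℝ))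
      (fun z : ℝ × ℝ × ℝ => f z.1 z.2.1 z.2.2))
    (hnag : NagumoFamily f E₁ E₂t)
    (em ep : ℝ) (hlt : em < ep) (hem : em ∈ E₁) (hep : ep ∈ E₁)
    (α β : ℝ → ℝ)
    (hαc : ContinuousOn α (Icc em ep)) (hβc : ContinuousOn β (Icc em ep))
    (hαmem : ∀ y ∈ Icc em ep, α y ∈ E₂t) (hβmem : ∀ y ∈ Icc em ep, β y ∈ E₂t)
    (hαβ : ∀ y ∈ Icc em ep, α y ≤ β y) :
    ∃ R₀ > (0 : ℝ),
      (∀ u u' : ℝ → ℝ, SolvesODEOn f u u' (Icc em ep) →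
        (∀ y ∈ Icc em ep, α y ≤ u y ∧ u y ≤ β y) →
        ∀ y ∈ Icc em ep, |u' y| ≤ R₀) ∧
      (∀ C > (0 : ℝ), ∀ u u' : ℝ → ℝ, SolvesODEOn (truncFun f C) u u' (Icc em ep) →
        (∀ y ∈ Icc em ep, α y ≤ u y ∧ u y ≤ β y) →
        ∀ y ∈ Icc em ep, |u' y| ≤ R₀) := by
  have hIE₁ : Icc em ep ⊆ E₁ := hE₁c.out hem hep
  have hne : (Icc em ep).Nonempty := nonempty_Icc.2 hlt.le
  obtain ⟨ym, hym, hminα⟩ := isCompact_Icc.exists_isMinOn hne hαc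
  obtain ⟨yM, hyM, hmaxβ⟩ := isCompact_Icc.exists_isMaxOn hne hβc
  set m := α ym with hmdef
  set M := β yM with hMdef
  have hαm : ∀ y ∈ Icc em ep, m ≤ α y := fun y hy => hminα hy
  have hβM : ∀ y ∈ Icc em ep, β y ≤ M := fun y hy => hmaxβ hy
  have hmM : m ≤ M := le_trans (hαm yM hyM) (hαβ yM hyM)
  have hMM : Icc m M ⊆ E₂t := by
    intro x hx
    rcases eq_or_lt_of_le hx.1 with h | h
    · rw [← h]; exact hαmem ym hym
    rcases eq_or_lt_of_le hx.2 with h | h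
    · rw [h]; exact hβmem yM hyM
    have hmcl : m ∈ closure E₂ := hE₂sub' (hαmem ym hym)
    have hMcl : M ∈ closure E₂ := hE₂sub' (hβmem yM hyM)
    obtain ⟨p, hp, hpd⟩ := Metric.mem_closure_iff.1 hmcl (x - m) (by linarith)
    obtain ⟨q, hq, hqd⟩ := Metric.mem_closure_iff.1 hMcl (M - x) (by linarith)
    rw [Real.dist_eq] at hpd hqd
    have h1 := abs_lt.1 hpd
    have h2 := abs_lt.1 hqd
    exact hE₂sub (hE₂c.out hp hq ⟨by linarith [h1.1, h1.2], by linarith [h2.1, h2.2]⟩)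
  set K : Set (ℝ × ℝ) := Icc em ep ×ˢ Icc m M with hKdef
  obtain ⟨φ, hdiv, hφf, hφfC⟩ := hnag K (isCompact_Icc.prod isCompact_Icc)
    (prod_mono hIE₁ hMM)
  have hmemK : (em, m) ∈ K := ⟨⟨le_refl em, hlt.le⟩, ⟨le_refl m, hmM⟩⟩
  have hφ0 : ∀ t, 0 ≤ t → 0 ≤ φ t := by
    intro t ht
    have := hφf (em, m) hmemK t
    rw [abs_of_nonneg ht] at this
    exact le_trans (abs_nonneg _) this
  set lam := (M - m) / (ep - em) with hlamdef
  have hlam0 : 0 ≤ lam := div_nonneg (by linarith) (by linarith)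
  set r := lam + 1 with hrdef
  have hrpos : 0 < r := by positivity
  obtain ⟨R, hRr, hRint⟩ : ∃ R, r < R ∧ M - m < ∫ s in r..R, s / φ s := by
    have h1 := ((hdiv r hrpos).eventually_gt_atTop (M - m)).and (eventually_gt_atTop r)
    obtain ⟨R, hR⟩ := h1.exists
    exact ⟨R, hR.2, hR.1⟩
  have hφnn : ∀ s ∈ Icc r R, 0 ≤ φ s := fun s hs => hφ0 s (hrpos.le.trans hs.1)
  have key : ∀ F : ℝ → ℝ → ℝ → ℝ, (∀ z ∈ K, ∀ v : ℝ, |F z.1 z.2 v| ≤ φ |v|) →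
      ∀ u u' : ℝ → ℝ, SolvesODEOn F u u' (Icc em ep) →
      (∀ y ∈ Icc em ep, α y ≤ u y ∧ u y ≤ β y) → ∀ y ∈ Icc em ep, |u' y| ≤ R := by
    intro F hF u u' hsol hbet y0 hy0
    have hu' : ∀ y ∈ Icc em ep, HasDerivWithinAt u (u' y) (Icc em ep) y :=
      fun y hy => (hsol y hy).1
    have hu'' : ∀ y ∈ Icc em ep, HasDerivWithinAt u' (F y (u y) (u' y)) (Icc em ep) y :=
      fun y hy => (hsol y hy).2
    have hucont : ContinuousOn u (Icc em ep) := fun y hy => (hu' y hy).continuousWithinAt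
    have humem : ∀ y ∈ Icc em ep, u y ∈ Icc m M := fun y hy =>
      ⟨(hαm y hy).trans (hbet y hy).1, (hbet y hy).2.trans (hβM y hy)⟩
    have hbF : ∀ y ∈ Icc em ep, |F y (u y) (u' y)| ≤ φ |u' y| := fun y hy =>
      hF (y, u y) ⟨hy, humem y hy⟩ (u' y)
    obtain ⟨c, hc, hcslope⟩ := exists_hasDerivAt_eq_slope u u' hlt hucont
      (fun y hy => (hu' y (Ioo_subset_Icc_self hy)).hasDerivAt (Icc_mem_nhds hy.1 hy.2))
    have hcmem : c ∈ Icc em ep := Ioo_subset_Icc_self hc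
    have hclam : |u' c| ≤ lam := by
      rw [hcslope, abs_div, abs_of_pos (by linarith : (0:ℝ) < ep - em), hlamdef]
      have hb1 := humem em ⟨le_refl em, hlt.le⟩
      have hb2 := humem ep ⟨hlt.le, le_refl ep⟩
      have habs : |u ep - u em| ≤ M - m :=
        abs_sub_le_iff.2 ⟨by linarith [hb2.2, hb1.1], by linarith [hb1.2, hb2.1]⟩
      gcongr
    by_contra hcon
    push_neg at hcon
    have hclamr : u' c ≤ r := by have := le_abs_self (u' c); rw [hrdef]; linarith
    have hclamr' : -u' c ≤ r := by have := neg_abs_le (u' c); rw [hrdef]; linarith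
    have hfalse : (∫ s in r..R, s / φ s) ≤ M - m := by
      rcases lt_abs.1 hcon with hpos | hneg
      · rcases le_or_gt c y0 with hcy | hcy
        · -- u' y0 > R, c ≤ y0
          have hsub : Icc c y0 ⊆ Icc em ep := Icc_subset_Icc hcmem.1 hy0.2
          apply nagumoInterval φ r R m M hrpos hRr hφnn c y0 hcy u u'
            (fun y => F y (u y) (u' y))
            (fun y hy => (hu' y (hsub hy)).mono hsub)
            (fun y hy => (hu'' y (hsub hy)).mono hsub)
            ?_ (fun y hy => humem y (hsub hy)) hclamr hpos.le
          intro y hy hm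
          have h1 := hbF y (hsub hy)
          rwa [abs_of_nonneg (le_trans hrpos.le hm.1)] at h1
        · -- u' y0 > R, y0 < c
          have hsub : Icc y0 c ⊆ Icc em ep := Icc_subset_Icc hy0.1 hcmem.2
          have hmaps : MapsTo (fun y => y0 + c - y) (Icc y0 c) (Icc y0 c) := by
            intro y hy
            simp only [mem_Icc] at hy ⊢
            constructor <;> linarith
          have hσ : ∀ y ∈ Icc y0 c,
              HasDerivWithinAt (fun y => y0 + c - y) (-1 : ℝ) (Icc y0 c) y :=
            fun y hy => by
              simpa using (hasDerivWithinAt_id y (Icc y0 c)).const_sub (y0 + c)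
          have hσmem : ∀ y ∈ Icc y0 c, y0 + c - y ∈ Icc em ep :=
            fun y hy => hsub (hmaps hy)
          have hmapsE : MapsTo (fun y => y0 + c - y) (Icc y0 c) (Icc em ep) :=
            fun y hy => hσmem y hy
          have hres : (∫ s in r..R, s / φ s) ≤ -m - -M := by
            apply nagumoInterval φ r R (-M) (-m) hrpos hRr hφnn y0 c hcy.le
              (fun y => -u (y0 + c - y))
              (fun y => u' (y0 + c - y))
              (fun y => F (y0 + c - y) (u (y0 + c - y)) (u' (y0 + c - y)) * (-1))
            · intro y hy
              have := (((hu' (y0 + c - y) (hσmem y hy)).comp y (hσ y hy) hmapsE)).neg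
              simpa [Function.comp_def, Pi.neg_def] using this
            · intro y hy
              exact ((hu'' (y0 + c - y) (hσmem y hy)).comp y (hσ y hy) hmapsE)
            · intro y hy hm
              have h1 := hbF (y0 + c - y) (hσmem y hy)
              rw [abs_mul, abs_neg, abs_one, mul_one]
              rwa [abs_of_nonneg (le_trans hrpos.le hm.1)] at h1
            · intro y hy
              have := humem (y0 + c - y) (hσmem y hy)
              simp only [mem_Icc] at this ⊢
              constructor <;> linarith
            · show u' (y0 + c - y0) ≤ r
              rw [show y0 + c - y0 = c by ring]; exact hclamr
            · show R ≤ u' (y0 + c - c)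
              rw [show y0 + c - c = y0 by ring]; exact hpos.le
          linarith
      · rcases le_or_gt c y0 with hcy | hcy
        · -- u' y0 < -R, c ≤ y0
          have hsub : Icc c y0 ⊆ Icc em ep := Icc_subset_Icc hcmem.1 hy0.2
          have hres : (∫ s in r..R, s / φ s) ≤ -m - -M := by
            apply nagumoInterval φ r R (-M) (-m) hrpos hRr hφnn c y0 hcy
              (fun y => -u y) (fun y => -u' y)
              (fun y => -(F y (u y) (u' y)))
              (fun y hy => ((hu' y (hsub hy)).mono hsub).neg)
              (fun y hy => ((hu'' y (hsub hy)).mono hsub).neg)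
              ?_ ?_ hclamr' hneg.le
            · intro y hy hm
              have h1 := hbF y (hsub hy)
              rw [abs_neg]
              have hy0' : u' y ≤ 0 := by
                have : r ≤ -u' y := hm.1; linarith
              rwa [abs_of_nonpos hy0'] at h1
            · intro y hy
              have := humem y (hsub hy)
              simp only [mem_Icc] at this ⊢
              constructor <;> linarith
          linarith
        · -- u' y0 < -R, y0 < c
          have hsub : Icc y0 c ⊆ Icc em ep := Icc_subset_Icc hy0.1 hcmem.2
          have hmaps : MapsTo (fun y => y0 + c - y) (Icc y0 c) (Icc y0 c) := by
            intro y hy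
            simp only [mem_Icc] at hy ⊢
            constructor <;> linarith
          have hσ : ∀ y ∈ Icc y0 c,
              HasDerivWithinAt (fun y => y0 + c - y) (-1 : ℝ) (Icc y0 c) y :=
            fun y hy => by
              simpa using (hasDerivWithinAt_id y (Icc y0 c)).const_sub (y0 + c)
          have hσmem : ∀ y ∈ Icc y0 c, y0 + c - y ∈ Icc em ep :=
            fun y hy => hsub (hmaps hy)
          have hmapsE : MapsTo (fun y => y0 + c - y) (Icc y0 c) (Icc em ep) :=
            fun y hy => hσmem y hy
          apply nagumoInterval φ r R m M hrpos hRr hφnn y0 c hcy.le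
            (fun y => u (y0 + c - y))
            (fun y => -u' (y0 + c - y))
            (fun y => F (y0 + c - y) (u (y0 + c - y)) (u' (y0 + c - y)))
          · intro y hy
            have := (hu' (y0 + c - y) (hσmem y hy)).comp y (hσ y hy) hmapsE
            simpa [Function.comp_def] using this
          · intro y hy
            have := ((hu'' (y0 + c - y) (hσmem y hy)).comp y (hσ y hy) hmapsE).neg
            simpa [Function.comp_def, Pi.neg_def] using this
          · intro y hy hm
            have h1 := hbF (y0 + c - y) (hσmem y hy)
            have hy0' : u' (y0 + c - y) ≤ 0 := by
              have : r ≤ -u' (y0 + c - y) := hm.1; linarith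
            rwa [abs_of_nonpos hy0'] at h1
          · exact fun y hy => humem (y0 + c - y) (hσmem y hy)
          · show -u' (y0 + c - y0) ≤ r
            rw [show y0 + c - y0 = c by ring]; exact hclamr'
          · show R ≤ -u' (y0 + c - c)
            rw [show y0 + c - c = y0 by ring]; exact hneg.le
    linarith
  refine ⟨R, hrpos.trans hRr, ?_, ?_⟩
  · exact fun u u' => key f (fun z hz v => hφf z hz v) u u'
  · exact fun C hC u u' => key (truncFun f C) (hφfC C hC) u u'
end

section
/- Let u and ũ be two solutions of the HJB equation (1/2)b²u'' + ã u' + η u − u² − d (u')²/u = 0, defined and positive on all of the open interval E, such that ũ(y)/u(y) → 1 as y tends to either endpoint of E. Then u = ũ on E. -/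
open Set Filter

/-- The filter of "tails" of `E` at its right endpoint: a set belongs to it iff it
contains `{y ∈ E | c < y}` for some `c ∈ E`. -/
def rightEndFilter (E : Set ℝ) : Filter ℝ :=
  ⨅ c ∈ E, Filter.principal {y ∈ E | c < y}

/-- The filter of "tails" of `E` at its left endpoint. -/
def leftEndFilter (E : Set ℝ) : Filter ℝ :=
  ⨅ c ∈ E, Filter.principal {y ∈ E | y < c}

/-- from `C²` at every nearby point, the derivative is differentiable. -/
lemma aux_diff_deriv {f : ℝ → ℝ} {x : ℝ} (h : ContDiffAt ℝ 2 f x) :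
    DifferentiableAt ℝ (deriv f) x := by
  obtain ⟨U, hU, hcd⟩ := h.contDiffOn (le_refl 2) (by norm_num)
  have h2 : ContDiffOn ℝ 1 (deriv f) (interior U) :=
    (hcd.mono interior_subset).deriv_of_isOpen isOpen_interior (by norm_num)
  exact (h2.differentiableOn (by norm_num)).differentiableAt
    (isOpen_interior.mem_nhds (mem_interior_iff_mem_nhds.mpr hU))

/-- at an interior local maximum, the second derivative is nonpositive. -/
lemma aux_second_deriv_nonpos {f : ℝ → ℝ} {x : ℝ}
    (hf : ∀ᶠ y in nhds x, DifferentiableAt ℝ f y)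
    (hf' : DifferentiableAt ℝ (deriv f) x)
    (hmax : IsLocalMax f x) : deriv (deriv f) x ≤ 0 := by
  by_contra hpos
  push_neg at hpos
  have hd0 : deriv f x = 0 := hmax.deriv_eq_zero
  have hda : Tendsto (slope (deriv f) x) (nhdsWithin x {x}ᶜ) (nhds (deriv (deriv f) x)) :=
    hasDerivAt_iff_tendsto_slope.mp hf'.hasDerivAt
  have hev : ∀ᶠ y in nhdsWithin x {x}ᶜ, 0 < slope (deriv f) x y :=
    hda.eventually (eventually_gt_nhds hpos)
  have hevR : ∀ᶠ y in nhdsWithin x (Set.Ioi x), 0 < deriv f y := by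
    have hmono : nhdsWithin x (Set.Ioi x) ≤ nhdsWithin x {x}ᶜ :=
      nhdsWithin_mono x (fun y hy => ne_of_gt hy)
    filter_upwards [hev.filter_mono hmono, eventually_mem_nhdsWithin] with y hs hy
    have h1 : slope (deriv f) x y = deriv f y / (y - x) := by
      rw [slope_def_field, hd0, sub_zero]
    rw [h1] at hs
    have hyx : 0 < y - x := sub_pos.mpr hy
    have := mul_pos hs hyx
    rwa [div_mul_cancel₀ _ (ne_of_gt hyx)] at this
  obtain ⟨v, hv, hIoo⟩ := mem_nhdsGT_iff_exists_Ioo_subset.mp hevR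
  obtain ⟨ε, hε, hball⟩ := Metric.eventually_nhds_iff.mp (hf.and hmax)
  set z := min (x + ε / 2) ((x + v) / 2) with hz
  have hxv : x < v := hv
  have hxz : x < z := lt_min (by linarith) (by linarith)
  have hzv : z < v := lt_of_le_of_lt (min_le_right _ _) (by linarith)
  have hzb : z - x < ε := by
    have := min_le_left (x + ε / 2) ((x + v) / 2)
    simp only [hz] at *
    linarith
  have hsub : ∀ y ∈ Set.Icc x z, dist y x < ε := by
    intro y hy
    rw [Real.dist_eq, abs_lt]
    constructor <;> [linarith [hy.1]; linarith [hy.2]]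
  have hsm : StrictMonoOn f (Set.Icc x z) := by
    apply strictMonoOn_of_deriv_pos (convex_Icc x z)
    · intro y hy
      exact ((hball (hsub y hy)).1).continuousAt.continuousWithinAt
    · intro y hy
      rw [interior_Icc] at hy
      exact hIoo ⟨hy.1, lt_trans hy.2 hzv⟩
  have h1 : f x < f z := hsm (left_mem_Icc.mpr hxz.le) (right_mem_Icc.mpr hxz.le) hxz
  have h2 : f z ≤ f x := (hball (hsub z (right_mem_Icc.mpr hxz.le))).2
  linarith

/-- Key comparison lemma: one-sided inequality between two solutions. -/
lemma aux_hjb_le (E : Set ℝ) (hEo : IsOpen E) (hEc : E.OrdConnected) (hEne : E.Nonempty)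
    (b atld η d : ℝ → ℝ) (hbne : ∀ y ∈ E, b y ≠ 0)
    (u ut : ℝ → ℝ)
    (huC2 : ∀ y ∈ E, ContDiffAt ℝ 2 u y) (hutC2 : ∀ y ∈ E, ContDiffAt ℝ 2 ut y)
    (hupos : ∀ y ∈ E, 0 < u y) (hutpos : ∀ y ∈ E, 0 < ut y)
    (huHJB : ∀ y ∈ E, (1 / 2) * (b y) ^ 2 * deriv (deriv u) y + atld y * deriv u y
      + η y * u y - (u y) ^ 2 - d y * (deriv u y) ^ 2 / u y = 0)
    (hutHJB : ∀ y ∈ E, (1 / 2) * (b y) ^ 2 * deriv (deriv ut) y + atld y * deriv ut y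
      + η y * ut y - (ut y) ^ 2 - d y * (deriv ut y) ^ 2 / ut y = 0)
    (hratioR : Filter.Tendsto (fun y => ut y / u y) (rightEndFilter E) (nhds 1))
    (hratioL : Filter.Tendsto (fun y => ut y / u y) (leftEndFilter E) (nhds 1)) :
    ∀ y ∈ E, ut y ≤ u y := by
  by_contra hcon
  push_neg at hcon
  obtain ⟨y1, hy1E, hy1⟩ := hcon
  set w : ℝ → ℝ := fun y => ut y / u y with hw
  have hw1 : 1 < w y1 := (one_lt_div (hupos y1 hy1E)).mpr hy1
  -- extract tails where w < w y1
  have hdirR : DirectedOn ((fun c => (Filter.principal {y | y ∈ E ∧ c < y} : Filter ℝ)) ⁻¹'o (· ≥ ·)) E := by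
    intro c hc c' hc'
    refine ⟨max c c', ?_, ?_, ?_⟩
    · rcases max_cases c c' with ⟨h, _⟩ | ⟨h, _⟩ <;> rw [h] <;> assumption
    · exact principal_mono.mpr fun y hy => ⟨hy.1, lt_of_le_of_lt (le_max_left _ _) hy.2⟩
    · exact principal_mono.mpr fun y hy => ⟨hy.1, lt_of_le_of_lt (le_max_right _ _) hy.2⟩
  have hdirL : DirectedOn ((fun c => (Filter.principal {y | y ∈ E ∧ y < c} : Filter ℝ)) ⁻¹'o (· ≥ ·)) E := by
    intro c hc c' hc'
    refine ⟨min c c', ?_, ?_, ?_⟩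
    · rcases min_cases c c' with ⟨h, _⟩ | ⟨h, _⟩ <;> rw [h] <;> assumption
    · exact principal_mono.mpr fun y hy => ⟨hy.1, lt_of_lt_of_le hy.2 (min_le_left _ _)⟩
    · exact principal_mono.mpr fun y hy => ⟨hy.1, lt_of_lt_of_le hy.2 (min_le_right _ _)⟩
  have hSR : {y | w y < w y1} ∈ rightEndFilter E := hratioR (Iio_mem_nhds hw1)
  have hSL : {y | w y < w y1} ∈ leftEndFilter E := hratioL (Iio_mem_nhds hw1)
  rw [rightEndFilter, Filter.mem_biInf_of_directed hdirR hEne] at hSR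
  rw [leftEndFilter, Filter.mem_biInf_of_directed hdirL hEne] at hSL
  obtain ⟨cR, hcRE, hcR⟩ := hSR
  obtain ⟨cL, hcLE, hcL⟩ := hSL
  rw [Filter.mem_principal] at hcR hcL
  have hy1cR : y1 ≤ cR := by
    by_contra h
    push_neg at h
    have := hcR ⟨hy1E, h⟩
    simp only [Set.mem_setOf_eq] at this
    exact lt_irrefl _ this
  have hy1cL : cL ≤ y1 := by
    by_contra h
    push_neg at h
    have := hcL ⟨hy1E, h⟩
    simp only [Set.mem_setOf_eq] at this
    exact lt_irrefl _ this
  have hKsub : Set.Icc cL cR ⊆ E := hEc.out hcLE hcRE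
  have hcontw : ContinuousOn w (Set.Icc cL cR) := fun y hy =>
    (((hutC2 y (hKsub hy)).continuousAt.div (huC2 y (hKsub hy)).continuousAt
      (ne_of_gt (hupos y (hKsub hy))))).continuousWithinAt
  obtain ⟨y0, hy0K, hy0max⟩ := isCompact_Icc.exists_isMaxOn ⟨y1, hy1cL, hy1cR⟩ hcontw
  have hy0E : y0 ∈ E := hKsub hy0K
  have hw0y1 : w y1 ≤ w y0 := hy0max ⟨hy1cL, hy1cR⟩
  have hmaxE : ∀ y ∈ E, w y ≤ w y0 := by
    intro y hyE
    by_cases h1 : cL ≤ y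
    · by_cases h2 : y ≤ cR
      · exact hy0max ⟨h1, h2⟩
      · push_neg at h2
        exact le_trans (hcR ⟨hyE, h2⟩).le hw0y1
    · push_neg at h1
      exact le_trans (hcL ⟨hyE, h1⟩).le hw0y1
  set w0 := w y0 with hw0def
  have hw0 : 1 < w0 := lt_of_lt_of_le hw1 hw0y1
  have hu0 : u y0 ≠ 0 := ne_of_gt (hupos y0 hy0E)
  have hut0 : ut y0 = w0 * u y0 := by
    rw [hw0def, hw]
    field_simp
  set g : ℝ → ℝ := fun y => ut y - w0 * u y with hg
  have hEnh : E ∈ nhds y0 := hEo.mem_nhds hy0E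
  have hg0 : g y0 = 0 := by rw [hg]; simp only; rw [hut0]; ring
  have hgmax : IsLocalMax g y0 := by
    filter_upwards [hEnh] with y hyE
    have h0 : ut y / u y ≤ w0 := hmaxE y hyE
    have h1 : ut y ≤ w0 * u y := (div_le_iff₀ (hupos y hyE)).mp h0
    show ut y - w0 * u y ≤ g y0
    rw [hg0]
    linarith
  -- differentiability facts
  have hud : ∀ y ∈ E, DifferentiableAt ℝ u y := fun y hy =>
    (huC2 y hy).differentiableAt (by norm_num)
  have hutd : ∀ y ∈ E, DifferentiableAt ℝ ut y := fun y hy =>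
    (hutC2 y hy).differentiableAt (by norm_num)
  have hgderiv : ∀ y ∈ E, deriv g y = deriv ut y - w0 * deriv u y := by
    intro y hy
    rw [hg]
    rw [deriv_fun_sub (hutd y hy) ((hud y hy).const_mul w0), deriv_const_mul w0 (hud y hy)]
  have hgd : ∀ y ∈ E, DifferentiableAt ℝ g y := fun y hy =>
    (hutd y hy).sub ((hud y hy).const_mul w0)
  have hdu' : DifferentiableAt ℝ (deriv u) y0 := aux_diff_deriv (huC2 y0 hy0E)
  have hdut' : DifferentiableAt ℝ (deriv ut) y0 := aux_diff_deriv (hutC2 y0 hy0E)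
  have heq : deriv g =ᶠ[nhds y0] fun y => deriv ut y - w0 * deriv u y :=
    Filter.eventually_of_mem hEnh hgderiv
  have hgd' : DifferentiableAt ℝ (deriv g) y0 :=
    (Filter.EventuallyEq.differentiableAt_iff heq).mpr (hdut'.sub (hdu'.const_mul w0))
  have hg'' : deriv (deriv g) y0 = deriv (deriv ut) y0 - w0 * deriv (deriv u) y0 := by
    rw [heq.deriv_eq, deriv_fun_sub hdut' (hdu'.const_mul w0), deriv_const_mul w0 hdu']
  have hg''le : deriv (deriv g) y0 ≤ 0 :=
    aux_second_deriv_nonpos (Filter.eventually_of_mem hEnh hgd) hgd' hgmax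
  have hg'0 : deriv g y0 = 0 := hgmax.deriv_eq_zero
  have hut' : deriv ut y0 = w0 * deriv u y0 := by
    have := hgderiv y0 hy0E
    rw [hg'0] at this
    linarith
  -- the HJB equations
  have e1 := huHJB y0 hy0E
  have e2 := hutHJB y0 hy0E
  have hw0ne : w0 ≠ 0 := by linarith
  rw [hut0, hut'] at e2
  have hdiv : d y0 * (w0 * deriv u y0) ^ 2 / (w0 * u y0)
      = w0 * (d y0 * (deriv u y0) ^ 2 / u y0) := by
    field_simp
  rw [hdiv] at e2
  have hkey : (1 / 2) * (b y0) ^ 2 * (deriv (deriv ut) y0 - w0 * deriv (deriv u) y0)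
      = w0 * (w0 - 1) * (u y0) ^ 2 := by
    linear_combination e2 - w0 * e1
  have hb2 : 0 < (b y0) ^ 2 := by
    have := hbne y0 hy0E
    positivity
  have hupos0 := hupos y0 hy0E
  nlinarith [hkey, hg''le, hg'', hb2, hupos0, hw0, sq_nonneg (u y0),
    mul_pos (mul_pos (by linarith : (0:ℝ) < w0) (by linarith : (0:ℝ) < w0 - 1))
      (pow_pos hupos0 2)]

/-- two global positive solutions `u`, `ũ` of the HJB equation on the open
interval `E` whose ratio tends to `1` at both endpoints of `E` coincide. -/
theorem statement12
    (E : Set ℝ) (hEo : IsOpen E) (hEc : E.OrdConnected) (hEne : E.Nonempty)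
    (R : ℝ) (hR : 0 < R) (hR1 : R ≠ 1)
    (r lam sigma a b rho delta : ℝ → ℝ)
    (hrlip : LocallyLipschitzOn E r) (hlamlip : LocallyLipschitzOn E lam)
    (hsigmalip : LocallyLipschitzOn E sigma) (halip : LocallyLipschitzOn E a)
    (hblip : LocallyLipschitzOn E b) (hrholip : LocallyLipschitzOn E rho)
    (hdeltalip : LocallyLipschitzOn E delta)
    (hbne : ∀ y ∈ E, b y ≠ 0) (hsigmapos : ∀ y ∈ E, 0 < sigma y)
    (hrho : ∀ y ∈ E, rho y ∈ Icc (-1 : ℝ) 1)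
    (η atld d : ℝ → ℝ)
    (hηdef : ∀ y, η y = (1 / R) * (delta y - (1 - R) * (r y + (lam y) ^ 2 / (2 * R))))
    (hatlddef : ∀ y, atld y = a y + ((1 - R) / R) * rho y * lam y * b y)
    (hddef : ∀ y, d y = (1 / 2) * (b y) ^ 2 * ((1 - (rho y) ^ 2) * R + (rho y) ^ 2 + 1))
    (u ut : ℝ → ℝ)
    (huC2 : ∀ y ∈ E, ContDiffAt ℝ 2 u y) (hutC2 : ∀ y ∈ E, ContDiffAt ℝ 2 ut y)
    (hupos : ∀ y ∈ E, 0 < u y) (hutpos : ∀ y ∈ E, 0 < ut y)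
    (huHJB : ∀ y ∈ E, (1 / 2) * (b y) ^ 2 * deriv (deriv u) y + atld y * deriv u y
      + η y * u y - (u y) ^ 2 - d y * (deriv u y) ^ 2 / u y = 0)
    (hutHJB : ∀ y ∈ E, (1 / 2) * (b y) ^ 2 * deriv (deriv ut) y + atld y * deriv ut y
      + η y * ut y - (ut y) ^ 2 - d y * (deriv ut y) ^ 2 / ut y = 0)
    (hratioR : Filter.Tendsto (fun y => ut y / u y) (rightEndFilter E) (nhds 1))
    (hratioL : Filter.Tendsto (fun y => ut y / u y) (leftEndFilter E) (nhds 1)) :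
    ∀ y ∈ E, u y = ut y := by
  have h1 : ∀ y ∈ E, ut y ≤ u y :=
    aux_hjb_le E hEo hEc hEne b atld η d hbne u ut huC2 hutC2 hupos hutpos huHJB hutHJB
      hratioR hratioL
  have hratioR' : Filter.Tendsto (fun y => u y / ut y) (rightEndFilter E) (nhds 1) := by
    have := hratioR.inv₀ one_ne_zero
    simpa [inv_div] using this
  have hratioL' : Filter.Tendsto (fun y => u y / ut y) (leftEndFilter E) (nhds 1) := by
    have := hratioL.inv₀ one_ne_zero
    simpa [inv_div] using this
  have h2 : ∀ y ∈ E, u y ≤ ut y :=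
    aux_hjb_le E hEo hEc hEne b atld η d hbne ut u hutC2 huC2 hutpos hupos hutHJB huHJB
      hratioR' hratioL'
  exact fun y hy => le_antisymm (h2 y hy) (h1 y hy)
end

section
/- Suppose E = (E₋, ∞) and let u be a positive solution of the HJB equation (1/2)b²u'' + ã u' + η u − u² − d (u')²/u = 0 on [y₀,∞) satisfying C₁η ≤ u ≤ C₂η for some constants 0 < C₁ < C₂. If Assumption (A) holds at y₀, then u(y)/η(y) → 1 as y → ∞. -/
open Set Filter Topology Real

section AuxiliaryLemmas

/-- Second derivative test: at a local maximum of a twice differentiable function,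
the second derivative is nonpositive. -/
lemma deriv_deriv_nonpos_of_isLocalMax {f : ℝ → ℝ} {x : ℝ}
    (hf : ∀ᶠ z in 𝓝 x, DifferentiableAt ℝ f z)
    (hf' : DifferentiableAt ℝ (deriv f) x)
    (hmax : IsLocalMax f x) : deriv (deriv f) x ≤ 0 := by
  by_contra hpos
  push_neg at hpos
  have h0 : deriv f x = 0 := hmax.deriv_eq_zero
  have hslope : Tendsto (slope (deriv f) x) (𝓝[≠] x) (𝓝 (deriv (deriv f) x)) :=
    hasDerivAt_iff_tendsto_slope.1 hf'.hasDerivAt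
  have hslope' : ∀ᶠ z in 𝓝[>] x, 0 < slope (deriv f) x z :=
    (hslope.mono_left (nhdsWithin_mono x fun z hz => ne_of_gt hz)).eventually
      (eventually_gt_nhds hpos)
  have hpos' : ∀ᶠ z in 𝓝[>] x, 0 < deriv f z := by
    filter_upwards [hslope', self_mem_nhdsWithin] with z hz hz'
    have : slope (deriv f) x z = deriv f z / (z - x) := by
      simp [slope, h0, div_eq_inv_mul]
    rw [this] at hz
    have hzx : 0 < z - x := sub_pos.2 hz'
    by_contra hle
    push_neg at hle
    nlinarith [div_nonpos_of_nonpos_of_nonneg hle hzx.le]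
  have hdiff : ∀ᶠ z in 𝓝[>] x, DifferentiableAt ℝ f z := hf.filter_mono nhdsWithin_le_nhds
  have hle : ∀ᶠ z in 𝓝[>] x, f z ≤ f x := hmax.filter_mono nhdsWithin_le_nhds
  obtain ⟨ε, hε, hprop⟩ := (nhdsGT_basis x).eventually_iff.1 (hpos'.and (hdiff.and hle))
  set m := (x + ε) / 2 with hm
  have hxm : x < m := by simp [hm]; linarith
  have hmε : m < ε := by simp [hm]; linarith
  have hsub : Ioc x m ⊆ Ioo x ε := fun z hz => ⟨hz.1, lt_of_le_of_lt hz.2 hmε⟩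
  have hcont : ContinuousOn f (Icc x m) := by
    intro z hz
    rcases eq_or_lt_of_le hz.1 with h | h
    · subst h; exact hf.self_of_nhds.continuousAt.continuousWithinAt
    · exact ((hprop ⟨h, lt_of_le_of_lt hz.2 hmε⟩).2.1.continuousAt).continuousWithinAt
  have hmono : StrictMonoOn f (Icc x m) := by
    apply strictMonoOn_of_deriv_pos (convex_Icc x m) hcont
    intro z hz
    rw [interior_Icc] at hz
    exact (hprop (hsub ⟨hz.1, hz.2.le⟩)).1
  have : f x < f m := hmono (left_mem_Icc.2 hxm.le) (right_mem_Icc.2 hxm.le) hxm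
  have : f m ≤ f x := (hprop (hsub ⟨hxm, le_refl m⟩)).2.2
  linarith

lemma deriv_deriv_nonneg_of_isLocalMin {f : ℝ → ℝ} {x : ℝ}
    (hf : ∀ᶠ z in 𝓝 x, DifferentiableAt ℝ f z)
    (hf' : DifferentiableAt ℝ (deriv f) x)
    (hmin : IsLocalMin f x) : 0 ≤ deriv (deriv f) x := by
  have hneg : ∀ᶠ z in 𝓝 x, DifferentiableAt ℝ (fun y => -f y) z := by
    filter_upwards [hf] with z hz; exact hz.neg
  have hderiv : deriv (fun y => -f y) = fun y => -deriv f y := by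
    funext y; exact deriv.neg
  have hf'' : DifferentiableAt ℝ (deriv (fun y => -f y)) x := by
    rw [hderiv]; exact hf'.neg
  have := deriv_deriv_nonpos_of_isLocalMax hneg hf'' hmin.neg
  rw [hderiv] at this
  have h2 : deriv (fun y => -deriv f y) x = -deriv (deriv f) x := deriv.neg
  rw [h2] at this
  linarith

noncomputable def pen (c : ℝ) (y : ℝ) : ℝ := (4 / π) * (1 - Real.cos ((π / 4) * (y - c)))

lemma pen_nonneg (c y : ℝ) : 0 ≤ pen c y := by
  have h1 : Real.cos ((π / 4) * (y - c)) ≤ 1 := Real.cos_le_one _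
  have h2 : (0:ℝ) < π := Real.pi_pos
  have : (0:ℝ) < 4 / π := by positivity
  unfold pen; nlinarith

lemma pen_self (c : ℝ) : pen c c = 0 := by
  unfold pen; simp

lemma pen_le (c y : ℝ) : pen c y ≤ 8 / π := by
  have h1 : -1 ≤ Real.cos ((π / 4) * (y - c)) := Real.neg_one_le_cos _
  have h2 : (0:ℝ) < π := Real.pi_pos
  have : (0:ℝ) < 4 / π := by positivity
  unfold pen
  rw [div_mul_eq_mul_div, show (8:ℝ)/π = 4 * 2 / π by ring, mul_div_assoc, mul_div_assoc]
  gcongr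
  linarith

lemma pen_endpoint_ge (c y : ℝ) (h : |y - c| = 4) : 2 < pen c y := by
  have h2 : (0:ℝ) < π := Real.pi_pos
  have hπ4 : π < 4 := by linarith [Real.pi_lt_d2]
  have hcos : Real.cos ((π / 4) * (y - c)) = -1 := by
    rcases abs_eq (by norm_num : (0:ℝ) ≤ 4) |>.1 h with h' | h'
    · rw [h', show π / 4 * 4 = π by ring, Real.cos_pi]
    · rw [h', show π / 4 * (-4) = -π by ring, Real.cos_neg, Real.cos_pi]
  unfold pen
  rw [hcos]
  rw [show (1:ℝ) - -1 = 2 by norm_num]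
  rw [div_mul_eq_mul_div, lt_div_iff₀ h2]
  nlinarith

lemma hasDerivAt_pen (c y : ℝ) : HasDerivAt (pen c) (Real.sin ((π / 4) * (y - c))) y := by
  have h2 : (0:ℝ) < π := Real.pi_pos
  have hg : HasDerivAt (fun z => (π / 4) * (z - c)) (π / 4) y := by
    simpa using ((hasDerivAt_id y).sub_const c).const_mul (π / 4)
  have hcos : HasDerivAt (fun z => Real.cos ((π / 4) * (z - c)))
      (-Real.sin ((π / 4) * (y - c)) * (π / 4)) y :=
    (Real.hasDerivAt_cos _).comp y hg
  have := ((hasDerivAt_const y (1:ℝ)).sub hcos).const_mul (4 / π)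
  refine this.congr_deriv ?_
  field_simp
  ring

lemma hasDerivAt_pen' (c y : ℝ) :
    HasDerivAt (fun z => Real.sin ((π / 4) * (z - c))) ((π / 4) * Real.cos ((π / 4) * (y - c))) y := by
  have hg : HasDerivAt (fun z => (π / 4) * (z - c)) (π / 4) y := by
    simpa using ((hasDerivAt_id y).sub_const c).const_mul (π / 4)
  have := (Real.hasDerivAt_sin ((π / 4) * (y - c))).comp y hg
  refine this.congr_deriv ?_
  ring

lemma deriv_pen (c y : ℝ) : deriv (pen c) y = Real.sin ((π / 4) * (y - c)) :=
  (hasDerivAt_pen c y).deriv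

lemma deriv_deriv_pen (c y : ℝ) :
    deriv (deriv (pen c)) y = (π / 4) * Real.cos ((π / 4) * (y - c)) := by
  have : deriv (pen c) = fun z => Real.sin ((π / 4) * (z - c)) := funext fun z => deriv_pen c z
  rw [this]
  exact (hasDerivAt_pen' c y).deriv

lemma abs_deriv_pen_le (c y : ℝ) : |deriv (pen c) y| ≤ 1 := by
  rw [deriv_pen]; exact abs_sin_le_one _

lemma abs_deriv_deriv_pen_le (c y : ℝ) : |deriv (deriv (pen c)) y| ≤ 1 := by
  rw [deriv_deriv_pen]
  have h2 : (0:ℝ) < π := Real.pi_pos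
  have hπ4 : π < 4 := by linarith [Real.pi_lt_d2]
  rw [abs_mul]
  have h3 : |π / 4| = π / 4 := abs_of_pos (by positivity)
  have := abs_cos_le_one ((π / 4) * (y - c))
  nlinarith [abs_nonneg (Real.cos ((π / 4) * (y - c)))]

lemma algebra_key (V V1 V2 H H1 H2 At B2 D : ℝ) (hH : H ≠ 0) (hV : V ≠ 0)
    (hjb : (1/2)*B2*(V2*H+2*V1*H1+V*H2) + At*(V1*H+V*H1) + H*(V*H) - (V*H)^2
      - D*(V1*H+V*H1)^2/(V*H) = 0) :
    V*(V - (1 + ((1/2)*B2*H2 + At*H1)/H^2 - D*H1^2/H^3))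
      = (1/2)*(B2/H)*V2 + (At/H + (B2/H)*(H1/H))*V1 - (D/H)*(V1^2/V) - 2*(D/H)*(H1/H)*V1 := by
  have h2 : (1/2)*B2*(V2*H+2*V1*H1+V*H2)*(V*H) + At*(V1*H+V*H1)*(V*H) + H*(V*H)*(V*H)
      - (V*H)^2*(V*H) - D*(V1*H+V*H1)^2 = 0 := by
    have h3 := congrArg (· * (V*H)) hjb
    simp only [zero_mul] at h3
    rw [sub_mul, sub_mul, add_mul, add_mul, div_mul_cancel₀] at h3
    · linarith
    · exact mul_ne_zero hV hH
  rw [← sub_eq_zero]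
  have hne : V * H^3 ≠ 0 := mul_ne_zero hV (pow_ne_zero 3 hH)
  have h4 : (V*(V - (1 + ((1/2)*B2*H2 + At*H1)/H^2 - D*H1^2/H^3))
      - ((1/2)*(B2/H)*V2 + (At/H + (B2/H)*(H1/H))*V1 - (D/H)*(V1^2/V) - 2*(D/H)*(H1/H)*V1))
      * (V * H^3) = 0 := by
    field_simp
    linear_combination (-2:ℝ) * h2
  rcases mul_eq_zero.1 h4 with h | h
  · exact h
  · exact absurd h hne

set_option maxHeartbeats 1600000 in
lemma point_bounds (M R C₁ δ V V1 V2 H H1 At B2 D Ψ : ℝ)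
    (hδ : 0 < δ) (hδ1 : δ ≤ 1)
    (hH : 0 < H) (hC₁ : 0 < C₁) (hV : C₁ ≤ V)
    (hB2 : 0 ≤ B2) (hB2M : B2 / H ≤ M) (hAt : |At / H| ≤ M) (hH1 : |H1 / H| ≤ M)
    (hD0 : 0 ≤ D) (hDle : D ≤ (1/2) * B2 * (R + 2)) (hR : 0 < R)
    (hid : V * (V - Ψ) = (1/2)*(B2/H)*V2 + (At/H + (B2/H)*(H1/H))*V1
      - (D/H)*(V1^2/V) - 2*(D/H)*(H1/H)*V1)
    (hV1 : |V1| ≤ δ) :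
    (V2 ≤ δ → V ≤ Ψ + (M/2 + M + M^2 + (R+2)*M^2 + (R+2)*M/(2*C₁)) * δ / C₁) ∧
    (-δ ≤ V2 → Ψ - (M/2 + M + M^2 + (R+2)*M^2 + (R+2)*M/(2*C₁)) * δ / C₁ ≤ V) := by
  obtain ⟨K, hK⟩ : ∃ K : ℝ, K = M/2 + M + M^2 + (R+2)*M^2 + (R+2)*M/(2*C₁) := ⟨_, rfl⟩
  rw [← hK]
  have hM0 : 0 ≤ M := le_trans (abs_nonneg _) hAt
  have hB2H0 : 0 ≤ B2 / H := div_nonneg hB2 hH.le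
  have hDH0 : 0 ≤ D / H := div_nonneg hD0 hH.le
  have hV0 : 0 < V := lt_of_lt_of_le hC₁ hV
  have hDH : D / H ≤ (1/2)*(R+2)*M := by
    have h1 : D / H ≤ ((1/2) * B2 * (R + 2)) / H := div_le_div_of_nonneg_right hDle hH.le
    have h2 : ((1/2) * B2 * (R + 2)) / H = (1/2) * (R+2) * (B2 / H) := by ring
    rw [h2] at h1
    nlinarith
  have hMM : 0 ≤ M + M*M := by nlinarith [mul_nonneg hM0 hM0]
  have hRM : 0 ≤ (1/2)*(R+2)*M := mul_nonneg (mul_nonneg (by norm_num) (by linarith)) hM0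
  have hH1' : -M ≤ H1 / H ∧ H1 / H ≤ M := abs_le.1 hH1
  have hAt' : -M ≤ At / H ∧ At / H ≤ M := abs_le.1 hAt
  have hV1' : -δ ≤ V1 ∧ V1 ≤ δ := abs_le.1 hV1
  -- |middle coefficient| bound
  have habs2 : |At/H + (B2/H)*(H1/H)| ≤ M + M*M := by
    refine (abs_add_le _ _).trans ?_
    have h5 : |(B2/H)*(H1/H)| ≤ M * M := by
      rw [abs_mul]
      have h6 : |B2/H| = B2/H := abs_of_nonneg hB2H0
      rw [h6]
      exact mul_le_mul hB2M hH1 (abs_nonneg _) hM0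
    linarith
  have habsT2 : |(At/H + (B2/H)*(H1/H))*V1| ≤ (M + M*M)*δ := by
    rw [abs_mul]
    exact mul_le_mul habs2 hV1 (abs_nonneg _) hMM
  have hT2u : (At/H + (B2/H)*(H1/H))*V1 ≤ (M + M*M)*δ :=
    le_trans (le_abs_self _) habsT2
  have hT2l : -((M + M*M)*δ) ≤ (At/H + (B2/H)*(H1/H))*V1 := by
    have := neg_abs_le ((At/H + (B2/H)*(H1/H))*V1)
    linarith
  -- T4 bound
  have habsT4 : |2*(D/H)*(H1/H)*V1| ≤ (R+2)*M^2*δ := by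
    have e2 : |2*(D/H)*(H1/H)*V1| = 2 * ((D/H) * (|H1/H| * |V1|)) := by
      rw [abs_mul, abs_mul, abs_mul]
      rw [abs_of_nonneg hDH0, abs_of_nonneg (by norm_num : (0:ℝ) ≤ 2)]
      ring
    rw [e2]
    have h3 : |H1/H| * |V1| ≤ M * δ := mul_le_mul hH1 hV1 (abs_nonneg _) hM0
    have h4 : (D/H) * (|H1/H| * |V1|) ≤ ((1/2)*(R+2)*M) * (M*δ) :=
      mul_le_mul hDH h3 (by positivity) hRM
    linarith
  have hT4u : -(2*(D/H)*(H1/H)*V1) ≤ (R+2)*M^2*δ := by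
    have := neg_abs_le (2*(D/H)*(H1/H)*V1)
    have := le_abs_self (2*(D/H)*(H1/H)*V1)
    linarith
  have hT4l : -((R+2)*M^2*δ) ≤ -(2*(D/H)*(H1/H)*V1) := by
    have := le_abs_self (2*(D/H)*(H1/H)*V1)
    linarith
  -- T3 bounds
  have hT3u : -((D/H)*(V1^2/V)) ≤ 0 := by
    have : 0 ≤ (D/H)*(V1^2/V) := mul_nonneg hDH0 (div_nonneg (sq_nonneg V1) hV0.le)
    linarith
  have hT3l : -((R+2)*M/(2*C₁)*δ) ≤ -((D/H)*(V1^2/V)) := by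
    have hV1sq : V1^2 ≤ δ^2 := by rw [← sq_abs]; exact pow_le_pow_left₀ (abs_nonneg _) hV1 2
    have hVinv : V1^2/V ≤ δ^2/C₁ := div_le_div₀ (by positivity) hV1sq hC₁ hV
    have h1 : (D/H)*(V1^2/V) ≤ ((1/2)*(R+2)*M) * (δ^2/C₁) :=
      mul_le_mul hDH hVinv (div_nonneg (sq_nonneg V1) hV0.le) hRM
    have hnum : 0 ≤ ((R+2)*M*δ*(1-δ))/(2*C₁) := by
      apply div_nonneg _ (by linarith)
      have b1 : (0:ℝ) ≤ (R+2)*M := mul_nonneg (by linarith) hM0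
      have b2 : (0:ℝ) ≤ (R+2)*M*δ := mul_nonneg b1 hδ.le
      exact mul_nonneg b2 (by linarith)
    have e : (R+2)*M/(2*C₁)*δ - ((1/2)*(R+2)*M) * (δ^2/C₁) = ((R+2)*M*δ*(1-δ))/(2*C₁) := by
      field_simp
    linarith
  have hK0 : 0 ≤ K := by
    rw [hK]
    have b1 : (0:ℝ) ≤ (R+2)*M^2 := mul_nonneg (by linarith) (sq_nonneg M)
    have b2 : (0:ℝ) ≤ (R+2)*M/(2*C₁) := div_nonneg (mul_nonneg (by linarith) hM0) (by linarith)
    nlinarith [sq_nonneg M]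
  have hKδC : 0 ≤ K * δ / C₁ := div_nonneg (mul_nonneg hK0 hδ.le) hC₁.le
  constructor
  · intro hV2
    have hT1 : (1/2)*(B2/H)*V2 ≤ (1/2)*M*δ := by
      nlinarith [mul_le_mul_of_nonneg_left hV2 hB2H0, mul_le_mul_of_nonneg_right hB2M hδ.le]
    have hprod : V * (V - Ψ) ≤ K * δ := by
      rw [hid, hK]
      have hextra : 0 ≤ (R+2)*M/(2*C₁) * δ := by
        apply mul_nonneg _ hδ.le
        exact div_nonneg (mul_nonneg (by linarith) hM0) (by linarith)
      linarith [hT1, hT2u, hT3u, hT4u, hextra]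
    by_cases hc : V ≤ Ψ
    · linarith
    · push_neg at hc
      have h1 : C₁ * (V - Ψ) ≤ V * (V - Ψ) := mul_le_mul_of_nonneg_right hV (by linarith)
      have h3 : V - Ψ ≤ K*δ/C₁ := by rw [le_div_iff₀ hC₁]; linarith
      linarith
  · intro hV2
    have hT1 : -((1/2)*M*δ) ≤ (1/2)*(B2/H)*V2 := by
      nlinarith [mul_le_mul_of_nonneg_left hV2 hB2H0, mul_le_mul_of_nonneg_right hB2M hδ.le]
    have hprod : V * (Ψ - V) ≤ K * δ := by
      have h7 : -(K*δ) ≤ V * (V - Ψ) := by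
        rw [hid, hK]
        linarith [hT1, hT2l, hT3l, hT4l]
      nlinarith [h7]
    by_cases hc : Ψ ≤ V
    · linarith
    · push_neg at hc
      have h1 : C₁ * (Ψ - V) ≤ V * (Ψ - V) := mul_le_mul_of_nonneg_right hV (by linarith)
      have h3 : Ψ - V ≤ K*δ/C₁ := by rw [le_div_iff₀ hC₁]; linarith
      linarith

lemma exists_max_point (v : ℝ → ℝ) (y₀ δ L yh : ℝ)
    (hδ : 0 < δ)
    (hyh : y₀ < yh - 4)
    (hcont : ContinuousOn v (Icc (yh-4) (yh+4)))
    (hvdiff : ∀ y ∈ Ioi y₀, DifferentiableAt ℝ v y)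
    (hv'diff : ∀ y ∈ Ioi y₀, DifferentiableAt ℝ (deriv v) y)
    (hub : ∀ y ∈ Icc (yh-4) (yh+4), v y < L + δ)
    (hlb : L - δ < v yh) :
    ∃ x ∈ Icc (yh-4) (yh+4), L - δ < v x ∧ |deriv v x| ≤ δ ∧ deriv (deriv v) x ≤ δ := by
  set w : ℝ → ℝ := fun y => v y - δ * pen yh y with hw
  have hpencont : ∀ z : ℝ, ContinuousAt (pen yh) z := fun z =>
    (hasDerivAt_pen yh z).differentiableAt.continuousAt
  have hwcont : ContinuousOn w (Icc (yh-4) (yh+4)) := by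
    apply hcont.sub
    exact (continuous_const.mul (continuous_iff_continuousAt.2 (hpencont))).continuousOn
  have hne : (Icc (yh-4) (yh+4)).Nonempty := ⟨yh, by constructor <;> linarith⟩
  obtain ⟨x, hxmem, hxmax⟩ := isCompact_Icc.exists_isMaxOn hne hwcont
  have hyhmem : yh ∈ Icc (yh-4) (yh+4) := ⟨by linarith, by linarith⟩
  have hwyh : w yh = v yh := by rw [hw]; simp [pen_self]
  have hwx : w yh ≤ w x := hxmax hyhmem
  have hvx : L - δ < v x := by
    have h1 : w x ≤ v x := by
      rw [hw]
      have := pen_nonneg yh x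
      simp only
      nlinarith
    rw [hwyh] at hwx
    linarith
  have hxint : x ∈ Ioo (yh-4) (yh+4) := by
    rcases hxmem.1.lt_or_eq with h1 | h1
    · rcases hxmem.2.lt_or_eq with h2 | h2
      · exact ⟨h1, h2⟩
      · exfalso
        have hpe : 2 < pen yh x := pen_endpoint_ge yh x (by rw [h2]; rw [abs_of_nonneg] <;> linarith)
        have : w x < L + δ - 2*δ := by
          have := hub x hxmem
          simp only [hw]
          nlinarith
        rw [hwyh] at hwx
        linarith
    · exfalso
      have hpe : 2 < pen yh x := pen_endpoint_ge yh x (by rw [← h1]; rw [abs_of_nonpos] <;> linarith)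
      have : w x < L + δ - 2*δ := by
        have := hub x hxmem
        simp only [hw]
        nlinarith
      rw [hwyh] at hwx
      linarith
  have hxIoi : x ∈ Ioi y₀ := lt_trans hyh hxint.1
  have hloc : IsLocalMax w x := hxmax.isLocalMax (Icc_mem_nhds hxint.1 hxint.2)
  have hO : Ioi y₀ ∈ 𝓝 x := Ioi_mem_nhds hxIoi
  have hwdiff : ∀ z ∈ Ioi y₀, DifferentiableAt ℝ w z := fun z hz =>
    (hvdiff z hz).sub ((hasDerivAt_pen yh z).differentiableAt.const_mul δ)
  have hderivw : ∀ z ∈ Ioi y₀, deriv w z = deriv v z - δ * Real.sin ((π / 4) * (z - yh)) := by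
    intro z hz
    have h1 : HasDerivAt w (deriv v z - δ * Real.sin ((π / 4) * (z - yh))) z :=
      ((hvdiff z hz).hasDerivAt).sub ((hasDerivAt_pen yh z).const_mul δ)
    exact h1.deriv
  have hweq : deriv w =ᶠ[𝓝 x] fun z => deriv v z - δ * Real.sin ((π / 4) * (z - yh)) :=
    eventually_of_mem hO hderivw
  have hw'diff : DifferentiableAt ℝ (deriv w) x := by
    rw [hweq.differentiableAt_iff]
    exact (hv'diff x hxIoi).sub ((hasDerivAt_pen' yh x).differentiableAt.const_mul δ)
  have hd1 : deriv w x = 0 := hloc.deriv_eq_zero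
  have hd1' : deriv v x = δ * Real.sin ((π / 4) * (x - yh)) := by
    have := hderivw x hxIoi
    rw [hd1] at this
    linarith
  have habs1 : |deriv v x| ≤ δ := by
    rw [hd1', abs_mul, abs_of_pos hδ]
    nlinarith [abs_sin_le_one ((π / 4) * (x - yh)), abs_nonneg (Real.sin ((π / 4) * (x - yh)))]
  have hd2 : deriv (deriv w) x ≤ 0 :=
    deriv_deriv_nonpos_of_isLocalMax (eventually_of_mem hO hwdiff) hw'diff hloc
  have hd2' : deriv (deriv w) x
      = deriv (deriv v) x - δ * ((π / 4) * Real.cos ((π / 4) * (x - yh))) := by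
    rw [hweq.deriv_eq]
    have h1 : HasDerivAt (fun z => deriv v z - δ * Real.sin ((π / 4) * (z - yh)))
        (deriv (deriv v) x - δ * ((π / 4) * Real.cos ((π / 4) * (x - yh)))) x :=
      ((hv'diff x hxIoi).hasDerivAt).sub ((hasDerivAt_pen' yh x).const_mul δ)
    exact h1.deriv
  have hd2'' : deriv (deriv v) x ≤ δ := by
    rw [hd2'] at hd2
    have hπ : π < 4 := by linarith [Real.pi_lt_d2]
    have hπ0 : 0 < π := Real.pi_pos
    have hcle : Real.cos ((π / 4) * (x - yh)) ≤ 1 := Real.cos_le_one _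
    have h5 : δ * (π / 4 * Real.cos ((π / 4) * (x - yh))) ≤ δ * (π/4) := by
      apply mul_le_mul_of_nonneg_left _ hδ.le
      have := mul_le_mul_of_nonneg_left hcle (by positivity : (0:ℝ) ≤ π/4)
      linarith
    have h6 : δ * (π/4) ≤ δ * 1 := mul_le_mul_of_nonneg_left (by linarith) hδ.le
    linarith
  exact ⟨x, hxmem, hvx, habs1, hd2''⟩
end AuxiliaryLemmas

noncomputable def PsiW (b atld d : ℝ → ℝ) (S : Set ℝ) (g : ℝ → ℝ) : ℝ → ℝ := fun y =>
  1 + ((1 / 2) * (b y) ^ 2 * derivWithin (derivWithin g S) S y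
      + atld y * derivWithin g S y) / (g y) ^ 2
    - d y * (derivWithin g S y) ^ 2 / (g y) ^ 3

/-- under Assumption (A), a positive solution of the HJB equation on
`[y₀, ∞)` with `C₁ η ≤ u ≤ C₂ η` satisfies `u / η → 1` at `∞`. -/
theorem statement13
    (E : Set ℝ) (hE : E = Set.univ ∨ ∃ c : ℝ, E = Set.Ioi c)
    (R : ℝ) (hR : 0 < R) (hR1 : R ≠ 1)
    (r lam sigma a b rho delta : ℝ → ℝ)
    (hrlip : LocallyLipschitzOn E r) (hlamlip : LocallyLipschitzOn E lam)
    (hsigmalip : LocallyLipschitzOn E sigma) (halip : LocallyLipschitzOn E a)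
    (hblip : LocallyLipschitzOn E b) (hrholip : LocallyLipschitzOn E rho)
    (hdeltalip : LocallyLipschitzOn E delta)
    (hbne : ∀ y ∈ E, b y ≠ 0) (hsigmapos : ∀ y ∈ E, 0 < sigma y)
    (hrho : ∀ y ∈ E, rho y ∈ Icc (-1 : ℝ) 1)
    (η atld d : ℝ → ℝ)
    (hηdef : ∀ y, η y = (1 / R) * (delta y - (1 - R) * (r y + (lam y) ^ 2 / (2 * R))))
    (hatlddef : ∀ y, atld y = a y + ((1 - R) / R) * rho y * lam y * b y)
    (hddef : ∀ y, d y = (1 / 2) * (b y) ^ 2 * ((1 - (rho y) ^ 2) * R + (rho y) ^ 2 + 1))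
    (y₀ : ℝ) (hy₀ : y₀ ∈ E)
    (u : ℝ → ℝ) (huC2 : ContDiffOn ℝ 2 u (Ici y₀))
    (hupos : ∀ y ∈ Ici y₀, 0 < u y)
    (hHJB : ∀ y ∈ Ici y₀,
      (1 / 2) * (b y) ^ 2 * derivWithin (derivWithin u (Ici y₀)) (Ici y₀) y
        + atld y * derivWithin u (Ici y₀) y + η y * u y - (u y) ^ 2
        - d y * (derivWithin u (Ici y₀) y) ^ 2 / u y = 0)
    (C₁ C₂ : ℝ) (hC₁ : 0 < C₁) (hC₁₂ : C₁ < C₂)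
    (hbound : ∀ y ∈ Ici y₀, C₁ * η y ≤ u y ∧ u y ≤ C₂ * η y)
    (hA1pos : ∀ y ∈ Ici y₀, 0 < η y)
    (hA1C2 : ContDiffOn ℝ 2 η (Ici y₀))
    (hA2 : ∃ M : ℝ, ∀ y ∈ Ici y₀,
      |(b y) ^ 2 / η y| ≤ M ∧ |atld y / η y| ≤ M ∧
      |derivWithin η (Ici y₀) y / η y| ≤ M)
    (hA3 : Filter.Tendsto (PsiW b atld d (Ici y₀) η) Filter.atTop (nhds 1))
    : Filter.Tendsto (fun y => u y / η y) Filter.atTop (nhds 1) := by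
  -- Ici y₀ is contained in E
  have hEsub : Ici y₀ ⊆ E := by
    rcases hE with h | ⟨c, h⟩
    · rw [h]; exact fun z _ => mem_univ z
    · rw [h] at hy₀ ⊢; exact fun z hz => mem_Ioi.2 (lt_of_lt_of_le (mem_Ioi.1 hy₀) (mem_Ici.1 hz))
  have hude : UniqueDiffOn ℝ (Ici y₀) := uniqueDiffOn_Ici y₀
  have huD : DifferentiableOn ℝ u (Ici y₀) := huC2.differentiableOn (by norm_num)
  have hηD : DifferentiableOn ℝ η (Ici y₀) := hA1C2.differentiableOn (by norm_num)
  have huC1' : ContDiffOn ℝ 1 (derivWithin u (Ici y₀)) (Ici y₀) :=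
    huC2.derivWithin hude (by norm_num)
  have hηC1' : ContDiffOn ℝ 1 (derivWithin η (Ici y₀)) (Ici y₀) :=
    hA1C2.derivWithin hude (by norm_num)
  have hηne : ∀ y ∈ Ici y₀, η y ≠ 0 := fun y hy => ne_of_gt (hA1pos y hy)
  -- interior differentiability and derivative identities
  have huA : ∀ y ∈ Ioi y₀, DifferentiableAt ℝ u y := fun y hy =>
    (huD y (mem_Ici.2 (le_of_lt hy))).differentiableAt (Ici_mem_nhds hy)
  have hηA : ∀ y ∈ Ioi y₀, DifferentiableAt ℝ η y := fun y hy =>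
    (hηD y (mem_Ici.2 (le_of_lt hy))).differentiableAt (Ici_mem_nhds hy)
  have huW : ∀ y ∈ Ioi y₀, derivWithin u (Ici y₀) y = deriv u y := fun y hy =>
    derivWithin_of_mem_nhds (Ici_mem_nhds hy)
  have hηW : ∀ y ∈ Ioi y₀, derivWithin η (Ici y₀) y = deriv η y := fun y hy =>
    derivWithin_of_mem_nhds (Ici_mem_nhds hy)
  have huE : ∀ y ∈ Ioi y₀, derivWithin u (Ici y₀) =ᶠ[𝓝 y] deriv u := fun y hy =>
    eventually_of_mem (Ioi_mem_nhds hy) huW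
  have hηE : ∀ y ∈ Ioi y₀, derivWithin η (Ici y₀) =ᶠ[𝓝 y] deriv η := fun y hy =>
    eventually_of_mem (Ioi_mem_nhds hy) hηW
  have hu'A : ∀ y ∈ Ioi y₀, DifferentiableAt ℝ (deriv u) y := by
    intro y hy
    have h1 : DifferentiableAt ℝ (derivWithin u (Ici y₀)) y :=
      (huC1'.differentiableOn one_ne_zero y (mem_Ici.2 (le_of_lt hy))).differentiableAt (Ici_mem_nhds hy)
    exact (huE y hy).differentiableAt_iff.1 h1
  have hη'A : ∀ y ∈ Ioi y₀, DifferentiableAt ℝ (deriv η) y := by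
    intro y hy
    have h1 : DifferentiableAt ℝ (derivWithin η (Ici y₀)) y :=
      (hηC1'.differentiableOn one_ne_zero y (mem_Ici.2 (le_of_lt hy))).differentiableAt (Ici_mem_nhds hy)
    exact (hηE y hy).differentiableAt_iff.1 h1
  have hu2W : ∀ y ∈ Ioi y₀,
      derivWithin (derivWithin u (Ici y₀)) (Ici y₀) y = deriv (deriv u) y := by
    intro y hy
    rw [derivWithin_of_mem_nhds (Ici_mem_nhds hy)]
    exact (huE y hy).deriv_eq
  have hη2W : ∀ y ∈ Ioi y₀,
      derivWithin (derivWithin η (Ici y₀)) (Ici y₀) y = deriv (deriv η) y := by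
    intro y hy
    rw [derivWithin_of_mem_nhds (Ici_mem_nhds hy)]
    exact (hηE y hy).deriv_eq
  -- the ratio v = u / η
  set v : ℝ → ℝ := fun y => u y / η y with hv
  have hvA : ∀ y ∈ Ioi y₀, DifferentiableAt ℝ v y := fun y hy =>
    (huA y hy).div (hηA y hy) (hηne y (mem_Ici.2 (le_of_lt hy)))
  have hvval : ∀ y ∈ Ici y₀, C₁ ≤ v y ∧ v y ≤ C₂ := by
    intro y hy
    have h1 := (hbound y hy).1
    have h2 := (hbound y hy).2
    have hp := hA1pos y hy
    constructor
    · rw [hv]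
      simp only
      rw [le_div_iff₀ hp]
      linarith
    · rw [hv]
      simp only
      rw [div_le_iff₀ hp]
      linarith
  have hvpos : ∀ y ∈ Ici y₀, 0 < v y := fun y hy => lt_of_lt_of_le hC₁ (hvval y hy).1
  have hueq : ∀ y ∈ Ici y₀, u y = v y * η y := fun y hy =>
    (div_mul_cancel₀ (u y) (hηne y hy)).symm
  have hderiv_u : ∀ y ∈ Ioi y₀, deriv u y = deriv v y * η y + v y * deriv η y := by
    intro y hy
    have heq : u =ᶠ[𝓝 y] fun z => v z * η z :=
      eventually_of_mem (Ioi_mem_nhds hy) (fun z hz => hueq z (mem_Ici.2 (le_of_lt hz)))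
    rw [heq.deriv_eq, deriv_fun_mul (hvA y hy) (hηA y hy)]
  have hderiv_v : ∀ y ∈ Ioi y₀,
      deriv v y = (deriv u y * η y - u y * deriv η y) / (η y) ^ 2 := by
    intro y hy
    rw [hv]
    exact deriv_div (huA y hy) (hηA y hy) (hηne y (mem_Ici.2 (le_of_lt hy)))
  have hv'A : ∀ y ∈ Ioi y₀, DifferentiableAt ℝ (deriv v) y := by
    intro y hy
    have heq : deriv v =ᶠ[𝓝 y] fun z => (deriv u z * η z - u z * deriv η z) / (η z) ^ 2 :=
      eventually_of_mem (Ioi_mem_nhds hy) (fun z hz => hderiv_v z hz)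
    rw [heq.differentiableAt_iff]
    exact (((hu'A y hy).mul (hηA y hy)).sub ((huA y hy).mul (hη'A y hy))).div
      ((hηA y hy).pow 2) (pow_ne_zero 2 (hηne y (mem_Ici.2 (le_of_lt hy))))
  have hderiv2_u : ∀ y ∈ Ioi y₀, deriv (deriv u) y
      = deriv (deriv v) y * η y + 2 * deriv v y * deriv η y + v y * deriv (deriv η) y := by
    intro y hy
    have heq : deriv u =ᶠ[𝓝 y] fun z => deriv v z * η z + v z * deriv η z :=
      eventually_of_mem (Ioi_mem_nhds hy) hderiv_u
    rw [heq.deriv_eq,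
      deriv_fun_add (f := fun z => deriv v z * η z) (g := fun z => v z * deriv η z)
        ((hv'A y hy).mul (hηA y hy)) ((hvA y hy).mul (hη'A y hy)),
      deriv_fun_mul (hv'A y hy) (hηA y hy), deriv_fun_mul (hvA y hy) (hη'A y hy)]
    ring
  -- bounds on d
  have hd0 : ∀ y ∈ Ici y₀, 0 ≤ d y ∧ d y ≤ (1/2) * (b y) ^ 2 * (R + 2) := by
    intro y hy
    obtain ⟨h1, h2⟩ := hrho y (hEsub hy)
    have hρ2 : (rho y) ^ 2 ≤ 1 := by nlinarith
    have hb2 : (0:ℝ) ≤ (b y) ^ 2 := sq_nonneg _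
    rw [hddef y]
    constructor
    · have h4 : (0:ℝ) ≤ (1 - (rho y) ^ 2) * R + (rho y) ^ 2 + 1 := by nlinarith [sq_nonneg (rho y)]
      have := mul_nonneg (mul_nonneg (by norm_num : (0:ℝ) ≤ 1/2) hb2) h4
      linarith [this]
    · have h3 : (0:ℝ) ≤ (rho y) ^ 2 * R + (1 - (rho y) ^ 2) := by nlinarith [sq_nonneg (rho y)]
      nlinarith [mul_nonneg hb2 h3]
  -- PsiW in terms of ordinary derivatives at interior points
  have hψ : ∀ y ∈ Ioi y₀, PsiW b atld d (Ici y₀) η y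
      = 1 + ((1 / 2) * (b y) ^ 2 * deriv (deriv η) y + atld y * deriv η y) / (η y) ^ 2
        - d y * (deriv η y) ^ 2 / (η y) ^ 3 := by
    intro y hy
    unfold PsiW
    rw [hη2W y hy, hηW y hy]
  -- the key identity
  have hkey : ∀ y ∈ Ioi y₀, v y * (v y - PsiW b atld d (Ici y₀) η y)
      = (1/2)*((b y)^2/(η y))*(deriv (deriv v) y)
        + (atld y/(η y) + ((b y)^2/(η y))*((deriv η y)/(η y)))*(deriv v y)
        - ((d y)/(η y))*((deriv v y)^2/(v y))
        - 2*((d y)/(η y))*((deriv η y)/(η y))*(deriv v y) := by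
    intro y hy
    have hj := hHJB y (mem_Ici.2 (le_of_lt hy))
    rw [hu2W y hy, huW y hy, hderiv2_u y hy, hderiv_u y hy, hueq y (mem_Ici.2 (le_of_lt hy))] at hj
    rw [hψ y hy]
    exact algebra_key (v y) (deriv v y) (deriv (deriv v) y) (η y) (deriv η y)
      (deriv (deriv η) y) (atld y) ((b y) ^ 2) (d y) (hηne y (mem_Ici.2 (le_of_lt hy)))
      (ne_of_gt (hvpos y (mem_Ici.2 (le_of_lt hy)))) hj
  -- boundedness of v at infinity
  obtain ⟨M, hM⟩ := hA2
  have hev1 : ∀ᶠ y in atTop, C₁ ≤ v y := eventually_atTop.2 ⟨y₀, fun y hy => (hvval y hy).1⟩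
  have hev2 : ∀ᶠ y in atTop, v y ≤ C₂ := eventually_atTop.2 ⟨y₀, fun y hy => (hvval y hy).2⟩
  have hbddA : IsBoundedUnder (· ≤ ·) atTop v := ⟨C₂, eventually_map.2 hev2⟩
  have hbddB : IsBoundedUnder (· ≥ ·) atTop v := ⟨C₁, eventually_map.2 hev1⟩
  have hcobA : IsCoboundedUnder (· ≤ ·) atTop v := hbddB.isCoboundedUnder_le
  have hcobB : IsCoboundedUnder (· ≥ ·) atTop v := hbddA.isCoboundedUnder_ge
  have hvcont : ContinuousOn v (Ici y₀) :=
    (huC2.continuousOn).div (hA1C2.continuousOn) hηne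
  -- the constant K
  obtain ⟨K, hK⟩ : ∃ K : ℝ, K = M/2 + M + M^2 + (R+2)*M^2 + (R+2)*M/(2*C₁) := ⟨_, rfl⟩
  have hM0 : 0 ≤ M := le_trans (abs_nonneg _) (hM y₀ self_mem_Ici).1
  have hK0 : 0 ≤ K := by
    rw [hK]
    have b1 : (0:ℝ) ≤ (R+2)*M^2 := mul_nonneg (by linarith) (sq_nonneg M)
    have b2 : (0:ℝ) ≤ (R+2)*M/(2*C₁) := div_nonneg (mul_nonneg (by linarith) hM0) (by linarith)
    nlinarith [sq_nonneg M]
  -- point estimates from the maximum principle, packaged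
  have hpoint : ∀ δ : ℝ, 0 < δ → δ ≤ 1 → ∀ x : ℝ, y₀ < x →
      PsiW b atld d (Ici y₀) η x < 1 + δ → 1 - δ < PsiW b atld d (Ici y₀) η x →
      |deriv v x| ≤ δ →
      (deriv (deriv v) x ≤ δ → v x < 1 + δ + K * δ / C₁) ∧
      (-δ ≤ deriv (deriv v) x → 1 - δ - K * δ / C₁ < v x) := by
    intro δ hδ hδ1 x hx hΨu hΨl hdv1
    have hxI : x ∈ Ici y₀ := mem_Ici.2 (le_of_lt hx)
    obtain ⟨hBa, hAa, hHa⟩ := hM x hxI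
    rw [hηW x hx] at hHa
    have hB2M : (b x) ^ 2 / η x ≤ M := le_trans (le_abs_self _) hBa
    obtain ⟨hD0, hDle⟩ := hd0 x hxI
    have hpb := point_bounds M R C₁ δ (v x) (deriv v x) (deriv (deriv v) x) (η x) (deriv η x)
      (atld x) ((b x) ^ 2) (d x) (PsiW b atld d (Ici y₀) η x) hδ hδ1 (hA1pos x hxI) hC₁
      (hvval x hxI).1 (sq_nonneg _) hB2M hAa hHa hD0 hDle hR (hkey x hx) hdv1
    rw [← hK] at hpb
    constructor
    · intro h2
      have := hpb.1 h2
      linarith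
    · intro h2
      have := hpb.2 h2
      linarith
  -- the main quantitative step
  have hLstep : ∀ δ : ℝ, 0 < δ → δ ≤ 1 → limsup v atTop ≤ 1 + 2*δ + K*δ/C₁ := by
    intro δ hδ hδ1
    have e1 : ∀ᶠ y in atTop, PsiW b atld d (Ici y₀) η y < 1 + δ :=
      hA3.eventually_lt_const (by linarith)
    have e2 : ∀ᶠ y in atTop, 1 - δ < PsiW b atld d (Ici y₀) η y :=
      hA3.eventually_const_lt (by linarith)
    have e3 : ∀ᶠ y in atTop, v y < limsup v atTop + δ :=
      eventually_lt_of_limsup_lt (by linarith) hbddA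
    obtain ⟨Y₁, hY₁⟩ := eventually_atTop.1 ((e1.and e2).and e3)
    obtain ⟨yh, hyhY, hyhv⟩ := frequently_atTop.1
      (frequently_lt_of_lt_limsup hcobA (by linarith : limsup v atTop - δ < limsup v atTop))
      (max Y₁ (y₀ + 1) + 4)
    have hY₁yh : Y₁ + 4 ≤ yh := by
      have := le_max_left Y₁ (y₀ + 1)
      linarith
    have hy₀yh : y₀ + 5 ≤ yh := by
      have := le_max_right Y₁ (y₀ + 1)
      linarith
    have hwin : ∀ y ∈ Icc (yh - 4) (yh + 4), Y₁ ≤ y ∧ y₀ < y := by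
      intro y hy
      constructor <;> [linarith [hy.1]; linarith [hy.1]]
    obtain ⟨x, hxmem, hvx, hdv1, hdv2⟩ := exists_max_point v y₀ δ (limsup v atTop) yh hδ
      (by linarith)
      (hvcont.mono (fun z hz => by simp only [mem_Ici]; linarith [hz.1]))
      hvA hv'A
      (fun y hy => (hY₁ y (hwin y hy).1).2)
      hyhv
    have hx : y₀ < x := (hwin x hxmem).2
    have h5 := (hpoint δ hδ hδ1 x hx (hY₁ x (hwin x hxmem).1).1.1
      (hY₁ x (hwin x hxmem).1).1.2 hdv1).1 hdv2
    linarith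
  have hlstep : ∀ δ : ℝ, 0 < δ → δ ≤ 1 → 1 - 2*δ - K*δ/C₁ ≤ liminf v atTop := by
    intro δ hδ hδ1
    have e1 : ∀ᶠ y in atTop, PsiW b atld d (Ici y₀) η y < 1 + δ :=
      hA3.eventually_lt_const (by linarith)
    have e2 : ∀ᶠ y in atTop, 1 - δ < PsiW b atld d (Ici y₀) η y :=
      hA3.eventually_const_lt (by linarith)
    have e4 : ∀ᶠ y in atTop, liminf v atTop - δ < v y :=
      eventually_lt_of_lt_liminf (by linarith) hbddB
    obtain ⟨Y₁, hY₁⟩ := eventually_atTop.1 ((e1.and e2).and e4)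
    obtain ⟨yh, hyhY, hyhv⟩ := frequently_atTop.1
      (frequently_lt_of_liminf_lt hcobB (by linarith : liminf v atTop < liminf v atTop + δ))
      (max Y₁ (y₀ + 1) + 4)
    have hY₁yh : Y₁ + 4 ≤ yh := by
      have := le_max_left Y₁ (y₀ + 1)
      linarith
    have hy₀yh : y₀ + 5 ≤ yh := by
      have := le_max_right Y₁ (y₀ + 1)
      linarith
    have hwin : ∀ y ∈ Icc (yh - 4) (yh + 4), Y₁ ≤ y ∧ y₀ < y := by
      intro y hy
      constructor <;> [linarith [hy.1]; linarith [hy.1]]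
    -- apply the maximum lemma to -v
    have hgd : deriv (fun z => -v z) = fun z => -deriv v z := funext fun z => deriv.neg
    have hgd2 : ∀ z : ℝ, deriv (deriv (fun z => -v z)) z = -deriv (deriv v) z := by
      intro z
      rw [hgd]
      exact deriv.neg
    obtain ⟨x, hxmem, hvx, hdv1, hdv2⟩ := exists_max_point (fun z => -v z) y₀ δ
      (-(liminf v atTop)) yh hδ
      (by linarith)
      ((hvcont.mono (fun z hz => by simp only [mem_Ici]; linarith [hz.1])).neg)
      (fun y hy => (hvA y hy).neg)
      (fun y hy => by rw [hgd]; exact (hv'A y hy).neg)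
      (fun y hy => by
        have := (hY₁ y (hwin y hy).1).2
        linarith)
      (by linarith)
    have hx : y₀ < x := (hwin x hxmem).2
    rw [hgd] at hdv1
    rw [abs_neg] at hdv1
    rw [hgd2 x] at hdv2
    have hdv2' : -δ ≤ deriv (deriv v) x := by linarith
    have h5 := (hpoint δ hδ hδ1 x hx (hY₁ x (hwin x hxmem).1).1.1
      (hY₁ x (hwin x hxmem).1).1.2 hdv1).2 hdv2'
    linarith
  -- conclude limsup ≤ 1 and liminf ≥ 1
  obtain ⟨c, hc, hc0⟩ : ∃ c : ℝ, c = 2 + K/C₁ ∧ 0 < c := by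
    refine ⟨2 + K/C₁, rfl, ?_⟩
    have : 0 ≤ K/C₁ := div_nonneg hK0 hC₁.le
    linarith
  have harith : ∀ δ : ℝ, 0 < δ → δ ≤ 1 → 2*δ + K*δ/C₁ = c*δ := by
    intro δ _ _
    rw [hc]
    field_simp
  have hL1 : limsup v atTop ≤ 1 := by
    by_contra h
    push_neg at h
    obtain ⟨δ, hδpos, hδ1, hδsmall⟩ : ∃ δ : ℝ, 0 < δ ∧ δ ≤ 1 ∧ c*δ < limsup v atTop - 1 := by
      refine ⟨min 1 ((limsup v atTop - 1)/(2*c)), ?_, min_le_left _ _, ?_⟩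
      · apply lt_min one_pos
        apply div_pos (by linarith) (by linarith)
      · have h1 : min 1 ((limsup v atTop - 1)/(2*c)) ≤ (limsup v atTop - 1)/(2*c) :=
          min_le_right _ _
        have h2 : c * min 1 ((limsup v atTop - 1)/(2*c)) ≤ c * ((limsup v atTop - 1)/(2*c)) :=
          mul_le_mul_of_nonneg_left h1 hc0.le
        have h3 : c * ((limsup v atTop - 1)/(2*c)) = (limsup v atTop - 1)/2 := by
          field_simp
        linarith
    have := hLstep δ hδpos hδ1
    rw [show 1 + 2*δ + K*δ/C₁ = 1 + (2*δ + K*δ/C₁) by ring, harith δ hδpos hδ1] at this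
    linarith
  have hl1 : 1 ≤ liminf v atTop := by
    by_contra h
    push_neg at h
    obtain ⟨δ, hδpos, hδ1, hδsmall⟩ : ∃ δ : ℝ, 0 < δ ∧ δ ≤ 1 ∧ c*δ < 1 - liminf v atTop := by
      refine ⟨min 1 ((1 - liminf v atTop)/(2*c)), ?_, min_le_left _ _, ?_⟩
      · apply lt_min one_pos
        apply div_pos (by linarith) (by linarith)
      · have h1 : min 1 ((1 - liminf v atTop)/(2*c)) ≤ (1 - liminf v atTop)/(2*c) :=
          min_le_right _ _
        have h2 : c * min 1 ((1 - liminf v atTop)/(2*c)) ≤ c * ((1 - liminf v atTop)/(2*c)) :=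
          mul_le_mul_of_nonneg_left h1 hc0.le
        have h3 : c * ((1 - liminf v atTop)/(2*c)) = (1 - liminf v atTop)/2 := by
          field_simp
        linarith
    have := hlstep δ hδpos hδ1
    rw [show 1 - 2*δ - K*δ/C₁ = 1 - (2*δ + K*δ/C₁) by ring, harith δ hδpos hδ1] at this
    linarith
  exact tendsto_of_le_liminf_of_limsup_le hl1 hL1 hbddA hbddB
end

section
/- Suppose E = (E₋, ∞) and let u be a positive solution of the HJB equation (1/2)b²u'' + ã u' + η u − u² − d (u')²/u = 0 on [y₀,∞) with C₁η ≤ u ≤ C₂η for some 0 < C₁ < C₂, and suppose Assumption (A) holds at y₀. Assume further that ã/η + (b²+2d)η'/η² ∼ K₁ y^{−k} and d/η ∼ K₂ y^{−2l} as y → ∞, for some l ≥ k ≥ 0 and K₁, K₂ ≠ 0. Then u'/u = O(y^{2l−k}) as y → ∞. -/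
open Set Filter


lemma riccati_blowup_pos (w : ℝ → ℝ) (m B s : ℝ) (hm : 0 < m) (hB : 0 < B)
    (hmB : (2 * B)⁻¹ < m)
    (hw : ContinuousOn w (Icc s (s + 1)))
    (hdiff : ∀ y ∈ Ioo s (s + 1), DifferentiableAt ℝ w y)
    (hd : ∀ y ∈ Ioo s (s + 1), B ≤ w y → m * (w y) ^ 2 ≤ deriv w y)
    (hs : 2 * B < w s) : False := by
  have hs1 : s ≤ s + 1 := by linarith
  -- Step A : w stays above B
  have hAbove : ∀ y ∈ Icc s (s + 1), B < w y := by
    by_contra hcon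
    push_neg at hcon
    obtain ⟨y₁, hy₁, hy₁B⟩ := hcon
    set A : Set ℝ := Icc s (s + 1) ∩ w ⁻¹' (Iic B) with hA
    have hclosed : IsClosed A := hw.preimage_isClosed_of_isClosed isClosed_Icc isClosed_Iic
    have hne : A.Nonempty := ⟨y₁, hy₁, hy₁B⟩
    have hbdd : BddBelow A := ⟨s, fun x hx => hx.1.1⟩
    set T := sInf A with hT
    have hTA : T ∈ A := hclosed.csInf_mem hne hbdd
    have hTIcc : T ∈ Icc s (s + 1) := hTA.1
    have hwT : w T ≤ B := hTA.2
    have hsT : s < T := by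
      rcases lt_or_eq_of_le hTIcc.1 with h | h
      · exact h
      · exfalso; rw [← h] at hwT; linarith
    have hIco : ∀ y ∈ Ico s T, B < w y := by
      intro y hy
      by_contra h
      push_neg at h
      have : y ∈ A := ⟨⟨hy.1, le_trans hy.2.le hTIcc.2⟩, h⟩
      exact absurd (csInf_le hbdd this) (not_le.mpr hy.2)
    have hmono : MonotoneOn w (Icc s T) := by
      apply monotoneOn_of_deriv_nonneg (convex_Icc s T)
        (hw.mono (Icc_subset_Icc le_rfl hTIcc.2))
      · intro x hx
        rw [interior_Icc] at hx
        exact (hdiff x ⟨hx.1, lt_of_lt_of_le hx.2 hTIcc.2⟩).differentiableWithinAt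
      · intro x hx
        rw [interior_Icc] at hx
        have hx' : x ∈ Ioo s (s + 1) := ⟨hx.1, lt_of_lt_of_le hx.2 hTIcc.2⟩
        have := hd x hx' (hIco x ⟨hx.1.le, hx.2⟩).le
        nlinarith [sq_nonneg (w x)]
    have := hmono ⟨le_rfl, hsT.le⟩ ⟨hsT.le, le_rfl⟩ hsT.le
    linarith
  -- Step B : blow-up contradiction via 1/w
  have hwne : ∀ y ∈ Icc s (s + 1), w y ≠ 0 := fun y hy => (lt_trans hB (hAbove y hy)).ne'
  have hanti : AntitoneOn (fun y => (w y)⁻¹ + m * y) (Icc s (s + 1)) := by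
    apply antitoneOn_of_deriv_nonpos (convex_Icc _ _)
    · exact (hw.inv₀ hwne).add (continuous_const.mul continuous_id).continuousOn
    · intro x hx
      rw [interior_Icc] at hx
      have hxI : x ∈ Icc s (s + 1) := ⟨hx.1.le, hx.2.le⟩
      exact (((hdiff x hx).inv (hwne x hxI)).add
        ((differentiable_const m).mul differentiable_id).differentiableAt).differentiableWithinAt
    · intro x hx
      rw [interior_Icc] at hx
      have hxI : x ∈ Icc s (s + 1) := ⟨hx.1.le, hx.2.le⟩
      have h1 : HasDerivAt (fun y => (w y)⁻¹ + m * y)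
          (-deriv w x / (w x) ^ 2 + m) x := by
        have := ((hdiff x hx).hasDerivAt.inv (hwne x hxI)).add
          ((hasDerivAt_id x).const_mul m)
        simp only [id, mul_one] at this
        exact this
      rw [h1.deriv]
      have hw2 : 0 < (w x) ^ 2 := pow_pos (lt_trans hB (hAbove x hxI)) 2
      have h6 := hd x hx (hAbove x hxI).le
      rw [neg_div]
      linarith [(le_div_iff₀ hw2).mpr h6]
  have hgs := hanti ⟨le_rfl, hs1⟩ ⟨hs1, le_rfl⟩ hs1
  simp only at hgs
  have h2 : 0 < (w (s + 1))⁻¹ := inv_pos.mpr (lt_trans hB (hAbove (s + 1) ⟨hs1, le_rfl⟩))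
  have h3 : (w s)⁻¹ < (2 * B)⁻¹ := by
    apply inv_strictAnti₀ (by linarith) hs
  linarith


lemma riccati_blowup_neg (w : ℝ → ℝ) (m B s : ℝ) (hm : 0 < m) (hB : 0 < B)
    (hmB : (2 * B)⁻¹ < m)
    (hw : ContinuousOn w (Icc (s - 1) s))
    (hdiff : ∀ y ∈ Ioo (s - 1) s, DifferentiableAt ℝ w y)
    (hd : ∀ y ∈ Ioo (s - 1) s, w y ≤ -B → m * (w y) ^ 2 ≤ deriv w y)
    (hs : w s < -(2 * B)) : False := by
  have hs1 : s - 1 ≤ s := by linarith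
  -- Step A : w stays below -B
  have hBelow : ∀ y ∈ Icc (s - 1) s, w y < -B := by
    by_contra hcon
    push_neg at hcon
    obtain ⟨y₁, hy₁, hy₁B⟩ := hcon
    set A : Set ℝ := Icc (s - 1) s ∩ w ⁻¹' (Ici (-B)) with hA
    have hclosed : IsClosed A := hw.preimage_isClosed_of_isClosed isClosed_Icc isClosed_Ici
    have hne : A.Nonempty := ⟨y₁, hy₁, hy₁B⟩
    have hbdd : BddAbove A := ⟨s, fun x hx => hx.1.2⟩
    set T := sSup A with hT
    have hTA : T ∈ A := hclosed.csSup_mem hne hbdd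
    have hTIcc : T ∈ Icc (s - 1) s := hTA.1
    have hwT : -B ≤ w T := hTA.2
    have hTs : T < s := by
      rcases lt_or_eq_of_le hTIcc.2 with h | h
      · exact h
      · exfalso; rw [h] at hwT; linarith
    have hIoc : ∀ y ∈ Ioc T s, w y < -B := by
      intro y hy
      by_contra h
      push_neg at h
      have : y ∈ A := ⟨⟨le_trans hTIcc.1 hy.1.le, hy.2⟩, h⟩
      exact absurd (le_csSup hbdd this) (not_le.mpr hy.1)
    have hmono : MonotoneOn w (Icc T s) := by
      apply monotoneOn_of_deriv_nonneg (convex_Icc T s)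
        (hw.mono (Icc_subset_Icc hTIcc.1 le_rfl))
      · intro x hx
        rw [interior_Icc] at hx
        exact (hdiff x ⟨lt_of_le_of_lt hTIcc.1 hx.1, hx.2⟩).differentiableWithinAt
      · intro x hx
        rw [interior_Icc] at hx
        have hx' : x ∈ Ioo (s - 1) s := ⟨lt_of_le_of_lt hTIcc.1 hx.1, hx.2⟩
        have := hd x hx' (hIoc x ⟨hx.1, hx.2.le⟩).le
        nlinarith [sq_nonneg (w x)]
    have := hmono ⟨le_rfl, hTs.le⟩ ⟨hTs.le, le_rfl⟩ hTs.le
    linarith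
  -- Step B : backward blow-up contradiction via 1/w
  have hwne : ∀ y ∈ Icc (s - 1) s, w y ≠ 0 := fun y hy => by
    have := hBelow y hy; intro h; rw [h] at this; linarith
  have hanti : AntitoneOn (fun y => (w y)⁻¹ + m * y) (Icc (s - 1) s) := by
    apply antitoneOn_of_deriv_nonpos (convex_Icc _ _)
    · exact (hw.inv₀ hwne).add (continuous_const.mul continuous_id).continuousOn
    · intro x hx
      rw [interior_Icc] at hx
      have hxI : x ∈ Icc (s - 1) s := ⟨hx.1.le, hx.2.le⟩
      exact (((hdiff x hx).inv (hwne x hxI)).add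
        ((differentiable_const m).mul differentiable_id).differentiableAt).differentiableWithinAt
    · intro x hx
      rw [interior_Icc] at hx
      have hxI : x ∈ Icc (s - 1) s := ⟨hx.1.le, hx.2.le⟩
      have h1 : HasDerivAt (fun y => (w y)⁻¹ + m * y)
          (-deriv w x / (w x) ^ 2 + m) x := by
        have := ((hdiff x hx).hasDerivAt.inv (hwne x hxI)).add
          ((hasDerivAt_id x).const_mul m)
        simp only [id, mul_one] at this
        exact this
      rw [h1.deriv]
      have hwx : w x < -B := hBelow x hxI
      have hw2 : 0 < (w x) ^ 2 := by nlinarith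
      have h6 := hd x hx hwx.le
      rw [neg_div]
      linarith [(le_div_iff₀ hw2).mpr h6]
  have hgs := hanti ⟨le_rfl, hs1⟩ ⟨hs1, le_rfl⟩ hs1
  simp only at hgs
  have h2 : (w (s - 1))⁻¹ < 0 := by
    apply inv_neg''.mpr
    have := hBelow (s - 1) ⟨le_rfl, hs1⟩; linarith
  have h3 : -(w s)⁻¹ < (2 * B)⁻¹ := by
    rw [← inv_neg]
    exact inv_strictAnti₀ (by linarith) (by linarith)
  linarith


lemma core_ineq (U P Q2 B2 A H D W dw m : ℝ)
    (hU : 0 < U) (hB2 : 0 < B2)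
    (hHJB : (1 / 2) * B2 * Q2 + A * P + H * U - U ^ 2 - D * P ^ 2 / U = 0)
    (hW : W = P / U)
    (hdw : dw = Q2 / U - W ^ 2)
    (hkey2 : A * W + (H - U) ≤ (D - (m + 1) * B2 / 2) * W ^ 2) :
    m * W ^ 2 ≤ dw := by
  have hUne := hU.ne'
  have hPW : P = W * U := by rw [hW]; field_simp
  have e1 : D * (W * U) ^ 2 / U = D * (W ^ 2 * U) := by field_simp
  rw [hPW, e1] at hHJB
  -- hHJB : (1/2)*B2*Q2 + A*(W*U) + H*U - U^2 - D*(W^2*U) = 0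
  have h3 := mul_le_mul_of_nonneg_right hkey2 hU.le
  have h4 : (1 / 2) * B2 * ((m + 1) * W ^ 2 * U) ≤ (1 / 2) * B2 * Q2 := by nlinarith
  have h5 : (m + 1) * W ^ 2 * U ≤ Q2 :=
    le_of_mul_le_mul_left (by linarith) (by linarith : (0:ℝ) < (1 / 2) * B2)
  have h6 : (m + 1) * W ^ 2 ≤ Q2 / U := (le_div_iff₀ hU).mpr h5
  rw [hdw]; linarith


lemma logderiv_formula (y₀ : ℝ) (u : ℝ → ℝ) (huC2 : ContDiffOn ℝ 2 u (Ici y₀))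
    (hupos : ∀ y ∈ Ici y₀, 0 < u y) :
    ∀ y ∈ Ici y₀, derivWithin (fun z => derivWithin u (Ici y₀) z / u z) (Ici y₀) y =
      derivWithin (derivWithin u (Ici y₀)) (Ici y₀) y / u y
        - (derivWithin u (Ici y₀) y / u y) ^ 2 := by
  intro y hy
  have hUD : UniqueDiffOn ℝ (Ici y₀) := uniqueDiffOn_Ici y₀
  have hu'C1 : ContDiffOn ℝ 1 (derivWithin u (Ici y₀)) (Ici y₀) :=
    huC2.derivWithin hUD (by norm_num)
  have h1 : HasDerivWithinAt u (derivWithin u (Ici y₀) y) (Ici y₀) y :=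
    ((huC2.differentiableOn (by norm_num)) y hy).hasDerivWithinAt
  have h2 : HasDerivWithinAt (derivWithin u (Ici y₀))
      (derivWithin (derivWithin u (Ici y₀)) (Ici y₀) y) (Ici y₀) y :=
    ((hu'C1.differentiableOn (by norm_num)) y hy).hasDerivWithinAt
  have h3 := h2.div h1 (hupos y hy).ne'
  rw [show (fun z => derivWithin u (Ici y₀) z / u z) = derivWithin u (Ici y₀) / u from rfl,
    h3.derivWithin (hUD y hy)]
  have hU := (hupos y hy).ne'
  field_simp


set_option maxHeartbeats 2000000 in
/-- under Assumption (A) and the asymptotic rates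
`ã/η + (b²+2d) η'/η² ∼ K₁ y^{-k}` and `d/η ∼ K₂ y^{-2l}` with `l ≥ k ≥ 0`, `K₁, K₂ ≠ 0`,
the log-derivative of a solution `u` with `C₁ η ≤ u ≤ C₂ η` satisfies
`u'/u = O(y^{2l-k})` at `∞`. -/
theorem statement14
    (E : Set ℝ) (hE : E = Set.univ ∨ ∃ c : ℝ, E = Set.Ioi c)
    (R : ℝ) (hR : 0 < R) (hR1 : R ≠ 1)
    (r lam sigma a b rho delta : ℝ → ℝ)
    (hrlip : LocallyLipschitzOn E r) (hlamlip : LocallyLipschitzOn E lam)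
    (hsigmalip : LocallyLipschitzOn E sigma) (halip : LocallyLipschitzOn E a)
    (hblip : LocallyLipschitzOn E b) (hrholip : LocallyLipschitzOn E rho)
    (hdeltalip : LocallyLipschitzOn E delta)
    (hbne : ∀ y ∈ E, b y ≠ 0) (hsigmapos : ∀ y ∈ E, 0 < sigma y)
    (hrho : ∀ y ∈ E, rho y ∈ Icc (-1 : ℝ) 1)
    (η atld d : ℝ → ℝ)
    (hηdef : ∀ y, η y = (1 / R) * (delta y - (1 - R) * (r y + (lam y) ^ 2 / (2 * R))))
    (hatlddef : ∀ y, atld y = a y + ((1 - R) / R) * rho y * lam y * b y)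
    (hddef : ∀ y, d y = (1 / 2) * (b y) ^ 2 * ((1 - (rho y) ^ 2) * R + (rho y) ^ 2 + 1))
    (y₀ : ℝ) (hy₀ : y₀ ∈ E)
    (u : ℝ → ℝ) (huC2 : ContDiffOn ℝ 2 u (Ici y₀))
    (hupos : ∀ y ∈ Ici y₀, 0 < u y)
    (hHJB : ∀ y ∈ Ici y₀,
      (1 / 2) * (b y) ^ 2 * derivWithin (derivWithin u (Ici y₀)) (Ici y₀) y
        + atld y * derivWithin u (Ici y₀) y + η y * u y - (u y) ^ 2
        - d y * (derivWithin u (Ici y₀) y) ^ 2 / u y = 0)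
    (C₁ C₂ : ℝ) (hC₁ : 0 < C₁) (hC₁₂ : C₁ < C₂)
    (hbound : ∀ y ∈ Ici y₀, C₁ * η y ≤ u y ∧ u y ≤ C₂ * η y)
    (hA1pos : ∀ y ∈ Ici y₀, 0 < η y)
    (hA1C2 : ContDiffOn ℝ 2 η (Ici y₀))
    (hA2 : ∃ M : ℝ, ∀ y ∈ Ici y₀,
      |(b y) ^ 2 / η y| ≤ M ∧ |atld y / η y| ≤ M ∧
      |derivWithin η (Ici y₀) y / η y| ≤ M)
    (hA3 : Filter.Tendsto (PsiW b atld d (Ici y₀) η) Filter.atTop (nhds 1))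
    (k l K₁ K₂ : ℝ) (hk : 0 ≤ k) (hkl : k ≤ l) (hK₁ : K₁ ≠ 0) (hK₂ : K₂ ≠ 0)
    (hrate₁ : Filter.Tendsto (fun y =>
      (atld y / η y + ((b y) ^ 2 + 2 * d y) * derivWithin η (Ici y₀) y / (η y) ^ 2)
        / (K₁ * y ^ (-k))) Filter.atTop (nhds 1))
    (hrate₂ : Filter.Tendsto (fun y =>
      (d y / η y) / (K₂ * y ^ (-(2 * l)))) Filter.atTop (nhds 1)) :
    (fun y => derivWithin u (Ici y₀) y / u y) =O[Filter.atTop]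
      fun y => y ^ (2 * l - k) := by
  classical
  have hUD : UniqueDiffOn ℝ (Ici y₀) := uniqueDiffOn_Ici y₀
  have hSE : Ici y₀ ⊆ E := by
    rcases hE with h | ⟨c, h⟩
    · rw [h]; exact subset_univ _
    · rw [h] at hy₀ ⊢; exact fun z hz => mem_Ioi.mpr (lt_of_lt_of_le hy₀ hz)
  obtain ⟨M, hM⟩ := hA2
  have hMnn : 0 ≤ M := le_trans (abs_nonneg _) (hM y₀ self_mem_Ici).1
  have hC₂ : 0 < C₂ := lt_trans hC₁ hC₁₂
  -- structural facts about b, d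
  have hb2 : ∀ y ∈ Ici y₀, 0 < (b y) ^ 2 := fun y hy => by
    have := hbne y (hSE hy); positivity
  have hrho2 : ∀ y ∈ Ici y₀, (rho y) ^ 2 ≤ 1 := fun y hy => by
    have h := hrho y (hSE hy); rw [mem_Icc] at h; nlinarith only [h.1, h.2]
  set m' := min 1 R with hm'def
  set M' := max 1 R with hM'def
  have hm' : 0 < m' := lt_min one_pos hR
  have hM'1 : 1 ≤ M' := le_max_left 1 R
  clear_value m' M'
  have htlb : ∀ y ∈ Ici y₀, m' ≤ (1 - (rho y) ^ 2) * R + (rho y) ^ 2 := by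
    intro y hy
    rcases le_total R 1 with h | h
    · rw [hm'def, min_eq_right h]; nlinarith only [hrho2 y hy, sq_nonneg (rho y), h, hR]
    · rw [hm'def, min_eq_left h]; nlinarith only [hrho2 y hy, sq_nonneg (rho y), h, hR]
  have htub : ∀ y ∈ Ici y₀, (1 - (rho y) ^ 2) * R + (rho y) ^ 2 ≤ M' := by
    intro y hy
    rcases le_total R 1 with h | h
    · rw [hM'def, max_eq_left h]; nlinarith only [hrho2 y hy, sq_nonneg (rho y), h, hR]
    · rw [hM'def, max_eq_right h]; nlinarith only [hrho2 y hy, sq_nonneg (rho y), h, hR]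
  have ht0 : ∀ y ∈ Ici y₀, 0 ≤ (1 - (rho y) ^ 2) * R + (rho y) ^ 2 :=
    fun y hy => le_trans hm'.le (htlb y hy)
  have hdpos : ∀ y ∈ Ici y₀, 0 < d y := fun y hy => by
    rw [hddef]; nlinarith only [hb2 y hy, ht0 y hy]
  have hb2d : ∀ y ∈ Ici y₀, (b y) ^ 2 ≤ 2 * d y := fun y hy => by
    rw [hddef]; nlinarith only [hb2 y hy, ht0 y hy]
  have hdb2 : ∀ y ∈ Ici y₀, 2 * d y ≤ (M' + 1) * (b y) ^ 2 := fun y hy => by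
    rw [hddef]; nlinarith only [hb2 y hy, htub y hy]
  have hdlb : ∀ y ∈ Ici y₀, m' / 2 * (b y) ^ 2 ≤ d y - (b y) ^ 2 / 2 := fun y hy => by
    rw [hddef]; nlinarith only [hb2 y hy, htlb y hy]
  -- the log-derivative w
  set w := fun z => derivWithin u (Ici y₀) z / u z with hwdef
  have hwz : ∀ z, w z = derivWithin u (Ici y₀) z / u z := fun z => by rw [hwdef]
  clear_value w
  have hwdiff : DifferentiableOn ℝ w (Ici y₀) := by
    rw [hwdef]
    have hu'C1 : ContDiffOn ℝ 1 (derivWithin u (Ici y₀)) (Ici y₀) :=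
      huC2.derivWithin hUD (by norm_num)
    exact (hu'C1.differentiableOn (by norm_num)).div (huC2.differentiableOn (by norm_num))
      (fun y hy => (hupos y hy).ne')
  have hwcont : ContinuousOn w (Ici y₀) := hwdiff.continuousOn
  have hw' : ∀ z ∈ Ici y₀, derivWithin w (Ici y₀) z =
      derivWithin (derivWithin u (Ici y₀)) (Ici y₀) z / u z
        - (derivWithin u (Ici y₀) z / u z) ^ 2 := by
    intro z hz
    rw [hwdef]
    exact logderiv_formula y₀ u huC2 hupos z hz
  -- eventual rate bounds
  have ev1 := hrate₁.eventually (Ioo_mem_nhds (by norm_num : (1/2:ℝ) < 1)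
    (by norm_num : (1:ℝ) < 3/2))
  have ev2 := hrate₂.eventually (Ioo_mem_nhds (by norm_num : (1/2:ℝ) < 1)
    (by norm_num : (1:ℝ) < 3/2))
  obtain ⟨Y, hY⟩ := Filter.eventually_atTop.mp (ev1.and ev2)
  -- K₂ is positive
  have hK₂pos : 0 < K₂ := by
    set z := max Y (max y₀ 1) + 1 with hz
    have hzY : Y ≤ z := le_trans (le_max_left _ _) (by linarith)
    have hzS : z ∈ Ici y₀ := le_trans (le_trans (le_max_left y₀ 1) (le_max_right Y _))
      (by linarith)
    have hz0 : (0:ℝ) < z :=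
      lt_of_lt_of_le one_pos (le_trans (le_trans (le_max_right y₀ 1) (le_max_right Y _))
        (by linarith))
    have hr2 := (hY z hzY).2
    have hdη : 0 < d z / η z := div_pos (hdpos z hzS) (hA1pos z hzS)
    have hrp : 0 < z ^ (-(2*l)) := Real.rpow_pos_of_pos hz0 _
    have hden : 0 < K₂ * z ^ (-(2*l)) := by
      by_contra h
      push_neg at h
      have : (d z / η z) / (K₂ * z ^ (-(2*l))) ≤ 0 :=
        div_nonpos_of_nonneg_of_nonpos hdη.le h
      linarith only [this, hr2.1]
    by_contra h
    push_neg at h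
    nlinarith only [hden, hrp, h]
  -- constants
  set e := 2 * l - k with hedef
  have he0 : 0 ≤ e := by rw [hedef]; linarith only [hk, hkl]
  clear_value e
  set m := m' / 2 with hmdef
  have hm : 0 < m := by rw [hmdef]; linarith only [hm']
  clear_value m
  set γ₀ := 1 + C₂ with hγdef
  have hγ₀ : 0 < γ₀ := by rw [hγdef]; linarith only [hC₂]
  clear_value γ₀
  have hM'pos : (0:ℝ) < M' + 1 := by linarith only [hM'1]
  set c₀ := m' * K₂ / (2 * (M' + 1)) with hc₀def
  have hc₀ : 0 < c₀ := by
    rw [hc₀def]; exact div_pos (mul_pos hm' hK₂pos) (by linarith only [hM'pos])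
  clear_value c₀
  set C₃ := 2 * |K₁| + 8 * K₂ * M with hC₃def
  have hC₃ : 0 ≤ C₃ := by
    rw [hC₃def]
    have h1 : (0:ℝ) ≤ 2 * |K₁| := by positivity
    have h2 : (0:ℝ) ≤ 8 * K₂ * M :=
      mul_nonneg (mul_nonneg (by norm_num) hK₂pos.le) hMnn
    linarith only [h1, h2]
  clear_value C₃
  set Λ := 4 * C₃ / c₀ + 4 * γ₀ / c₀ + 1 / m + 1 with hΛdef
  have hΛaux1 : 0 ≤ 4 * C₃ / c₀ := div_nonneg (by linarith only [hC₃]) hc₀.le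
  have hΛaux2 : 0 ≤ 4 * γ₀ / c₀ := div_nonneg (by linarith only [hγ₀]) hc₀.le
  have hΛaux3 : 0 ≤ 1 / m := div_nonneg zero_le_one hm.le
  clear_value Λ
  have hΛ1 : 1 ≤ Λ := by rw [hΛdef]; linarith only [hΛaux1, hΛaux2, hΛaux3]
  have hΛ0 : (0:ℝ) ≤ Λ := by linarith only [hΛ1]
  have hΛC₃ : 4 * C₃ ≤ c₀ * Λ := by
    have h1 : 4 * C₃ / c₀ ≤ Λ := by rw [hΛdef]; linarith only [hΛaux2, hΛaux3]
    have h2 := (div_le_iff₀ hc₀).mp h1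
    linarith only [h2]
  have hΛγ : 4 * γ₀ ≤ c₀ * Λ := by
    have h1 : 4 * γ₀ / c₀ ≤ Λ := by rw [hΛdef]; linarith only [hΛaux1, hΛaux3]
    have h2 := (div_le_iff₀ hc₀).mp h1
    linarith only [h2]
  have hΛm : 1 / m ≤ Λ := by rw [hΛdef]; linarith only [hΛaux1, hΛaux2]
  -- the key derivative inequality
  have hkey : ∀ z, Y ≤ z → y₀ ≤ z → 1 ≤ z → Λ * z ^ e ≤ |w z| →
      m * (w z) ^ 2 ≤ derivWithin w (Ici y₀) z := by
    intro z hzY hzy₀ hz1 hzw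
    have hzS : z ∈ Ici y₀ := hzy₀
    have hz0 : (0:ℝ) < z := by linarith only [hz1]
    have hH := hA1pos z hzS
    have hU := hupos z hzS
    have hB2 := hb2 z hzS
    have hrpk : 0 < z ^ (-k) := Real.rpow_pos_of_pos hz0 _
    have hrp2l : 0 < z ^ (-(2*l)) := Real.rpow_pos_of_pos hz0 _
    have hrpe : 0 < z ^ e := Real.rpow_pos_of_pos hz0 _
    have hr1 := (hY z hzY).1
    have hr2 := (hY z hzY).2
    have hden2 : 0 < K₂ * z ^ (-(2*l)) := mul_pos hK₂pos hrp2l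
    have hd2 : d z / η z ≤ 2 * K₂ * z ^ (-(2*l)) := by
      have h := (div_lt_iff₀ hden2).mp hr2.2
      linarith only [h, hden2]
    have hd1 : K₂ / 2 * z ^ (-(2*l)) ≤ d z / η z := by
      have h := (lt_div_iff₀ hden2).mp hr2.1
      linarith only [h]
    have hQ : |atld z / η z + ((b z) ^ 2 + 2 * d z) * derivWithin η (Ici y₀) z / (η z) ^ 2|
        ≤ 2 * |K₁| * z ^ (-k) := by
      set q := atld z / η z + ((b z) ^ 2 + 2 * d z) * derivWithin η (Ici y₀) z / (η z) ^ 2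
        with hqdef
      have hden0 : K₁ * z ^ (-k) ≠ 0 := mul_ne_zero hK₁ hrpk.ne'
      have hqe : q = q / (K₁ * z ^ (-k)) * (K₁ * z ^ (-k)) := (div_mul_cancel₀ q hden0).symm
      rw [hqe, abs_mul]
      have h1 : |q / (K₁ * z ^ (-k))| ≤ 3 / 2 :=
        abs_le.mpr ⟨by linarith only [hr1.1], hr1.2.le⟩
      have h2 : |K₁ * z ^ (-k)| = |K₁| * z ^ (-k) := by rw [abs_mul, abs_of_pos hrpk]
      rw [h2]
      have hKk : 0 ≤ |K₁| * z ^ (-k) := mul_nonneg (abs_nonneg K₁) hrpk.le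
      have h3 := mul_le_mul_of_nonneg_right h1 hKk
      linarith only [h3, hKk]
    have hMz := hM z hzS
    have hl2k : z ^ (-(2*l)) ≤ z ^ (-k) :=
      Real.rpow_le_rpow_of_exponent_le hz1 (by linarith only [hk, hkl])
    have hAH : |atld z / η z| ≤ C₃ * z ^ (-k) := by
      have hsplit : atld z / η z =
          (atld z / η z + ((b z) ^ 2 + 2 * d z) * derivWithin η (Ici y₀) z / (η z) ^ 2)
          - (((b z) ^ 2 + 2 * d z) / η z) * (derivWithin η (Ici y₀) z / η z) := by
        field_simp
        ring
      have hfrac : 0 ≤ ((b z) ^ 2 + 2 * d z) / η z :=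
        (div_pos (by nlinarith only [hB2, hdpos z hzS]) hH).le
      have hdη0 : 0 ≤ 4 * (d z / η z) :=
        mul_nonneg (by norm_num) (div_pos (hdpos z hzS) hH).le
      have hfub : ((b z) ^ 2 + 2 * d z) / η z ≤ 4 * (d z / η z) := by
        have h5 : ((b z) ^ 2 + 2 * d z) / η z ≤ (4 * d z) / η z :=
          (div_le_div_iff_of_pos_right hH).mpr (by linarith only [hb2d z hzS])
        have h6 : (4 * d z) / η z = 4 * (d z / η z) := by ring
        linarith only [h5, h6]
      have habs2 : |(((b z) ^ 2 + 2 * d z) / η z) * (derivWithin η (Ici y₀) z / η z)|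
          ≤ (4 * (d z / η z)) * M := by
        rw [abs_mul, abs_of_nonneg hfrac]
        exact mul_le_mul hfub hMz.2.2 (abs_nonneg _) hdη0
      have t1 : 4 * M * (d z / η z) ≤ 4 * M * (2 * K₂ * z ^ (-(2*l))) :=
        mul_le_mul_of_nonneg_left hd2 (by linarith only [hMnn])
      have t2 : (8 * K₂ * M) * z ^ (-(2*l)) ≤ (8 * K₂ * M) * z ^ (-k) :=
        mul_le_mul_of_nonneg_left hl2k
          (mul_nonneg (mul_nonneg (by norm_num) hK₂pos.le) hMnn)
      calc |atld z / η z| = |(atld z / η z + ((b z) ^ 2 + 2 * d z) *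
            derivWithin η (Ici y₀) z / (η z) ^ 2)
            - (((b z) ^ 2 + 2 * d z) / η z) * (derivWithin η (Ici y₀) z / η z)| := by
            rw [← hsplit]
        _ ≤ |atld z / η z + ((b z) ^ 2 + 2 * d z) * derivWithin η (Ici y₀) z / (η z) ^ 2|
            + |(((b z) ^ 2 + 2 * d z) / η z) * (derivWithin η (Ici y₀) z / η z)| :=
            abs_sub _ _
        _ ≤ 2 * |K₁| * z ^ (-k) + 4 * (d z / η z) * M := by linarith only [hQ, habs2]
        _ ≤ 2 * |K₁| * z ^ (-k) + 8 * K₂ * M * z ^ (-k) := by linarith only [t1, t2]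
        _ = C₃ * z ^ (-k) := by rw [hC₃def]; ring
    -- barrier inequality
    have hW2 : (w z) ^ 2 = |w z| ^ 2 := (sq_abs _).symm
    have hmul1 : z ^ (-(2*l)) * z ^ e = z ^ (-k) := by
      rw [← Real.rpow_add hz0]
      congr 1
      rw [hedef]; ring
    have hone : (1:ℝ) ≤ z ^ (-(2*l)) * (z ^ e) ^ 2 := by
      have h1 : z ^ (-(2*l)) * (z ^ e) ^ 2 = z ^ (-(2*l) + (e + e)) := by
        rw [sq, ← Real.rpow_add hz0, ← Real.rpow_add hz0]
      rw [h1]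
      calc (1:ℝ) = z ^ (0:ℝ) := (Real.rpow_zero z).symm
        _ ≤ z ^ (-(2*l) + (e + e)) :=
            Real.rpow_le_rpow_of_exponent_le hz1 (by rw [hedef]; linarith only [hk, hkl])
    have hbarrier : C₃ * z ^ (-k) * |w z| + γ₀ ≤ c₀ / 2 * z ^ (-(2*l)) * (w z) ^ 2 := by
      have hc04 : (0:ℝ) ≤ c₀ / 4 := by linarith only [hc₀]
      have p1 : C₃ * z ^ (-k) * |w z| ≤ c₀ / 4 * z ^ (-(2*l)) * (w z) ^ 2 := by
        rw [hW2]
        have s1 : Λ * z ^ e * |w z| ≤ |w z| * |w z| :=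
          mul_le_mul_of_nonneg_right hzw (abs_nonneg _)
        have s2 : c₀ / 4 * z ^ (-(2*l)) * (Λ * z ^ e * |w z|)
            ≤ c₀ / 4 * z ^ (-(2*l)) * (|w z| * |w z|) :=
          mul_le_mul_of_nonneg_left s1 (mul_nonneg hc04 hrp2l.le)
        have s3 : c₀ / 4 * z ^ (-(2*l)) * (Λ * z ^ e * |w z|)
            = c₀ * Λ / 4 * (z ^ (-(2*l)) * z ^ e) * |w z| := by ring
        rw [hmul1] at s3
        have s4 : C₃ * z ^ (-k) * |w z| ≤ c₀ * Λ / 4 * z ^ (-k) * |w z| := by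
          nlinarith only [hΛC₃, mul_nonneg hrpk.le (abs_nonneg (w z))]
        linarith only [s2, s3, s4]
      have p2 : γ₀ ≤ c₀ / 4 * z ^ (-(2*l)) * (w z) ^ 2 := by
        rw [hW2]
        have s5 : (Λ * z ^ e) ^ 2 ≤ |w z| ^ 2 :=
          pow_le_pow_left₀ (mul_nonneg hΛ0 hrpe.le) hzw 2
        have s6 : c₀ / 4 * z ^ (-(2*l)) * (Λ * z ^ e) ^ 2
            ≤ c₀ / 4 * z ^ (-(2*l)) * |w z| ^ 2 :=
          mul_le_mul_of_nonneg_left s5 (mul_nonneg hc04 hrp2l.le)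
        have s7 : c₀ / 4 * z ^ (-(2*l)) * (Λ * z ^ e) ^ 2
            = c₀ / 4 * Λ ^ 2 * (z ^ (-(2*l)) * (z ^ e) ^ 2) := by ring
        have u1 : c₀ * Λ * 1 ≤ c₀ * Λ * Λ :=
          mul_le_mul_of_nonneg_left hΛ1 (mul_nonneg hc₀.le hΛ0)
        have u2 : c₀ / 4 * Λ ^ 2 * 1 ≤ c₀ / 4 * Λ ^ 2 * (z ^ (-(2*l)) * (z ^ e) ^ 2) :=
          mul_le_mul_of_nonneg_left hone (mul_nonneg hc04 (sq_nonneg Λ))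
        have s8 : γ₀ ≤ c₀ / 4 * Λ ^ 2 * (z ^ (-(2*l)) * (z ^ e) ^ 2) := by
          nlinarith only [u1, u2, hΛγ]
        linarith only [s6, s7, s8]
      linarith only [p1, p2]
    -- coefficient inequality
    have hcoef : c₀ / 2 * z ^ (-(2*l)) * η z ≤ d z - (m + 1) * (b z) ^ 2 / 2 := by
      have q1 := hdlb z hzS
      have q2 := hdb2 z hzS
      have q3' : K₂ / 2 * z ^ (-(2*l)) * η z ≤ d z := by
        have h7 := (le_div_iff₀ hH).mp hd1
        linarith only [h7]
      have q4 : m / 2 * (b z) ^ 2 ≤ d z - (m + 1) * (b z) ^ 2 / 2 := by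
        linarith only [q1, hB2]
      have q5 : 2 * d z / (M' + 1) ≤ (b z) ^ 2 :=
        (div_le_iff₀ hM'pos).mpr (by linarith only [q2])
      have q6 : m / 2 * (2 * d z / (M' + 1)) ≤ m / 2 * (b z) ^ 2 :=
        mul_le_mul_of_nonneg_left q5 (by linarith only [hm])
      have q7 : m / 2 * (2 * d z / (M' + 1)) = m / (M' + 1) * d z := by
        field_simp
      have hc₁ : c₀ / 2 * z ^ (-(2*l)) * η z
          = m / (M' + 1) * (K₂ / 2 * z ^ (-(2*l)) * η z) := by
        rw [hc₀def, hmdef]; field_simp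
      have q9 : m / (M' + 1) * (K₂ / 2 * z ^ (-(2*l)) * η z)
          ≤ m / (M' + 1) * d z :=
        mul_le_mul_of_nonneg_left q3' (div_nonneg hm.le (by linarith only [hM'pos]))
      rw [hc₁]
      have q10 := q7 ▸ q6
      linarith only [q9, q10, q4]
    -- assemble key2
    have hkey2 : atld z * w z + (η z - u z) ≤ (d z - (m + 1) * (b z) ^ 2 / 2) * (w z) ^ 2 := by
      have a0 : atld z * w z ≤ |atld z| * |w z| := by
        calc atld z * w z ≤ |atld z * w z| := le_abs_self _
          _ = |atld z| * |w z| := abs_mul _ _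
      have a1 : η z - u z ≤ γ₀ * η z := by
        rw [hγdef]
        have : 0 < C₂ * η z := mul_pos hC₂ hH
        linarith only [hU, this]
      have a2 : |atld z| ≤ C₃ * z ^ (-k) * η z := by
        have he2 : |atld z| = |atld z / η z| * η z := by
          rw [abs_div, abs_of_pos hH, div_mul_cancel₀ _ hH.ne']
        rw [he2]
        exact mul_le_mul_of_nonneg_right hAH hH.le
      have a3 : |atld z| * |w z| ≤ C₃ * z ^ (-k) * η z * |w z| :=
        mul_le_mul_of_nonneg_right a2 (abs_nonneg _)
      have a4 : (C₃ * z ^ (-k) * |w z| + γ₀) * η z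
          ≤ (c₀ / 2 * z ^ (-(2*l)) * (w z) ^ 2) * η z :=
        mul_le_mul_of_nonneg_right hbarrier hH.le
      have a6 : (c₀ / 2 * z ^ (-(2*l)) * η z) * (w z) ^ 2
          ≤ (d z - (m + 1) * (b z) ^ 2 / 2) * (w z) ^ 2 :=
        mul_le_mul_of_nonneg_right hcoef (sq_nonneg _)
      linarith only [a0, a1, a3, a4, a6]
    have h0 := hHJB z hzS
    exact core_ineq (u z) (derivWithin u (Ici y₀) z)
      (derivWithin (derivWithin u (Ici y₀)) (Ici y₀) z) ((b z) ^ 2) (atld z) (η z) (d z)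
      (w z) (derivWithin w (Ici y₀) z) m hU hB2 h0 (hwz z) (by rw [hw' z hzS, hwz z]) hkey2
  -- the global bound via the blow-up lemmas
  set Y₁ := max Y (max y₀ 1) + 1 with hY₁def
  clear_value Y₁
  have hY₁aux : Y ≤ Y₁ - 1 := by
    rw [hY₁def]; linarith only [le_max_left Y (max y₀ 1)]
  have hY₁y₀ : y₀ ≤ Y₁ - 1 := by
    rw [hY₁def]; linarith only [le_max_left y₀ 1, le_max_right Y (max y₀ 1)]
  have hY₁1 : (1:ℝ) ≤ Y₁ - 1 := by
    rw [hY₁def]; linarith only [le_max_right y₀ 1, le_max_right Y (max y₀ 1)]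
  have hclaim : ∀ y₁, Y₁ ≤ y₁ → |w y₁| ≤ 2 * Λ * (y₁ + 1) ^ e := by
    intro y₁ hy₁
    have hy₁Y : Y ≤ y₁ - 1 := by linarith only [hY₁aux, hy₁]
    have hy₁y₀ : y₀ ≤ y₁ - 1 := by linarith only [hY₁y₀, hy₁]
    have hy₁1 : (1:ℝ) ≤ y₁ - 1 := by linarith only [hY₁1, hy₁]
    have h1e : (1:ℝ) ≤ (y₁ + 1) ^ e := by
      calc (1:ℝ) = (y₁ + 1) ^ (0:ℝ) := (Real.rpow_zero _).symm
        _ ≤ (y₁ + 1) ^ e := Real.rpow_le_rpow_of_exponent_le (by linarith only [hy₁1]) he0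
    set B := Λ * (y₁ + 1) ^ e with hBdef
    clear_value B
    have hBpos : 0 < B := by
      rw [hBdef]
      exact mul_pos (by linarith only [hΛ1]) (by linarith only [h1e])
    have hΛB : Λ ≤ B := by
      rw [hBdef]
      have := mul_le_mul_of_nonneg_left h1e hΛ0
      linarith only [this]
    have hmB : (2 * B)⁻¹ < m := by
      have v1 := mul_le_mul_of_nonneg_left hΛB (by linarith only [hm] : (0:ℝ) ≤ 2 * m)
      have v2 := mul_le_mul_of_nonneg_left hΛm (by linarith only [hm] : (0:ℝ) ≤ 2 * m)
      have v3 : 2 * m * (1 / m) = 2 := by field_simp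
      have h1 : 1 < m * (2 * B) := by nlinarith only [v1, v2, v3]
      have h2 : 1 / (2 * B) < m :=
        (div_lt_iff₀ (by linarith only [hBpos])).mpr (by linarith only [h1])
      rw [← one_div]; exact h2
    have hBz : ∀ z, y₁ - 1 ≤ z → z ≤ y₁ + 1 → Λ * z ^ e ≤ B := by
      intro z hz1 hz2
      rw [hBdef]
      exact mul_le_mul_of_nonneg_left
        (Real.rpow_le_rpow (by linarith only [hz1, hy₁1]) (by linarith only [hz2]) he0) hΛ0
    by_contra habs
    push_neg at habs
    have h2B : 2 * B < |w y₁| := by rw [hBdef]; linarith only [habs]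
    rcases lt_abs.mp h2B with hpos | hneg
    · exact riccati_blowup_pos w m B y₁ hm hBpos hmB
        (hwcont.mono (fun x hx => le_trans (by linarith only [hy₁y₀] : y₀ ≤ y₁) hx.1))
        (fun z hz => (hwdiff z (le_trans (by linarith only [hy₁y₀] : y₀ ≤ y₁) hz.1.le)).differentiableAt
          (Ici_mem_nhds (by linarith only [hz.1, hy₁y₀])))
        (fun z hz hBw => by
          have hder : derivWithin w (Ici y₀) z = deriv w z :=
            derivWithin_of_mem_nhds (Ici_mem_nhds (by linarith only [hz.1, hy₁y₀]))
          rw [← hder]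
          apply hkey z (by linarith only [hz.1, hy₁Y]) (by linarith only [hz.1, hy₁y₀])
            (by linarith only [hz.1, hy₁1])
          calc Λ * z ^ e ≤ B := hBz z (by linarith only [hz.1]) (by linarith only [hz.2])
            _ ≤ w z := hBw
            _ ≤ |w z| := le_abs_self _)
        hpos
    · exact riccati_blowup_neg w m B y₁ hm hBpos hmB
        (hwcont.mono (fun x hx => le_trans (by linarith only [hy₁y₀] : y₀ ≤ y₁ - 1) hx.1))
        (fun z hz => (hwdiff z (le_trans (by linarith only [hy₁y₀] : y₀ ≤ y₁ - 1) hz.1.le)).differentiableAt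
          (Ici_mem_nhds (by linarith only [hz.1, hy₁y₀])))
        (fun z hz hBw => by
          have hder : derivWithin w (Ici y₀) z = deriv w z :=
            derivWithin_of_mem_nhds (Ici_mem_nhds (by linarith only [hz.1, hy₁y₀]))
          rw [← hder]
          apply hkey z (by linarith only [hz.1, hy₁Y]) (by linarith only [hz.1, hy₁y₀])
            (by linarith only [hz.1, hy₁1])
          calc Λ * z ^ e ≤ B := hBz z (by linarith only [hz.1]) (by linarith only [hz.2])
            _ ≤ -(w z) := by linarith only [hBw]
            _ ≤ |w z| := neg_le_abs _)
        (by linarith only [hneg])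
  -- conclude the big-O statement
  rw [Asymptotics.isBigO_iff]
  refine ⟨2 * Λ * 2 ^ e, ?_⟩
  rw [Filter.eventually_atTop]
  refine ⟨max Y₁ 1, fun y hy => ?_⟩
  have hy1 : (1:ℝ) ≤ y := le_trans (le_max_right _ _) hy
  have hyY₁ : Y₁ ≤ y := le_trans (le_max_left _ _) hy
  have h1 := hclaim y hyY₁
  have h2 : (y + 1) ^ e ≤ 2 ^ e * y ^ e := by
    rw [← Real.mul_rpow (by norm_num) (by linarith only [hy1])]
    exact Real.rpow_le_rpow (by linarith only [hy1]) (by linarith only [hy1]) he0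
  have h3 : ‖y ^ e‖ = y ^ e := Real.norm_of_nonneg (Real.rpow_nonneg (by linarith only [hy1]) _)
  rw [Real.norm_eq_abs, h3]
  have h4 := mul_le_mul_of_nonneg_left h2 (by linarith only [hΛ0] : (0:ℝ) ≤ 2 * Λ)
  calc |w y| ≤ 2 * Λ * (y + 1) ^ e := h1
    _ ≤ 2 * Λ * 2 ^ e * y ^ e := by linarith only [h4]
end
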